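/- arXiv:math/0209227 — 7 statements merged into one kernel-verified Lean document; each statement's English description precedes it below -/
import Mathlib

section
/- A permutation π ∈ S_n avoids both of the patterns 1243 and 2143 (i.e., π is a Schröder permutation) if and only if every element of its essential set E(π) has rank at most 1. -/
/-- `π` contains the pattern `τ`: there is a strictly increasing choice of positions
whose values appear in the same relative order as `τ`. -/
def Contains {n k : ℕ} (π : Equiv.Perm (Fin n)) (τ : Equiv.Perm (Fin k)) : Prop :=
  ∃ f : Fin k → Fin n, StrictMono f ∧ ∀ a b : Fin k, τ a < τ b ↔ π (f a) < π (f b)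

/-- `π` avoids the pattern `τ`. -/
def Avoids {n k : ℕ} (π : Equiv.Perm (Fin n)) (τ : Equiv.Perm (Fin k)) : Prop :=
  ¬ Contains π τ

/-- The pattern 1243 (in one-line notation), as a permutation of `Fin 4` (0-based). -/
def pat1243 : Equiv.Perm (Fin 4) := Equiv.swap 2 3

/-- The pattern 2143 (in one-line notation), as a permutation of `Fin 4` (0-based). -/
def pat2143 : Equiv.Perm (Fin 4) := Equiv.swap 0 1 * Equiv.swap 2 3

/-- A Schröder permutation avoids both 1243 and 2143. -/
def Schroeder {n : ℕ} (π : Equiv.Perm (Fin n)) : Prop :=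
  Avoids π pat1243 ∧ Avoids π pat2143

/-- The diagram of `π` (0-based coordinates): squares `(i,j)` with `π i > j` and
`π⁻¹ j > i`. -/
def Diagram {n : ℕ} (π : Equiv.Perm (Fin n)) : Set (Fin n × Fin n) :=
  {p | p.2 < π p.1 ∧ p.1 < π.symm p.2}

/-- The essential set of `π`: squares of the diagram whose east and south neighbours
are not in the diagram. -/
def EssSet {n : ℕ} (π : Equiv.Perm (Fin n)) : Set (Fin n × Fin n) :=
  {p | p ∈ Diagram π ∧
    (∀ i' : Fin n, (i' : ℕ) = (p.1 : ℕ) + 1 → (i', p.2) ∉ Diagram π) ∧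
    (∀ j' : Fin n, (j' : ℕ) = (p.2 : ℕ) + 1 → (p.1, j') ∉ Diagram π)}

/-- The rank of a square `(i,j)`: the number of positions `k < i` with `π k < j`. -/
def rank {n : ℕ} (π : Equiv.Perm (Fin n)) (p : Fin n × Fin n) : ℕ :=
  (Finset.univ.filter fun k : Fin n => k < p.1 ∧ π k < p.2).card

lemma contains_of_mono {n k : ℕ} (π : Equiv.Perm (Fin n)) (τ : Equiv.Perm (Fin k))
    (f : Fin k → Fin n) (hf : StrictMono f)
    (h : ∀ a b, τ a < τ b → π (f a) < π (f b)) : Contains π τ := by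
  refine ⟨f, hf, fun a b => ⟨h a b, fun hlt => ?_⟩⟩
  rcases lt_trichotomy (τ a) (τ b) with h1 | h1 | h1
  · exact h1
  · rw [τ.injective h1] at hlt; exact absurd hlt (lt_irrefl _)
  · exact absurd (lt_trans hlt (h b a h1)) (lt_irrefl _)

lemma contains1243 {n : ℕ} (π : Equiv.Perm (Fin n)) (a b c d : Fin n)
    (hab : a < b) (hbc : b < c) (hcd : c < d)
    (h1 : π a < π b) (h2 : π b < π d) (h3 : π d < π c) : Contains π pat1243 := by
  apply contains_of_mono π pat1243 ![a, b, c, d]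
  · intro i j hij
    fin_cases i <;> fin_cases j <;>
      first
        | exact absurd hij (by decide)
        | exact hab | exact hbc | exact hcd
        | exact hab.trans hbc | exact hbc.trans hcd
        | exact hab.trans (hbc.trans hcd)
  · intro x y hxy
    fin_cases x <;> fin_cases y <;>
      first
        | exact absurd hxy (by decide)
        | exact h1 | exact h2 | exact h3
        | exact h1.trans h2 | exact h2.trans h3
        | exact h1.trans (h2.trans h3)

lemma contains2143 {n : ℕ} (π : Equiv.Perm (Fin n)) (a b c d : Fin n)
    (hab : a < b) (hbc : b < c) (hcd : c < d)
    (h1 : π b < π a) (h2 : π a < π d) (h3 : π d < π c) : Contains π pat2143 := by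
  apply contains_of_mono π pat2143 ![a, b, c, d]
  · intro i j hij
    fin_cases i <;> fin_cases j <;>
      first
        | exact absurd hij (by decide)
        | exact hab | exact hbc | exact hcd
        | exact hab.trans hbc | exact hbc.trans hcd
        | exact hab.trans (hbc.trans hcd)
  · intro x y hxy
    fin_cases x <;> fin_cases y <;>
      first
        | exact absurd hxy (by decide)
        | exact h1 | exact h2 | exact h3
        | exact h1.trans h2 | exact h2.trans h3
        | exact h1.trans (h2.trans h3)

lemma quad_of_contains1243 {n : ℕ} (π : Equiv.Perm (Fin n)) (h : Contains π pat1243) :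
    ∃ a b c d : Fin n, a < b ∧ b < c ∧ c < d ∧ π a < π d ∧ π b < π d ∧ π d < π c := by
  obtain ⟨f, hf, h⟩ := h
  exact ⟨f 0, f 1, f 2, f 3, hf (by decide), hf (by decide), hf (by decide),
    ((h 0 1).mp (by decide)).trans ((h 1 3).mp (by decide)),
    (h 1 3).mp (by decide), (h 3 2).mp (by decide)⟩

lemma quad_of_contains2143 {n : ℕ} (π : Equiv.Perm (Fin n)) (h : Contains π pat2143) :
    ∃ a b c d : Fin n, a < b ∧ b < c ∧ c < d ∧ π a < π d ∧ π b < π d ∧ π d < π c := by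
  obtain ⟨f, hf, h⟩ := h
  exact ⟨f 0, f 1, f 2, f 3, hf (by decide), hf (by decide), hf (by decide),
    (h 0 3).mp (by decide),
    (h 1 3).mp (by decide), (h 3 2).mp (by decide)⟩

lemma quad_of_rank {n : ℕ} (π : Equiv.Perm (Fin n)) (p : Fin n × Fin n)
    (hp : p ∈ Diagram π) (hr : 2 ≤ rank π p) :
    ∃ a b c d : Fin n, a < b ∧ b < c ∧ c < d ∧ π a < π d ∧ π b < π d ∧ π d < π c := by
  obtain ⟨a, ha, b, hb, hne⟩ := Finset.one_lt_card.mp hr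
  simp only [Finset.mem_filter, Finset.mem_univ, true_and] at ha hb
  have hπd : π (π.symm p.2) = p.2 := π.apply_symm_apply p.2
  rcases hne.lt_or_gt with hab | hab
  · exact ⟨a, b, p.1, π.symm p.2, hab, hb.1, hp.2, by rw [hπd]; exact ha.2,
      by rw [hπd]; exact hb.2, by rw [hπd]; exact hp.1⟩
  · exact ⟨b, a, p.1, π.symm p.2, hab, ha.1, hp.2, by rw [hπd]; exact hb.2,
      by rw [hπd]; exact ha.2, by rw [hπd]; exact hp.1⟩

lemma diag_of_quad {n : ℕ} (π : Equiv.Perm (Fin n)) (a b c d : Fin n)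
    (hab : a < b) (hbc : b < c) (hcd : c < d)
    (h1 : π a < π d) (h2 : π b < π d) (h3 : π d < π c) :
    ∃ p ∈ Diagram π, 2 ≤ rank π p := by
  refine ⟨(c, π d), ⟨h3, by simpa using hcd⟩, ?_⟩
  refine Finset.one_lt_card.mpr ⟨a, ?_, b, ?_, hab.ne⟩
  · simp only [Finset.mem_filter, Finset.mem_univ, true_and]
    exact ⟨hab.trans hbc, h1⟩
  · simp only [Finset.mem_filter, Finset.mem_univ, true_and]
    exact ⟨hbc, h2⟩

lemma diagram_to_ess {n : ℕ} (π : Equiv.Perm (Fin n)) :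
    ∀ m (p : Fin n × Fin n), (n - (p.1 : ℕ)) + (n - (p.2 : ℕ)) ≤ m → p ∈ Diagram π →
      ∃ q ∈ EssSet π, rank π p ≤ rank π q := by
  intro m
  induction m with
  | zero => intro p hm _; have := p.1.isLt; omega
  | succ m ih =>
    intro p hm hp
    by_cases he : p ∈ EssSet π
    · exact ⟨p, he, le_rfl⟩
    · have hnc : ¬ ((∀ i' : Fin n, (i' : ℕ) = (p.1 : ℕ) + 1 → (i', p.2) ∉ Diagram π) ∧
          (∀ j' : Fin n, (j' : ℕ) = (p.2 : ℕ) + 1 → (p.1, j') ∉ Diagram π)) :=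
        fun h => he ⟨hp, h.1, h.2⟩
      rcases not_and_or.mp hnc with hB | hB
      · push_neg at hB
        obtain ⟨i', hi', hd⟩ := hB
        obtain ⟨q, hq, hle⟩ := ih (i', p.2) (by have := p.1.isLt; simp; omega) hd
        refine ⟨q, hq, le_trans ?_ hle⟩
        apply Finset.card_le_card
        intro k hk
        simp only [Finset.mem_filter, Finset.mem_univ, true_and] at hk ⊢
        exact ⟨lt_of_lt_of_le hk.1 (by rw [Fin.le_def]; omega), hk.2⟩
      · push_neg at hB
        obtain ⟨j', hj', hd⟩ := hB
        obtain ⟨q, hq, hle⟩ := ih (p.1, j') (by have := p.2.isLt; simp; omega) hd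
        refine ⟨q, hq, le_trans ?_ hle⟩
        apply Finset.card_le_card
        intro k hk
        simp only [Finset.mem_filter, Finset.mem_univ, true_and] at hk ⊢
        exact ⟨hk.1, lt_of_lt_of_le hk.2 (by rw [Fin.le_def]; omega)⟩

/-- A permutation is a Schröder permutation (avoids 1243 and 2143) iff every element of
its essential set has rank at most 1. -/
theorem schroeder_iff_rank_le_one (n : ℕ) (π : Equiv.Perm (Fin n)) :
    Schroeder π ↔ ∀ p ∈ EssSet π, rank π p ≤ 1 := by
  constructor
  · intro hS p hp
    by_contra h
    push_neg at h
    obtain ⟨a, b, c, d, hab, hbc, hcd, h1, h2, h3⟩ := quad_of_rank π p hp.1 h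
    rcases lt_or_gt_of_ne (fun he => hab.ne (π.injective he) : π a ≠ π b) with hv | hv
    · exact hS.1 (contains1243 π a b c d hab hbc hcd hv h2 h3)
    · exact hS.2 (contains2143 π a b c d hab hbc hcd hv h1 h3)
  · intro h
    constructor
    · intro hc
      obtain ⟨a, b, c, d, hab, hbc, hcd, h1, h2, h3⟩ := quad_of_contains1243 π hc
      obtain ⟨p, hp, hr⟩ := diag_of_quad π a b c d hab hbc hcd h1 h2 h3
      obtain ⟨q, hq, hle⟩ := diagram_to_ess π (n + n) p (by omega) hp
      have := h q hq
      omega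
    · intro hc
      obtain ⟨a, b, c, d, hab, hbc, hcd, h1, h2, h3⟩ := quad_of_contains2143 π hc
      obtain ⟨p, hp, hr⟩ := diag_of_quad π a b c d hab hbc hcd h1 h2 h3
      obtain ⟨q, hq, hle⟩ := diagram_to_ess π (n + n) p (by omega) hp
      have := h q hq
      omega
end

section
/- For an arbitrary permutation π ∈ S_n, every element (i,j) of the essential set E(π) of rank r satisfies i + j ≤ n + r. -/
/-!
Among the `i + 1` positions `k ≤ i`, those with `π k < j` are counted by the rank (position `i`
itself is not among them since `π i > j`), and the others carry distinct values `π k > j`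
(the value `j` sits at position `π⁻¹ j > i`), of which there are only `n - 1 - j`.
-/

namespace Equiv.Perm

variable {n : ℕ} (π : Equiv.Perm (Fin n)) {i j : Fin n}

theorem rank_eq_card_filter_Iic (h : j < π i) :
    rank π (i, j) = ((Finset.Iic i).filter fun k => π k < j).card := by
  unfold rank
  congr 1
  ext k
  simp only [Finset.mem_filter, Finset.mem_univ, Finset.mem_Iic, true_and]
  refine ⟨fun ⟨hk, hkj⟩ => ⟨hk.le, hkj⟩, fun ⟨hk, hkj⟩ => ⟨lt_of_le_of_ne hk ?_, hkj⟩⟩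
  rintro rfl
  exact hkj.not_gt h

theorem card_filter_Iic_not_lt_le (h : i < π.symm j) :
    ((Finset.Iic i).filter fun k => ¬ π k < j).card ≤ n - 1 - j := by
  have hval_ne : ∀ k ≤ i, π k ≠ j := by
    rintro k hk rfl
    simp only [symm_apply_apply] at h
    exact hk.not_gt h
  calc ((Finset.Iic i).filter fun k => ¬ π k < j).card
      ≤ (Finset.Ioi j).card := by
        refine Finset.card_le_card_of_injOn π (fun k hk => ?_) π.injective.injOn
        simp only [Finset.coe_filter, Finset.mem_Iic, Set.mem_ofPred_eq] at hk
        exact Finset.mem_Ioi.mpr (lt_of_le_of_ne (not_lt.mp hk.2) (hval_ne k hk.1).symm)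
    _ = n - 1 - j := Fin.card_Ioi j

theorem add_le_add_rank_of_mem_diagram {p : Fin n × Fin n} (hp : p ∈ Diagram π) :
    ((p.1 : ℕ) + 1) + ((p.2 : ℕ) + 1) ≤ n + rank π p := by
  obtain ⟨i, j⟩ := p
  obtain ⟨hj, hi⟩ := hp
  have hsplit := Finset.card_filter_add_card_filter_not (s := Finset.Iic i) fun k => π k < j
  rw [Fin.card_Iic, ← rank_eq_card_filter_Iic π hj] at hsplit
  have hbound := card_filter_Iic_not_lt_le π hi
  have hjn := j.isLt
  dsimp only at *
  omega

end Equiv.Perm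

/-- For any permutation, every element `(i,j)` of the essential set of rank `r` satisfies
`i + j ≤ n + r` (in 1-based coordinates; here `(p.1+1, p.2+1)` are the 1-based coordinates). -/
theorem essSet_add_le (n : ℕ) (π : Equiv.Perm (Fin n)) (p : Fin n × Fin n)
    (hp : p ∈ EssSet π) :
    ((p.1 : ℕ) + 1) + ((p.2 : ℕ) + 1) ≤ n + rank π p :=
  π.add_le_add_rank_of_mem_diagram hp.1
end

section
/- Let π ∈ S_n be an arbitrary permutation. (1) If (i,j) is a diagram square of π of rank 1 such that neither (i−1,j) nor (i,j−1) belongs to D(π), then π_{i−1} = j−1. (2) For any element (i,j) ∈ E(π) of rank 1 there exists no element (i',j') ∈ E(π) with i' < i and j' < j. -/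
/-- (1) If `(i,j)` is a diagram square of rank 1 such that neither `(i-1,j)` nor `(i,j-1)`
belongs to the diagram, then `π (i-1) = j-1` (all in 1-based terms; here `i'` and `j'` are
the 0-based predecessors of `p.1` and `p.2`).
(2) For any element of the essential set of rank 1 there is no element of the essential set
strictly to its northwest. -/
theorem diagram_properties (n : ℕ) (π : Equiv.Perm (Fin n)) :
    (∀ p : Fin n × Fin n, p ∈ Diagram π → rank π p = 1 →
      (∀ i' : Fin n, (i' : ℕ) + 1 = (p.1 : ℕ) → (i', p.2) ∉ Diagram π) →
      (∀ j' : Fin n, (j' : ℕ) + 1 = (p.2 : ℕ) → (p.1, j') ∉ Diagram π) →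
      ∃ i' j' : Fin n, (i' : ℕ) + 1 = (p.1 : ℕ) ∧ (j' : ℕ) + 1 = (p.2 : ℕ) ∧ π i' = j') ∧
    (∀ p ∈ EssSet π, rank π p = 1 →
      ¬ ∃ q ∈ EssSet π, q.1 < p.1 ∧ q.2 < p.2) := by
  constructor
  · intro p hp hr hrow hcol
    obtain ⟨hp1, hp2⟩ := hp
    obtain ⟨k0, hk0⟩ := Finset.card_eq_one.mp hr
    have hk0mem : k0 < p.1 ∧ π k0 < p.2 := by
      have h : k0 ∈ Finset.univ.filter (fun k : Fin n => k < p.1 ∧ π k < p.2) :=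
        hk0 ▸ Finset.mem_singleton_self k0
      simpa using h
    have huniq : ∀ k : Fin n, k < p.1 → π k < p.2 → k = k0 := by
      intro k h1 h2
      have h : k ∈ Finset.univ.filter (fun k : Fin n => k < p.1 ∧ π k < p.2) := by
        simp [h1, h2]
      rw [hk0] at h; simpa using h
    have hi1 : 0 < (p.1 : ℕ) := lt_of_le_of_lt (Nat.zero_le _) (Fin.lt_def.mp hk0mem.1)
    have hj1 : 0 < (p.2 : ℕ) := lt_of_le_of_lt (Nat.zero_le _) (Fin.lt_def.mp hk0mem.2)
    have hp1' : (p.2 : ℕ) < (π p.1 : ℕ) := Fin.lt_def.mp hp1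
    have hp2' : (p.1 : ℕ) < (π.symm p.2 : ℕ) := Fin.lt_def.mp hp2
    set i' : Fin n := ⟨(p.1 : ℕ) - 1, Nat.lt_of_le_of_lt (Nat.sub_le _ _) p.1.isLt⟩ with hi'
    set j' : Fin n := ⟨(p.2 : ℕ) - 1, Nat.lt_of_le_of_lt (Nat.sub_le _ _) p.2.isLt⟩ with hj'
    have hii : (i' : ℕ) + 1 = (p.1 : ℕ) := by simp [hi']; omega
    have hjj : (j' : ℕ) + 1 = (p.2 : ℕ) := by simp [hj']; omega
    have hi'lt : i' < p.1 := Fin.lt_def.mpr (by omega)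
    have hj'lt : (j' : ℕ) < (p.2 : ℕ) := by omega
    -- Step 1 : π i' < p.2
    have hstep1 : (π i' : ℕ) < (p.2 : ℕ) := by
      by_contra hge
      push_neg at hge
      have hne : π i' ≠ p.2 := by
        intro h
        have h2 : π.symm p.2 = i' := by rw [← h, Equiv.symm_apply_apply]
        rw [h2] at hp2'
        omega
      have hgt : p.2 < π i' := Fin.lt_def.mpr (lt_of_le_of_ne hge
        (fun h => hne (Fin.ext h.symm)))
      exact hrow i' hii ⟨hgt, lt_trans hi'lt hp2⟩
    -- Step 2 : (j' : ℕ) ≤ π i'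
    have hstep2 : (j' : ℕ) ≤ (π i' : ℕ) := by
      by_contra hlt
      push_neg at hlt
      set m : Fin n := π.symm j' with hm
      have hπm : π m = j' := Equiv.apply_symm_apply π j'
      rcases lt_trichotomy (m : ℕ) (p.1 : ℕ) with h | h | h
      · have e1 : m = k0 := huniq m (Fin.lt_def.mpr h)
          (Fin.lt_def.mpr (by rw [hπm]; omega))
        have e2 : i' = k0 := huniq i' hi'lt (Fin.lt_def.mpr hstep1)
        have : π i' = j' := by rw [e1.trans e2.symm] at hπm; exact hπm
        have := congrArg Fin.val this
        omega
      · have : π p.1 = j' := by rw [← hπm]; congr 1; exact Fin.ext h.symm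
        have := congrArg Fin.val this
        omega
      · refine hcol j' hjj ⟨?_, ?_⟩
        · show j' < π p.1
          exact Fin.lt_def.mpr (by omega)
        · show p.1 < π.symm j'
          exact Fin.lt_def.mpr h
    exact ⟨i', j', hii, hjj, Fin.ext (by omega)⟩
  · rintro p hp hr ⟨q, hq, hqa, hqb⟩
    obtain ⟨⟨hp1, hp2⟩, _, _⟩ := hp
    obtain ⟨⟨hq1, hq2⟩, hqrow, hqcol⟩ := hq
    obtain ⟨k0, hk0⟩ := Finset.card_eq_one.mp hr
    have huniq : ∀ k : Fin n, k < p.1 → π k < p.2 → k = k0 := by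
      intro k h1 h2
      have h : k ∈ Finset.univ.filter (fun k : Fin n => k < p.1 ∧ π k < p.2) := by
        simp [h1, h2]
      rw [hk0] at h; simpa using h
    have hp1' : (p.2 : ℕ) < (π p.1 : ℕ) := Fin.lt_def.mp hp1
    have hp2' : (p.1 : ℕ) < (π.symm p.2 : ℕ) := Fin.lt_def.mp hp2
    have hq1' : (q.2 : ℕ) < (π q.1 : ℕ) := Fin.lt_def.mp hq1
    have hq2' : (q.1 : ℕ) < (π.symm q.2 : ℕ) := Fin.lt_def.mp hq2
    have hqa' : (q.1 : ℕ) < (p.1 : ℕ) := Fin.lt_def.mp hqa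
    have hqb' : (q.2 : ℕ) < (p.2 : ℕ) := Fin.lt_def.mp hqb
    set a1 : Fin n := ⟨(q.1 : ℕ) + 1, by omega⟩ with ha1
    set b1 : Fin n := ⟨(q.2 : ℕ) + 1, by omega⟩ with hb1
    -- a "large" witness : some s ∈ S with q.1 < s
    have hbig : ∃ s : Fin n, (s : ℕ) < (p.1 : ℕ) ∧ (π s : ℕ) < (p.2 : ℕ) ∧
        (q.1 : ℕ) < (s : ℕ) := by
      set m : Fin n := π.symm q.2 with hm
      have hπm : π m = q.2 := Equiv.apply_symm_apply π q.2
      rcases lt_trichotomy (m : ℕ) (p.1 : ℕ) with h | h | h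
      · exact ⟨m, h, by rw [hπm]; omega, hq2'⟩
      · have : π p.1 = q.2 := by rw [← hπm]; congr 1; exact Fin.ext h.symm
        have := congrArg Fin.val this
        omega
      · -- m > p.1; use (a1, q.2) ∉ Diagram
        have hnd := hqrow a1 (by simp [ha1])
        have hπa1 : (π a1 : ℕ) ≤ (q.2 : ℕ) := by
          by_contra hgt
          push_neg at hgt
          refine hnd ⟨?_, ?_⟩
          · show q.2 < π a1
            exact Fin.lt_def.mpr hgt
          · show a1 < π.symm q.2
            exact Fin.lt_def.mpr (by rw [← hm]; simp only [ha1]; omega)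
        have hne : π a1 ≠ q.2 := by
          intro he
          have : a1 = m := by rw [hm, ← he, Equiv.symm_apply_apply]
          have := congrArg Fin.val this
          simp [ha1] at this
          omega
        have hπa1' : (π a1 : ℕ) < (q.2 : ℕ) :=
          lt_of_le_of_ne hπa1 (fun h => hne (Fin.ext h))
        have ha1i : (a1 : ℕ) < (p.1 : ℕ) := by
          rcases Nat.lt_or_ge (a1 : ℕ) (p.1 : ℕ) with h' | h'
          · exact h'
          · exfalso
            have : a1 = p.1 := Fin.ext (by simp [ha1] at h' ⊢; omega)
            rw [this] at hπa1'
            omega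
        exact ⟨a1, ha1i, by omega, by simp [ha1]⟩
    -- a "small" witness : some t ∈ S with t ≤ q.1
    have hsmall : ∃ t : Fin n, (t : ℕ) < (p.1 : ℕ) ∧ (π t : ℕ) < (p.2 : ℕ) ∧
        (t : ℕ) ≤ (q.1 : ℕ) := by
      have hnd := hqcol b1 (by simp [hb1])
      have hcase : (π q.1 : ℕ) ≤ (b1 : ℕ) ∨ (π.symm b1 : ℕ) ≤ (q.1 : ℕ) := by
        by_contra hc
        push_neg at hc
        refine hnd ⟨?_, ?_⟩
        · show b1 < π q.1
          exact Fin.lt_def.mpr hc.1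
        · show q.1 < π.symm b1
          exact Fin.lt_def.mpr hc.2
      rcases hcase with h | h
      · -- π q.1 = b1
        have heq : π q.1 = b1 := Fin.ext (by simp [hb1] at h ⊢; omega)
        rcases Nat.lt_or_ge ((q.2 : ℕ) + 1) (p.2 : ℕ) with h' | h'
        · exact ⟨q.1, by omega, by rw [heq]; simp [hb1]; omega, le_refl _⟩
        · exfalso
          have hb1p : b1 = p.2 := Fin.ext (by simp [hb1]; omega)
          rw [hb1p] at heq
          have : π.symm p.2 = q.1 := by rw [← heq, Equiv.symm_apply_apply]
          rw [this] at hp2'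
          omega
      · set m' : Fin n := π.symm b1 with hm'
        have hπm' : π m' = b1 := Equiv.apply_symm_apply π b1
        rcases Nat.lt_or_ge ((q.2 : ℕ) + 1) (p.2 : ℕ) with h' | h'
        · exact ⟨m', by omega, by rw [hπm']; simp [hb1]; omega, h⟩
        · exfalso
          have hb1p : b1 = p.2 := Fin.ext (by simp [hb1]; omega)
          rw [hb1p] at hm'
          omega
    obtain ⟨s, hs1, hs2, hs3⟩ := hbig
    obtain ⟨t, ht1, ht2, ht3⟩ := hsmall
    have es : s = k0 := huniq s (Fin.lt_def.mpr hs1) (Fin.lt_def.mpr hs2)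
    have et : t = k0 := huniq t (Fin.lt_def.mpr ht1) (Fin.lt_def.mpr ht2)
    have : (s : ℕ) = (t : ℕ) := by rw [es, et]
    omega
end

section
/- For every n ≥ 1, the (n−1)st Schröder number r_{n−1} equals the number of triples consisting of integer sequences i_1 ≥ i_2 ≥ ⋯ ≥ i_s > 0 and 0 < j_1 ≤ j_2 ≤ ⋯ ≤ j_s, together with a binary sequence r_1,…,r_s ∈ {0,1} (the common length s ≥ 0 being arbitrary), satisfying i_1−r_1 > i_2−r_2 > ⋯ > i_s−r_s > 0, 0 < j_1−r_1 < j_2−r_2 < ⋯ < j_s−r_s, and i_k + j_k ≤ n + r_k for all k = 1,…,s. -/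
/-- The large Schröder numbers: `r 0 = 1` and
`r n = r (n-1) + ∑_{i=0}^{n-1} r i * r (n-1-i)` for `n ≥ 1`. -/
def schroeder : ℕ → ℕ
  | 0 => 1
  | n + 1 => schroeder n + ∑ i ∈ (Finset.range (n + 1)).attach,
      schroeder i.1 * schroeder (n - i.1)
decreasing_by
  · exact Nat.lt_succ_self n
  · exact Nat.lt_succ_of_le (Nat.le_of_lt_succ (Finset.mem_range.mp i.2))
  · exact Nat.lt_succ_of_le (Nat.sub_le n i.1)

/-- A triple of sequences `i_1 ≥ … ≥ i_s > 0`, `0 < j_1 ≤ … ≤ j_s` and a binary sequence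
`r_1, …, r_s` with `i_1 - r_1 > … > i_s - r_s > 0`, `0 < j_1 - r_1 < … < j_s - r_s`, and
`i_k + j_k ≤ n + r_k` for all `k`. -/
structure TripleData (n : ℕ) where
  s : ℕ
  i : Fin s → ℕ
  j : Fin s → ℕ
  r : Fin s → ℕ
  hipos : ∀ k, 0 < i k
  hjpos : ∀ k, 0 < j k
  hi : Antitone i
  hj : Monotone j
  hr : ∀ k, r k ≤ 1
  hir : StrictAnti fun k => (i k : ℤ) - (r k : ℤ)
  hirpos : ∀ k, 0 < (i k : ℤ) - (r k : ℤ)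
  hjr : StrictMono fun k => (j k : ℤ) - (r k : ℤ)
  hjrpos : ∀ k, 0 < (j k : ℤ) - (r k : ℤ)
  hbound : ∀ k, i k + j k ≤ n + r k

/-!
Writing a term `(i, j, r)` as the cell `(a, b, r) = (i - r, j - r, r)`, a triple is a list of cells
in the triangle `a, b ≥ 1`, `a + b + r ≤ n` along which `a` strictly decreases, `b` strictly
increases, `a + r` weakly decreases and `b + r` weakly increases: a staircase. Precedence of cells
is transitive, so a staircase splits at any of its cells into a staircase of cells preceding that
cell and one of cells following it, and these live in smaller translated triangles.

Let `C m` count the staircases in the triangle of size `m` and `B k` those in size `k + 2` avoiding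
column `a = k + 1`. A staircase of size `k + 2` either avoids that column or starts at its only cell
`(k + 1, 1, 0)`, so `C (k + 2) = B k + C (k + 1)`. A staircase counted by `B n` either lies in the
triangle of size `n + 1`, or splits at its first cell on the hypotenuse `a + b + r = n + 2`; for
the cell with `a = v + 1` and `r = 0` or `1`, what precedes it is any staircase of size `n - v`,
and what follows it is counted by `C (v + 1)` or `B v` respectively. Hence
`B n = C (n + 1) + ∑_{v < n} C (n - v) C (v + 2)`, and the two recurrences together give the
Schröder recurrence for `C (m + 1)`.
-/

theorem schroeder_zero : schroeder 0 = 1 := by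
  rw [schroeder]

theorem schroeder_succ (n : ℕ) :
    schroeder (n + 1) =
      schroeder n + ∑ i ∈ Finset.range (n + 1), schroeder i * schroeder (n - i) := by
  rw [schroeder, Finset.sum_attach (Finset.range (n + 1)) fun i => schroeder i * schroeder (n - i)]

theorem List.exists_eq_append_cons_of_exists_mem {α : Type*} {p : α → Prop} {l : List α}
    (h : ∃ x ∈ l, p x) : ∃ P e S, l = P ++ e :: S ∧ (∀ x ∈ P, ¬p x) ∧ p e := by
  induction l with
  | nil => simp at h
  | cons a l ih =>
    by_cases ha : p a
    · exact ⟨[], a, l, rfl, by simp, ha⟩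
    · obtain ⟨P, e, S, rfl, hP, he⟩ := ih (by simpa [ha] using h)
      exact ⟨a :: P, e, S, rfl, by simpa [ha] using hP, he⟩

theorem List.append_cons_inj_of_forall_not {α : Type*} {p : α → Prop} {P P' S S' : List α}
    {e e' : α} (hP : ∀ x ∈ P, ¬p x) (hP' : ∀ x ∈ P', ¬p x) (he : p e) (he' : p e') :
    P ++ e :: S = P' ++ e' :: S' ↔ P = P' ∧ e = e' ∧ S = S' := by
  refine ⟨fun h => ?_, by rintro ⟨rfl, rfl, rfl⟩; rfl⟩
  induction P generalizing P' with
  | nil =>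
    cases P' with
    | nil => simpa using h
    | cons x P' =>
      simp only [List.nil_append, List.cons_append, List.cons.injEq] at h
      exact absurd (h.1 ▸ he) (hP' x (by simp))
  | cons x P ih =>
    cases P' with
    | nil =>
      simp only [List.nil_append, List.cons_append, List.cons.injEq] at h
      exact absurd (h.1 ▸ he') (hP x (by simp))
    | cons x' P' =>
      simp only [List.cons_append, List.cons.injEq] at h
      obtain ⟨rfl, h⟩ := h
      obtain ⟨rfl, rfl, rfl⟩ :=
        ih (fun y hy => hP y (by simp [hy])) (fun y hy => hP' y (by simp [hy])) h
      exact ⟨rfl, rfl, rfl⟩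

theorem List.pairwise_append_cons_of_trans {α : Type*} {R : α → α → Prop} [IsTrans α R]
    {P S : List α} {e : α} :
    (P ++ e :: S).Pairwise R ↔
      P.Pairwise R ∧ S.Pairwise R ∧ (∀ x ∈ P, R x e) ∧ ∀ y ∈ S, R e y := by
  simp only [List.pairwise_append, List.pairwise_cons, List.forall_mem_cons]
  constructor
  · rintro ⟨hP, ⟨heS, hS⟩, hPeS⟩
    exact ⟨hP, hS, fun x hx => (hPeS x hx).1, heS⟩
  · rintro ⟨hP, hS, hPe, heS⟩
    exact ⟨hP, ⟨heS, hS⟩, fun x hx => ⟨hPe x hx, fun y hy => _root_.trans (hPe x hx) (heS y hy)⟩⟩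

namespace SchroederTriple

@[ext]
structure Cell where
  a : ℕ
  b : ℕ
  r : ℕ

namespace Cell

def Fits (n : ℕ) (e : Cell) : Prop :=
  e.r ≤ 1 ∧ 1 ≤ e.a ∧ 1 ≤ e.b ∧ e.a + e.b + e.r ≤ n

def Precedes (d e : Cell) : Prop :=
  e.a < d.a ∧ d.b < e.b ∧ e.a + e.r ≤ d.a + d.r ∧ d.b + d.r ≤ e.b + e.r

instance : IsTrans Cell Precedes where
  trans c d e hcd hde := by
    simp only [Precedes] at *
    omega

def shift (v w : ℕ) (e : Cell) : Cell := ⟨e.a + v, e.b + w, e.r⟩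

def unshift (v w : ℕ) (e : Cell) : Cell := ⟨e.a - v, e.b - w, e.r⟩

theorem unshift_shift {v w : ℕ} (e : Cell) : (e.shift v w).unshift v w = e := by
  ext <;> simp only [shift, unshift] <;> omega

@[simp]
theorem precedes_shift_iff {v w : ℕ} {d e : Cell} :
    Precedes (d.shift v w) (e.shift v w) ↔ Precedes d e := by
  simp only [Precedes, shift]
  omega

theorem shift_unshift {v w : ℕ} {e : Cell} (hv : v ≤ e.a) (hw : w ≤ e.b) :
    (e.unshift v w).shift v w = e := by
  ext <;> simp only [shift, unshift] <;> omega

theorem finite_setOf_fits (n : ℕ) : {e : Cell | Fits n e}.Finite := by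
  refine (((Set.finite_Iic n).prod ((Set.finite_Iic n).prod (Set.finite_Iic n))).image
    fun p : ℕ × ℕ × ℕ => (⟨p.1, p.2.1, p.2.2⟩ : Cell)).subset ?_
  intro e ⟨hr, ha, hb, hn⟩
  exact ⟨(e.a, e.b, e.r), by simp only [Set.mem_prod, Set.mem_Iic]; omega, rfl⟩

end Cell

open Cell

def IsStaircase (P : Cell → Prop) (l : List Cell) : Prop :=
  (∀ e ∈ l, P e) ∧ l.Pairwise Precedes

abbrev Staircase (P : Cell → Prop) := {l : List Cell // IsStaircase P l}

theorem IsStaircase.mono {P Q : Cell → Prop} {l : List Cell} (h : IsStaircase P l)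
    (hPQ : ∀ e ∈ l, P e → Q e) : IsStaircase Q l :=
  ⟨fun e he => hPQ e he (h.1 e he), h.2⟩

theorem isStaircase_append_cons_iff {Q : Cell → Prop} {P S : List Cell} {e : Cell} :
    IsStaircase Q (P ++ e :: S) ↔ Q e ∧ IsStaircase (fun x => Q x ∧ Precedes x e) P ∧
      IsStaircase (fun y => Q y ∧ Precedes e y) S := by
  simp only [IsStaircase, List.pairwise_append_cons_of_trans,
    List.forall_mem_append, List.forall_mem_cons, forall_and]
  tauto

theorem finite_staircase {P : Cell → Prop} (hP : {e | P e}.Finite) : Finite (Staircase P) := by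
  have := hP.finite_subsets.to_subtype
  refine Finite.of_injective
    (fun l : Staircase P => (⟨{x | x ∈ l.1}, fun x hx => l.2.1 x hx⟩ : {t | t ⊆ {e | P e}})) ?_
  intro l₁ l₂ h
  have hmem : ∀ x, x ∈ l₁.1 ↔ x ∈ l₂.1 := Set.ext_iff.1 (congrArg Subtype.val h)
  have hnodup : ∀ l : Staircase P, l.1.Nodup := fun l =>
    l.2.2.imp fun hde hed => by simp only [hed, Precedes] at hde; omega
  refine Subtype.ext (List.Perm.eq_of_pairwise ?_ l₁.2.2 l₂.2.2
    ((List.perm_ext_iff_of_nodup (hnodup l₁) (hnodup l₂)).2 hmem))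
  intro d e _ _ hde hed
  simp only [Precedes] at hde hed
  omega

theorem card_staircase_congr {P Q : Cell → Prop} (h : ∀ e, P e ↔ Q e) :
    Nat.card (Staircase P) = Nat.card (Staircase Q) := by
  rw [show P = Q from funext fun e => propext (h e)]

theorem card_staircase_of_forall_not {P : Cell → Prop} (h : ∀ e, ¬P e) :
    Nat.card (Staircase P) = 1 := by
  have : Unique (Staircase P) :=
    { default := ⟨[], by simp [IsStaircase]⟩
      uniq := fun l =>
        Subtype.ext <| List.eq_nil_iff_forall_not_mem.2 fun e he => h e (l.2.1 e he) }
  exact Nat.card_unique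

theorem isStaircase_map_shift_iff {Q : Cell → Prop} {v w : ℕ} {l : List Cell} :
    IsStaircase Q (l.map (shift v w)) ↔ IsStaircase (fun x => Q (x.shift v w)) l := by
  simp only [IsStaircase, List.forall_mem_map, List.pairwise_map, precedes_shift_iff]

theorem map_shift_map_unshift {v w : ℕ} {l : List Cell} (h : ∀ y ∈ l, v ≤ y.a ∧ w ≤ y.b) :
    (l.map (unshift v w)).map (shift v w) = l := by
  rw [List.map_map]
  exact (List.map_congr_left fun y hy => shift_unshift (h y hy).1 (h y hy).2).trans (List.map_id l)

theorem card_staircase_eq_of_shift (v w : ℕ) {P Q : Cell → Prop}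
    (hQ : ∀ y, Q y → v ≤ y.a ∧ w ≤ y.b) (hPQ : ∀ x, Q (x.shift v w) ↔ P x) :
    Nat.card (Staircase P) = Nat.card (Staircase Q) := by
  have hQP (l : Staircase Q) : IsStaircase P (l.1.map (unshift v w)) := by
    have := isStaircase_map_shift_iff.1 <|
      (map_shift_map_unshift fun y hy => hQ y (l.2.1 y hy)).symm ▸ l.2
    exact this.mono fun x _ => (hPQ x).1
  refine Nat.card_congr
    { toFun := fun l =>
        ⟨l.1.map (shift v w), isStaircase_map_shift_iff.2 <| l.2.mono fun x _ => (hPQ x).2⟩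
      invFun := fun l => ⟨l.1.map (unshift v w), hQP l⟩
      left_inv := fun l => Subtype.ext <| by simp [Function.comp_def, unshift_shift]
      right_inv := fun l => Subtype.ext <| map_shift_map_unshift fun y hy => hQ y (l.2.1 y hy) }

section Split

variable {Q p : Cell → Prop} {s : Finset Cell}

def glueAtFirst (hs : ∀ e, e ∈ s ↔ Q e ∧ p e) :
    Staircase (fun x => Q x ∧ ¬p x) ⊕
      (Σ e : s, Staircase (fun x => Q x ∧ ¬p x ∧ Precedes x e) ×
        Staircase (fun y => Q y ∧ Precedes e y)) → Staircase Q
  | .inl l => ⟨l.1, l.2.mono fun _ _ h => h.1⟩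
  | .inr ⟨e, P, S⟩ => ⟨P.1 ++ (e : Cell) :: S.1, isStaircase_append_cons_iff.2
      ⟨((hs e).1 e.2).1, P.2.mono fun _ _ h => ⟨h.1, h.2.2⟩, S.2⟩⟩

theorem glueAtFirst_bijective (hs : ∀ e, e ∈ s ↔ Q e ∧ p e) :
    Function.Bijective (glueAtFirst hs) := by
  have hp (e : s) : p e := ((hs e).1 e.2).2
  constructor
  · rintro (l | ⟨e, P, S⟩) (l' | ⟨e', P', S'⟩) h <;> have h' := congrArg Subtype.val h
    · exact congrArg _ (Subtype.ext h')
    · exact absurd (hp e') (l.2.1 e' (h' ▸ by simp [glueAtFirst])).2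
    · exact absurd (hp e) (l'.2.1 e (h' ▸ by simp [glueAtFirst])).2
    · obtain ⟨hP, he, hS⟩ := (List.append_cons_inj_of_forall_not (fun x hx => (P.2.1 x hx).2.1)
        (fun x hx => (P'.2.1 x hx).2.1) (hp e) (hp e')).1 h'
      obtain rfl : e = e' := Subtype.ext he
      obtain rfl : P = P' := Subtype.ext hP
      obtain rfl : S = S' := Subtype.ext hS
      rfl
  · intro l
    by_cases h : ∃ x ∈ l.1, p x
    · obtain ⟨P, e, S, hl, hP, he⟩ := List.exists_eq_append_cons_of_exists_mem h
      obtain ⟨hQe, hPQ, hSQ⟩ := isStaircase_append_cons_iff.1 (hl ▸ l.2)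
      exact ⟨.inr ⟨⟨e, (hs e).2 ⟨hQe, he⟩⟩, ⟨P, hPQ.mono fun x hx h => ⟨h.1, hP x hx, h.2⟩⟩,
        ⟨S, hSQ⟩⟩, Subtype.ext hl.symm⟩
    · exact ⟨.inl ⟨l.1, l.2.mono fun x hx hQ => ⟨hQ, fun hpx => h ⟨x, hx, hpx⟩⟩⟩, rfl⟩

theorem card_staircase_eq_add_sum (hQ : {e | Q e}.Finite) (hs : ∀ e, e ∈ s ↔ Q e ∧ p e) :
    Nat.card (Staircase Q) = Nat.card (Staircase fun x => Q x ∧ ¬p x) +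
      ∑ e ∈ s, Nat.card (Staircase fun x => Q x ∧ ¬p x ∧ Precedes x e) *
        Nat.card (Staircase fun y => Q y ∧ Precedes e y) := by
  have hfin {P : Cell → Prop} (h : ∀ x, P x → Q x) : Finite (Staircase P) :=
    finite_staircase (hQ.subset h)
  have := hfin fun x (h : Q x ∧ ¬p x) => h.1
  have (e : s) := hfin fun x (h : Q x ∧ ¬p x ∧ Precedes x e) => h.1
  have (e : s) := hfin fun x (h : Q x ∧ Precedes e x) => h.1
  rw [← Nat.card_congr (Equiv.ofBijective _ (glueAtFirst_bijective hs)), Nat.card_sum,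
    Nat.card_sigma, ← Finset.sum_coe_sort s]
  simp only [Nat.card_prod]

end Split

theorem card_staircase_fits_add_two (k : ℕ) :
    Nat.card (Staircase (Fits (k + 2))) = Nat.card (Staircase fun e => Fits (k + 2) e ∧ e.a ≤ k) +
      Nat.card (Staircase (Fits (k + 1))) := by
  have hprefix : ∀ x, ¬(Fits (k + 2) x ∧ ¬x.a = k + 1 ∧ Precedes x ⟨k + 1, 1, 0⟩) := by
    intro x ⟨hx, hxa, hxe⟩
    simp only [Fits, Precedes] at hx hxe
    omega
  rw [card_staircase_eq_add_sum (p := fun e => e.a = k + 1) (s := {⟨k + 1, 1, 0⟩})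
    (finite_setOf_fits _), Finset.sum_singleton, card_staircase_of_forall_not hprefix, one_mul]
  · congr 1
    · exact card_staircase_congr fun e => by simp only [Fits]; omega
    · refine (card_staircase_eq_of_shift 0 1 (fun y h => ?_) fun x => ?_).symm
      · simp only [Precedes] at h; omega
      · simp only [Fits, Precedes, shift]; omega
  · intro e
    simp only [Finset.mem_singleton, Cell.ext_iff, Fits]
    omega

theorem card_staircase_fits_add_two_and_a_le (n : ℕ) :
    Nat.card (Staircase fun e => Fits (n + 2) e ∧ e.a ≤ n) =
      Nat.card (Staircase (Fits (n + 1))) + ∑ v ∈ Finset.range n,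
        Nat.card (Staircase (Fits (n - v))) * Nat.card (Staircase (Fits (v + 2))) := by
  classical
  -- the cell of the hypotenuse in column `v + 1` with the given `r`
  set diagCell : ℕ × ℕ → Cell := fun q => ⟨q.1 + 1, n + 1 - q.1 - q.2, q.2⟩
  have hinj : Set.InjOn diagCell ↑(Finset.range n ×ˢ Finset.range 2) := by
    intro q hq q' hq' h
    simp only [diagCell, Cell.mk.injEq] at h
    ext <;> omega
  rw [card_staircase_eq_add_sum (p := fun e => e.a + e.b + e.r = n + 2)
    (s := (Finset.range n ×ˢ Finset.range 2).image diagCell)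
    ((finite_setOf_fits _).subset fun e h => h.1), Finset.sum_image hinj, Finset.sum_product]
  · congr 1
    · exact card_staircase_congr fun e => by simp only [Fits]; omega
    refine Finset.sum_congr rfl fun v hv => ?_
    rw [Finset.mem_range] at hv
    have hpre (r : ℕ) (hr : r ≤ 1) := card_staircase_eq_of_shift (v + 1) 0 (P := Fits (n - v))
      (Q := fun x => (Fits (n + 2) x ∧ x.a ≤ n) ∧ ¬x.a + x.b + x.r = n + 2 ∧
        Precedes x (diagCell (v, r)))
      (fun y h => by simp only [diagCell, Precedes] at h; omega)
      (fun x => by simp only [diagCell, Fits, Precedes, shift]; omega)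
    have hsuf (r : ℕ) (hr : r ≤ 1) := card_staircase_eq_of_shift 0 (n + 1 - v - r)
      (P := fun y => Fits (v + 1 + r) y ∧ y.a ≤ v)
      (Q := fun y => (Fits (n + 2) y ∧ y.a ≤ n) ∧ Precedes (diagCell (v, r)) y)
      (fun y h => by simp only [diagCell, Precedes] at h; omega)
      (fun x => by simp only [diagCell, Fits, Precedes, shift]; omega)
    simp only [Finset.sum_range_succ, Finset.sum_range_zero, zero_add]
    rw [← hpre 0 (by omega), ← hpre 1 le_rfl, ← hsuf 0 (by omega), ← hsuf 1 le_rfl, ← mul_add,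
      card_staircase_fits_add_two, add_comm]
    congr 2
    exact card_staircase_congr fun e => by simp only [Fits]; omega
  · intro e
    simp only [Finset.mem_image, Finset.mem_product, Finset.mem_range, Prod.exists, diagCell, Fits]
    constructor
    · rintro ⟨v, r, ⟨hv, hr⟩, rfl⟩
      dsimp only
      omega
    · intro h
      exact ⟨e.a - 1, e.r, by omega, by ext <;> simp only <;> omega⟩

theorem card_staircase_fits_zero : Nat.card (Staircase (Fits 0)) = 1 :=
  card_staircase_of_forall_not fun e h => by simp only [Fits] at h; omega

theorem card_staircase_fits_succ (m : ℕ) : Nat.card (Staircase (Fits (m + 1))) = schroeder m := by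
  induction m using Nat.strong_induction_on with
  | _ m ih =>
    cases m with
    | zero =>
      rw [card_staircase_of_forall_not fun e h => by simp only [Fits] at h; omega, schroeder_zero]
    | succ n =>
      have hterm : ∀ v ∈ Finset.range n, Nat.card (Staircase (Fits (n - v))) *
          Nat.card (Staircase (Fits (v + 2))) = schroeder (v + 1) * schroeder (n - (v + 1)) := by
        intro v hv
        rw [Finset.mem_range] at hv
        rw [show n - v = n - (v + 1) + 1 by omega, ih _ (by omega), ih (v + 1) (by omega), mul_comm]
      rw [card_staircase_fits_add_two, card_staircase_fits_add_two_and_a_le, schroeder_succ,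
        Finset.sum_range_succ', Finset.sum_congr rfl hterm, ih n (by omega), schroeder_zero,
        Nat.sub_zero]
      ring

end SchroederTriple

open SchroederTriple SchroederTriple.Cell

namespace TripleData

def cells {n : ℕ} (t : TripleData n) : List Cell :=
  List.ofFn fun k => ⟨t.i k - t.r k, t.j k - t.r k, t.r k⟩

theorem isStaircase_cells {n : ℕ} (t : TripleData n) : IsStaircase (Fits n) t.cells := by
  refine ⟨List.forall_mem_ofFn_iff.2 fun k => ?_, List.pairwise_ofFn.2 fun k k' hkk' => ?_⟩
  · have := t.hr k; have := t.hirpos k; have := t.hjrpos k; have := t.hbound k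
    simp only [Fits]
    omega
  · have := t.hi hkk'.le; have := t.hj hkk'.le; have := t.hir hkk'; have := t.hjr hkk'
    have := t.hirpos k; have := t.hirpos k'; have := t.hjrpos k; have := t.hjrpos k'
    simp only [Precedes] at *
    omega

theorem cells_injective {n : ℕ} : Function.Injective (cells (n := n)) := by
  rintro ⟨s, i, j, r, _, _, _, _, _, _, hirpos, _, hjrpos, _⟩
    ⟨s', i', j', r', _, _, _, _, _, _, hirpos', _, hjrpos', _⟩ h
  obtain rfl : s = s' := by simpa [cells] using congrArg List.length h
  have hk (k : Fin s) := congrFun (List.ofFn_injective h) k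
  simp only [Cell.mk.injEq] at hk
  obtain rfl : r = r' := funext fun k => (hk k).2.2
  obtain rfl : i = i' := funext fun k => by
    have := hirpos k; have := hirpos' k; have := (hk k).1; omega
  obtain rfl : j = j' := funext fun k => by
    have := hjrpos k; have := hjrpos' k; have := (hk k).2.1; omega
  rfl

theorem exists_cells_eq {n : ℕ} (l : Staircase (Fits n)) : ∃ t : TripleData n, t.cells = l.1 := by
  obtain ⟨l, hfits, hl⟩ := l
  have hfits' (k : Fin l.length) := hfits (l.get k) (l.get_mem k)
  have hl' := List.pairwise_iff_get.1 hl
  simp only [Fits] at hfits'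
  simp only [Precedes] at hl'
  let t : TripleData n :=
    { s := l.length
      i := fun k => (l.get k).a + (l.get k).r
      j := fun k => (l.get k).b + (l.get k).r
      r := fun k => (l.get k).r
      hipos := fun k => by have := hfits' k; omega
      hjpos := fun k => by have := hfits' k; omega
      hi := antitone_iff_forall_lt.2 fun k k' h => by have := hl' k k' h; omega
      hj := monotone_iff_forall_lt.2 fun k k' h => by have := hl' k k' h; omega
      hr := fun k => (hfits' k).1
      hir := fun k k' h => by have := hl' k k' h; push_cast; omega
      hirpos := fun k => by have := hfits' k; push_cast; omega
      hjr := fun k k' h => by have := hl' k k' h; push_cast; omega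
      hjrpos := fun k => by have := hfits' k; push_cast; omega
      hbound := fun k => by have := hfits' k; omega }
  refine ⟨t, List.ext_get (by simp [t, cells]) fun k _ _ => ?_⟩
  simp [t, cells]

theorem card_eq_card_staircase (n : ℕ) :
    Nat.card (TripleData n) = Nat.card (Staircase (Fits n)) :=
  Nat.card_congr <| Equiv.ofBijective (fun t => ⟨t.cells, t.isStaircase_cells⟩)
    ⟨fun _ _ h => cells_injective (congrArg Subtype.val h),
      fun l => (exists_cells_eq l).imp fun _ h => Subtype.ext h⟩

end TripleData

theorem schroeder_counts_triples_general (n : ℕ) :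
    Nat.card (TripleData n) = schroeder (n - 1) := by
  rw [TripleData.card_eq_card_staircase]
  cases n with
  | zero => rw [card_staircase_fits_zero, Nat.zero_sub, schroeder_zero]
  | succ m => exact card_staircase_fits_succ m

/-- The `(n-1)`st Schröder number counts the triples of sequences described above. -/
theorem schroeder_counts_triples (n : ℕ) (hn : 1 ≤ n) :
    Nat.card (TripleData n) = schroeder (n - 1) :=
  schroeder_counts_triples_general n
end

section
/- The nth Catalan number C_n equals the number of pairs of integer sequences i_1 > i_2 > ⋯ > i_s > 0 and 0 < j_1 < j_2 < ⋯ < j_s (the common length s ≥ 0 being arbitrary) such that i_k + j_k ≤ n for all k = 1,…,s. Moreover, for each fixed s, the number of such pairs of sequences of length s equals the Narayana number N(n,s+1) = (1/n)·C(n,s)·C(n,s+1). -/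
/-!
Reversing and shifting, `r ↦ i_{s-r} - 1` and `r ↦ n - 1 - j_{s-r}` turn a pair of sequences
into increasing sequences `a ≤ b` (pointwise) with values below `n - 1`, i.e. into two
`s`-subsets `A`, `B` of `{0, …, n - 2}` whose sorted enumerations compare pointwise. That
comparison is equivalent to the counting condition `#{b ∈ B | b < x} ≤ #{a ∈ A | a < x}` for all
`x`, and unlike the pointwise one this condition is local in the largest admissible element `m`:
for `A, B ⊆ {0, …, m}` it amounts to the condition for `A \ {m}`, `B \ {m}` plus `#B ≤ #A`.
Splitting on whether `m` lies in `A` and in `B` therefore gives a four-term Pascal recursion for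
the number of such pairs with `#A = s`, `#B = t`, solved by the ballot-type formula
`C(m,s) C(m,t) - C(m,s+1) C(m,t-1)`. For `s = t` this is the Narayana number, and summing over `s`
with Vandermonde's identity gives `C(2n, n+1) = n C_n`.
-/

/-- A pair of strictly decreasing / strictly increasing sequences of positive integers
`i_1 > … > i_s > 0`, `0 < j_1 < … < j_s` of common length `s` with `i_k + j_k ≤ n`. -/
structure PairData (n s : ℕ) where
  i : Fin s → ℕ
  j : Fin s → ℕ
  hipos : ∀ k, 0 < i k
  hjpos : ∀ k, 0 < j k
  hi : StrictAnti i
  hj : StrictMono j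
  hbound : ∀ k, i k + j k ≤ n

open Finset

def Dominates (A B : Finset ℕ) : Prop :=
  ∀ x, #{b ∈ B | b < x} ≤ #{a ∈ A | a < x}

theorem Dominates.card_le {A B : Finset ℕ} {m : ℕ} (h : Dominates A B) (hA : A ⊆ range m)
    (hB : B ⊆ range m) : #B ≤ #A := by
  have hm := h m
  rwa [filter_true_of_mem fun b hb => mem_range.1 (hB hb),
    filter_true_of_mem fun a ha => mem_range.1 (hA ha)] at hm

theorem dominates_iff_erase {A B : Finset ℕ} {m : ℕ} (hA : A ⊆ range (m + 1))
    (hB : B ⊆ range (m + 1)) :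
    Dominates A B ↔ Dominates (A.erase m) (B.erase m) ∧ #B ≤ #A := by
  have below : ∀ X ⊆ range (m + 1), ∀ x, {y ∈ X.erase m | y < x} = {y ∈ X | y < min x m} := by
    intro X hX x
    ext y
    have hy : y ∈ X → y < m + 1 := fun h => mem_range.1 (hX h)
    simp only [mem_filter, mem_erase, lt_min_iff]
    grind
  have above : ∀ X ⊆ range (m + 1), ∀ x, m < x → {y ∈ X | y < x} = X := fun X hX x hx =>
    filter_true_of_mem fun y hy => by have := mem_range.1 (hX hy); omega
  constructor
  · intro h
    refine ⟨fun x => ?_, ?_⟩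
    · rw [below A hA, below B hB]
      exact h _
    · have hm := h (m + 1)
      rwa [above A hA _ m.lt_succ_self, above B hB _ m.lt_succ_self] at hm
  · rintro ⟨h, hcard⟩ x
    rcases le_or_gt x m with hx | hx
    · simpa [below A hA, below B hB, hx] using h x
    · rwa [above A hA x hx, above B hB x hx]

open Classical in
noncomputable def dominatedPairs (m s t : ℕ) : Finset (Finset ℕ × Finset ℕ) :=
  {p ∈ powersetCard s (range m) ×ˢ powersetCard t (range m) | Dominates p.1 p.2}

theorem mem_dominatedPairs {m s t : ℕ} {p : Finset ℕ × Finset ℕ} :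
    p ∈ dominatedPairs m s t ↔
      p.1 ∈ powersetCard s (range m) ∧ p.2 ∈ powersetCard t (range m) ∧ Dominates p.1 p.2 := by
  simp [dominatedPairs, and_assoc]

theorem dominatedPairs_eq_empty {m s t : ℕ} (h : s < t) : dominatedPairs m s t = ∅ :=
  eq_empty_of_forall_notMem fun p hp => by
    obtain ⟨hA, hB, hD⟩ := mem_dominatedPairs.1 hp
    rw [mem_powersetCard] at hA hB
    have := hD.card_le hA.1 hB.1
    omega

theorem card_dominatedPairs_zero (m s : ℕ) : #(dominatedPairs m s 0) = m.choose s := by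
  classical
  have hD : ∀ p ∈ powersetCard s (range m) ×ˢ {∅}, Dominates p.1 p.2 := fun p hp => by
    rw [mem_singleton.1 (mem_product.1 hp).2]
    exact fun x => by simp
  rw [dominatedPairs, powersetCard_zero, filter_true_of_mem hD, card_product, card_singleton,
    card_powersetCard, card_range, mul_one]

theorem erase_of_subset_range_succ {X : Finset ℕ} {m : ℕ} (hX : X ⊆ range (m + 1)) :
    X.erase m ⊆ range m ∧ #(X.erase m) = #X - (decide (m ∈ X)).toNat ∧
      cond (decide (m ∈ X)) (insert m (X.erase m)) (X.erase m) = X := by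
  refine ⟨fun y hy => ?_, ?_⟩
  · have := mem_range.1 (hX (mem_of_mem_erase hy))
    have := ne_of_mem_erase hy
    exact mem_range.2 (by omega)
  · by_cases hm : m ∈ X <;> simp [hm, insert_erase, erase_eq_of_notMem]

theorem cond_insert_of_subset_range {X : Finset ℕ} {m : ℕ} (hX : X ⊆ range m) (c : Bool) :
    cond c (insert m X) X ⊆ range (m + 1) ∧ #(cond c (insert m X) X) = #X + c.toNat ∧
      decide (m ∈ cond c (insert m X) X) = c ∧ (cond c (insert m X) X).erase m = X := by
  have hm : m ∉ X := fun h => by simpa using hX h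
  have hX' : X ⊆ range (m + 1) := hX.trans (range_subset_range.2 m.le_succ)
  cases c
  · simp [hm, hX', erase_eq_of_notMem]
  · simp [hm, insert_subset_iff, hX', card_insert_of_notMem]

-- `t ≤ s` supplies the condition `#B ≤ #A` of `dominates_iff_erase` when `m` is put back.
theorem card_fiber_dominatedPairs (m : ℕ) {s t : ℕ} (hts : t ≤ s) (a b : Bool) :
    #{p ∈ dominatedPairs (m + 1) (s + 1) (t + 1) | (decide (m ∈ p.1), decide (m ∈ p.2)) = (a, b)}
      = #(dominatedPairs m (s + 1 - a.toNat) (t + 1 - b.toNat)) := by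
  refine card_nbij' (fun p => (p.1.erase m, p.2.erase m))
    (fun q => (cond a (insert m q.1) q.1, cond b (insert m q.2) q.2)) ?_ ?_ ?_ ?_
  · rintro ⟨A, B⟩ hp
    simp only [coe_filter, mem_coe, Set.mem_ofPred_eq, mem_dominatedPairs, mem_powersetCard,
      Prod.mk.injEq] at hp ⊢
    obtain ⟨⟨⟨hA, hcA⟩, ⟨hB, hcB⟩, hD⟩, rfl, rfl⟩ := hp
    obtain ⟨sA, cA, -⟩ := erase_of_subset_range_succ hA
    obtain ⟨sB, cB, -⟩ := erase_of_subset_range_succ hB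
    exact ⟨⟨sA, by rw [cA, hcA]⟩, ⟨sB, by rw [cB, hcB]⟩, ((dominates_iff_erase hA hB).1 hD).1⟩
  · rintro ⟨A, B⟩ hq
    simp only [coe_filter, mem_coe, Set.mem_ofPred_eq, mem_dominatedPairs, mem_powersetCard,
      Prod.mk.injEq] at hq ⊢
    obtain ⟨⟨hA, hcA⟩, ⟨hB, hcB⟩, hD⟩ := hq
    obtain ⟨sA, cA, dA, eA⟩ := cond_insert_of_subset_range hA a
    obtain ⟨sB, cB, dB, eB⟩ := cond_insert_of_subset_range hB b
    refine ⟨⟨⟨sA, ?_⟩, ⟨sB, ?_⟩, (dominates_iff_erase sA sB).2 ⟨by rwa [eA, eB], ?_⟩⟩, dA, dB⟩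
    · rw [cA, hcA]; cases a <;> simp
    · rw [cB, hcB]; cases b <;> simp
    · rw [cA, cB, hcA, hcB]; cases a <;> cases b <;> simp <;> omega
  · rintro ⟨A, B⟩ hp
    simp only [coe_filter, Set.mem_ofPred_eq, mem_dominatedPairs, mem_powersetCard,
      Prod.mk.injEq] at hp ⊢
    obtain ⟨⟨⟨hA, -⟩, ⟨hB, -⟩, -⟩, rfl, rfl⟩ := hp
    exact ⟨(erase_of_subset_range_succ hA).2.2, (erase_of_subset_range_succ hB).2.2⟩
  · rintro ⟨A, B⟩ hq
    simp only [mem_coe, mem_dominatedPairs, mem_powersetCard, Prod.mk.injEq] at hq ⊢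
    exact ⟨(cond_insert_of_subset_range hq.1.1 a).2.2.2,
      (cond_insert_of_subset_range hq.2.1.1 b).2.2.2⟩

theorem card_dominatedPairs_succ (m : ℕ) {s t : ℕ} (hts : t ≤ s) :
    #(dominatedPairs (m + 1) (s + 1) (t + 1)) =
      #(dominatedPairs m (s + 1) (t + 1)) + #(dominatedPairs m (s + 1) t) +
        #(dominatedPairs m s (t + 1)) + #(dominatedPairs m s t) := by
  classical
  rw [card_eq_sum_card_fiberwise (f := fun p => (decide (m ∈ p.1), decide (m ∈ p.2)))
    (t := univ) (fun _ _ => mem_coe.2 (mem_univ _))]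
  simp only [Fintype.sum_prod_type, Fintype.sum_bool, card_fiber_dominatedPairs m hts,
    Bool.toNat_true, Bool.toNat_false, add_tsub_cancel_right, tsub_zero]
  ring

theorem card_dominatedPairs_add_choose_mul_choose (m : ℕ) {s t : ℕ} (hts : t ≤ s) :
    #(dominatedPairs m s (t + 1)) + m.choose (s + 1) * m.choose t =
      m.choose s * m.choose (t + 1) := by
  induction m generalizing s t with
  | zero => simp +contextual [dominatedPairs]
  | succ m ih =>
    rcases s with _ | s
    · obtain rfl : t = 0 := by omega
      simp [dominatedPairs_eq_empty, mul_comm]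
    rcases hts.eq_or_lt with rfl | hts
    · simp [dominatedPairs_eq_empty, mul_comm]
    rw [card_dominatedPairs_succ m (by omega)]
    rcases t with _ | t
    · have h₁ := ih (s := s + 1) (t := 0) (by omega)
      have h₂ := ih (s := s) (t := 0) (by omega)
      simp only [card_dominatedPairs_zero, Nat.choose_succ_succ, Nat.choose_zero_right] at *
      linear_combination h₁ + h₂
    · have h₁ := ih (s := s + 1) (t := t + 1) (by omega)
      have h₂ := ih (s := s + 1) (t := t) (by omega)
      have h₃ := ih (s := s) (t := t + 1) (by omega)
      have h₄ := ih (s := s) (t := t) (by omega)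
      simp only [Nat.choose_succ_succ] at *
      linear_combination h₁ + h₂ + h₃ + h₄

section Sorted

variable {s : ℕ} {f g : Fin s → ℕ}

theorem card_filter_lt_image_univ (hf : Function.Injective f) (x : ℕ) :
    #{y ∈ univ.image f | y < x} = #{r | f r < x} := by
  classical
  rw [filter_image, card_image_of_injective _ hf]

theorem dominates_image_univ_iff (hf : StrictMono f) (hg : StrictMono g) :
    Dominates (univ.image f) (univ.image g) ↔ ∀ r, f r ≤ g r := by
  simp only [Dominates, card_filter_lt_image_univ hf.injective,
    card_filter_lt_image_univ hg.injective]
  refine ⟨fun h r => ?_, fun h x => card_le_card fun r => by simpa using (h r).trans_lt⟩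
  by_contra! hlt
  have below_f : #{k | f k < f r} = r := by simp [hf.lt_iff_lt, filter_gt_eq_Iio]
  have below_g : r + 1 ≤ #{k | g k < f r} := by
    rw [← Fin.card_Iic r]
    exact card_le_card fun k hk => by simpa using (hg.monotone (mem_Iic.1 hk)).trans_lt hlt
  have := h (f r)
  omega

theorem image_univ_mem_powersetCard {m : ℕ} (hf : StrictMono f) (hm : ∀ r, f r < m) :
    univ.image f ∈ powersetCard s (range m) := by
  rw [mem_powersetCard, card_image_of_injective _ hf.injective, card_univ, Fintype.card_fin]
  exact ⟨fun y hy => by obtain ⟨r, -, rfl⟩ := mem_image.1 hy; exact mem_range.2 (hm r), rfl⟩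

theorem orderEmbOfFin_image_univ (hf : StrictMono f) (h : #(univ.image f) = s) :
    ⇑((univ.image f).orderEmbOfFin h) = f :=
  (orderEmbOfFin_unique h (fun r => mem_image_of_mem f (mem_univ r)) hf).symm

theorem orderEmbOfFin_le_of_dominates {A B : Finset ℕ} (hA : #A = s) (hB : #B = s)
    (h : Dominates A B) (r : Fin s) : A.orderEmbOfFin hA r ≤ B.orderEmbOfFin hB r := by
  have key :=
    dominates_image_univ_iff (A.orderEmbOfFin hA).strictMono (B.orderEmbOfFin hB).strictMono
  rw [image_orderEmbOfFin_univ, image_orderEmbOfFin_univ] at key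
  exact key.1 h r

end Sorted

namespace PairData

variable {n s : ℕ}

def lower (d : PairData n s) (r : Fin s) : ℕ := d.i r.rev - 1

def upper (d : PairData n s) (r : Fin s) : ℕ := n - 1 - d.j r.rev

theorem strictMono_lower (d : PairData n s) : StrictMono d.lower := fun r r' h => by
  have := d.hi (Fin.rev_lt_rev.2 h); have := d.hipos r.rev
  simp only [lower]; omega

theorem strictMono_upper (d : PairData n s) : StrictMono d.upper := fun r r' h => by
  have := d.hj (Fin.rev_lt_rev.2 h); have := d.hbound r.rev; have := d.hipos r.rev
  simp only [upper]; omega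

theorem lower_le_upper (d : PairData n s) (r : Fin s) : d.lower r ≤ d.upper r := by
  have := d.hbound r.rev; have := d.hipos r.rev; have := d.hjpos r.rev
  simp only [lower, upper]; omega

theorem upper_lt (d : PairData n s) (r : Fin s) : d.upper r < n - 1 := by
  have := d.hbound r.rev; have := d.hipos r.rev; have := d.hjpos r.rev
  simp only [upper]; omega

theorem ext_lower_upper {d e : PairData n s} (hl : d.lower = e.lower) (hu : d.upper = e.upper) :
    d = e := by
  have hi : d.i = e.i := funext fun k => by
    have := congrFun hl k.rev; have := d.hipos k; have := e.hipos k
    simp only [lower, Fin.rev_rev] at *; omega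
  have hj : d.j = e.j := funext fun k => by
    have := congrFun hu k.rev; have := d.hbound k; have := e.hbound k; have := d.hipos k
    have := e.hipos k
    simp only [upper, Fin.rev_rev] at *; omega
  cases d; cases e; cases hi; cases hj; rfl

def ofSorted (a b : Fin s → ℕ) (ha : StrictMono a) (hb : StrictMono b)
    (hab : ∀ r, a r ≤ b r) (hbn : ∀ r, b r < n - 1) : PairData n s where
  i k := a k.rev + 1
  j k := n - 1 - b k.rev
  hipos k := Nat.succ_pos _
  hjpos k := by have := hbn k.rev; omega
  hi k l h := by have := ha (Fin.rev_lt_rev.2 h); dsimp only; omega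
  hj k l h := by have := hb (Fin.rev_lt_rev.2 h); have := hbn k.rev; dsimp only; omega
  hbound k := by have := hab k.rev; have := hbn k.rev; omega

theorem lower_ofSorted {a b : Fin s → ℕ} (ha hb hab) (hbn : ∀ r, b r < n - 1) :
    (ofSorted a b ha hb hab hbn).lower = a := by
  ext r
  simp [lower, ofSorted]

theorem upper_ofSorted {a b : Fin s → ℕ} (ha hb hab) (hbn : ∀ r, b r < n - 1) :
    (ofSorted a b ha hb hab hbn).upper = b := by
  ext r
  have := hbn r
  simp only [upper, ofSorted, Fin.rev_rev]
  omega

end PairData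

-- At `n = 0`, where `n - 1 = 0`, both sides are empty unless `s = 0`.
noncomputable def pairDataEquiv (n s : ℕ) : PairData n s ≃ dominatedPairs (n - 1) s s where
  toFun d := ⟨(univ.image d.lower, univ.image d.upper), mem_dominatedPairs.2
    ⟨image_univ_mem_powersetCard d.strictMono_lower
        fun r => (d.lower_le_upper r).trans_lt (d.upper_lt r),
      image_univ_mem_powersetCard d.strictMono_upper d.upper_lt,
      (dominates_image_univ_iff d.strictMono_lower d.strictMono_upper).2 d.lower_le_upper⟩⟩
  invFun p :=
    have hp := mem_dominatedPairs.1 p.2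
    have hA := mem_powersetCard.1 hp.1
    have hB := mem_powersetCard.1 hp.2.1
    .ofSorted _ _ (p.1.1.orderEmbOfFin hA.2).strictMono (p.1.2.orderEmbOfFin hB.2).strictMono
      (orderEmbOfFin_le_of_dominates hA.2 hB.2 hp.2.2)
      fun r => mem_range.1 (hB.1 (orderEmbOfFin_mem _ hB.2 r))
  left_inv d := PairData.ext_lower_upper
    (by rw [PairData.lower_ofSorted, orderEmbOfFin_image_univ d.strictMono_lower])
    (by rw [PairData.upper_ofSorted, orderEmbOfFin_image_univ d.strictMono_upper])
  right_inv p := by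
    ext1
    simp only [PairData.lower_ofSorted, PairData.upper_ofSorted, image_orderEmbOfFin_univ]

instance (n s : ℕ) : Finite (PairData n s) :=
  Finite.of_equiv _ (pairDataEquiv n s).symm

theorem card_pairData (n s : ℕ) : Nat.card (PairData n s) = #(dominatedPairs (n - 1) s s) := by
  rw [Nat.card_congr (pairDataEquiv n s), Nat.card_eq_finsetCard]

theorem PairData.length_le {n s : ℕ} (d : PairData n s) : s ≤ n := by
  obtain ⟨hA, hs⟩ := mem_powersetCard.1 (mem_dominatedPairs.1 (pairDataEquiv n s d).2).1
  have := card_le_card hA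
  rw [card_range, hs] at this
  omega

theorem succ_mul_choose_sq_eq (m t : ℕ) :
    (m + 1) * m.choose (t + 1) ^ 2 =
      (m + 1).choose (t + 1) * (m + 1).choose (t + 2) +
        (m + 1) * (m.choose (t + 2) * m.choose t) := by
  have h₁ := Nat.add_one_mul_choose_eq m t
  have h₂ := Nat.choose_succ_right_eq m (t + 1)
  rw [Nat.choose_succ_succ m t, Nat.choose_succ_succ m (t + 1)] at *
  rcases le_or_gt (t + 1) m with h | h
  · obtain ⟨k, rfl⟩ := Nat.exists_eq_add_of_le h
    rw [show t + 1 + k - (t + 1) = k by omega] at h₂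
    zify at *
    linear_combination (-(((t + 1 + k).choose (t + 1) : ℤ) + (t + 1 + k).choose (t + 2))) * h₁
      - (((t + 1 + k).choose t : ℤ) + (t + 1 + k).choose (t + 1)) * h₂
  · simp [Nat.choose_eq_zero_of_lt h, Nat.choose_eq_zero_of_lt (h.trans (Nat.lt_succ_self _))]

theorem mul_card_pairData (n s : ℕ) :
    n * Nat.card (PairData n s) = n.choose s * n.choose (s + 1) := by
  rw [card_pairData]
  rcases n with _ | m
  · simp
  rcases s with _ | t
  · simp [card_dominatedPairs_zero, mul_comm]
  have h := card_dominatedPairs_add_choose_mul_choose m (s := t + 1) (t := t) (by omega)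
  have := succ_mul_choose_sq_eq m t
  rw [Nat.add_sub_cancel]
  zify at *
  linear_combination (m + 1 : ℤ) * h + this

theorem sum_range_choose_mul_choose_succ (n : ℕ) :
    ∑ s ∈ range (n + 1), n.choose s * n.choose (s + 1) = (n + n).choose (n + 1) := by
  symm
  rw [Nat.add_choose_eq, Nat.sum_antidiagonal_eq_sum_range_succ_mk, sum_range_succ']
  simp only [Nat.sub_zero, Nat.choose_succ_self, mul_zero, add_zero]
  refine sum_congr rfl fun s hs => ?_
  rw [mul_comm, Nat.choose_symm_of_eq_add]
  have := mem_range.1 hs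
  omega

theorem mul_catalan_eq_choose (n : ℕ) : n * catalan n = (n + n).choose (n + 1) := by
  have h₁ := succ_mul_catalan_eq_centralBinom n
  have h₂ := Nat.choose_succ_right_eq (n + n) n
  rw [Nat.centralBinom_eq_two_mul_choose, two_mul, show n + n - n = n by omega] at *
  apply Nat.eq_of_mul_eq_mul_left (show 0 < n + 1 by omega)
  linear_combination n * h₁ - h₂

theorem Nat.card_sigma_eq_sum_range {β : ℕ → Type*} [∀ s, Finite (β s)] {n : ℕ}
    (h : ∀ s, β s → s ≤ n) : Nat.card (Σ s, β s) = ∑ s ∈ range (n + 1), Nat.card (β s) := by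
  let e : (Σ s, β s) ≃ Σ s : Fin (n + 1), β s :=
    { toFun p := ⟨⟨p.1, Nat.lt_succ_of_le (h _ p.2)⟩, p.2⟩
      invFun p := ⟨p.1, p.2⟩ }
  rw [Nat.card_congr e, Nat.card_sigma, Fin.sum_univ_eq_sum_range (fun s => Nat.card (β s))]

/-- The `n`th Catalan number counts the pairs of sequences described above (of arbitrary
common length), and for fixed length `s` the number of such pairs is the Narayana number
`N(n, s+1) = (1/n) * C(n,s) * C(n,s+1)` (stated in the division-free form). -/
theorem catalan_counts_pairs (n : ℕ) :
    Nat.card ((s : ℕ) × PairData n s) = catalan n ∧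
    ∀ s : ℕ, n * Nat.card (PairData n s) = n.choose s * n.choose (s + 1) := by
  refine ⟨?_, mul_card_pairData n⟩
  rw [Nat.card_sigma_eq_sum_range fun s d => d.length_le]
  rcases n with _ | m
  · simp [card_pairData, card_dominatedPairs_zero]
  apply Nat.eq_of_mul_eq_mul_left m.succ_pos
  rw [mul_sum, sum_congr rfl fun s _ => mul_card_pairData (m + 1) s,
    sum_range_choose_mul_choose_succ, mul_catalan_eq_choose]
end

section
/- Let π ∈ S_n be a Schröder permutation. Then the set E*(π), obtained from E(π) by replacing every rank-1 element (i,j) by (i−1,j−1), is the essential set of a permutation; in particular, there exists a 132-avoiding permutation σ ∈ S_n with E(σ) = E*(π) (and every element of E(σ) has rank 0 with respect to σ). -/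
/-- The pattern 132, as a permutation of `Fin 3` (0-based one-line notation `0 2 1`). -/
def pat132 : Equiv.Perm (Fin 3) := Equiv.swap 1 2

/-- `E*(π)`: the set obtained from the essential set of `π` by keeping the rank-0 elements
and replacing every rank-1 element `(i,j)` by `(i-1, j-1)`. -/
def Estar {n : ℕ} (π : Equiv.Perm (Fin n)) : Set (Fin n × Fin n) :=
  {p | p ∈ EssSet π ∧ rank π p = 0} ∪
  {q | ∃ p, p ∈ EssSet π ∧ rank π p = 1 ∧
        (q.1 : ℕ) + 1 = (p.1 : ℕ) ∧ (q.2 : ℕ) + 1 = (p.2 : ℕ)}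

open Finset

section counting
variable {m : ℕ}

lemma aux_le (s : Finset (Fin m)) (c : ℕ) (hc : c < s.card) :
    c ≤ ((s.orderEmbOfFin rfl) ⟨c, hc⟩ : Fin m) := by
  have hinj := (s.orderEmbOfFin (rfl : s.card = s.card)).injective
  have himg : (Finset.Iio (⟨c, hc⟩ : Fin s.card)).image (s.orderEmbOfFin rfl)
      ⊆ Finset.Iio ((s.orderEmbOfFin rfl) ⟨c, hc⟩) := by
    intro y hy
    simp only [Finset.mem_image, Finset.mem_Iio] at hy ⊢
    obtain ⟨a, ha, rfl⟩ := hy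
    exact (s.orderEmbOfFin rfl).strictMono ha
  have h1 : ((Finset.Iio (⟨c, hc⟩ : Fin s.card)).image (s.orderEmbOfFin rfl)).card = c := by
    rw [Finset.card_image_of_injective _ hinj, Fin.card_Iio]
  have h2 := Finset.card_le_card himg
  rw [h1, Fin.card_Iio] at h2
  exact h2

lemma aux_count (s : Finset (Fin m)) (c : ℕ) (hc : c < s.card) :
    (s.filter (fun y => y < (s.orderEmbOfFin rfl) ⟨c, hc⟩)).card = c := by
  classical
  have hinj := (s.orderEmbOfFin (rfl : s.card = s.card)).injective
  have hset : s.filter (fun y => y < (s.orderEmbOfFin rfl) ⟨c, hc⟩)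
      = (Finset.Iio (⟨c, hc⟩ : Fin s.card)).image (s.orderEmbOfFin rfl) := by
    ext y
    simp only [Finset.mem_filter, Finset.mem_image, Finset.mem_Iio]
    constructor
    · rintro ⟨hys, hlt⟩
      have : y ∈ Set.range (s.orderEmbOfFin (rfl : s.card = s.card)) := by
        rw [Finset.range_orderEmbOfFin]; exact hys
      obtain ⟨a, rfl⟩ := this
      exact ⟨a, (s.orderEmbOfFin rfl).strictMono.lt_iff_lt.mp hlt, rfl⟩
    · rintro ⟨a, ha, rfl⟩
      exact ⟨Finset.orderEmbOfFin_mem _ _ _, (s.orderEmbOfFin rfl).strictMono ha⟩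
  rw [hset, Finset.card_image_of_injective _ hinj, Fin.card_Iio]

end counting
open Finset

/-- greedy construction: value at row `i` is the `(l i)`-th smallest unused value. -/
def bv (n : ℕ) (l : ℕ → ℕ) : ℕ → Fin (n + 1)
  | i =>
    let used : Finset (Fin (n + 1)) :=
      (Finset.range i).attach.image (fun k => bv n l k.1)
    let avail := Finset.univ \ used
    if h : l i < avail.card then (avail.orderEmbOfFin rfl) ⟨l i, h⟩ else ⟨0, Nat.succ_pos n⟩
  termination_by i => i
  decreasing_by exact Finset.mem_range.mp k.2

def usedF (n : ℕ) (l : ℕ → ℕ) (i : ℕ) : Finset (Fin (n + 1)) :=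
  (Finset.range i).image (bv n l)

def availF (n : ℕ) (l : ℕ → ℕ) (i : ℕ) : Finset (Fin (n + 1)) :=
  Finset.univ \ usedF n l i

lemma bv_eq (n : ℕ) (l : ℕ → ℕ) (i : ℕ) :
    bv n l i = if h : l i < (availF n l i).card
      then ((availF n l i).orderEmbOfFin rfl) ⟨l i, h⟩ else ⟨0, Nat.succ_pos n⟩ := by
  have key : ((Finset.range i).attach.image (fun k => bv n l k.1)) = usedF n l i := by
    rw [usedF]
    conv_rhs => rw [← Finset.attach_image_val (s := Finset.range i)]
    rw [Finset.image_image]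
    rfl
  rw [bv]
  simp only [key]
  rfl
section construction
variable {n : ℕ} {l : ℕ → ℕ}

lemma main_inv (hmono : ∀ ⦃a b : ℕ⦄, a ≤ b → l b ≤ l a) (hb : ∀ i, i ≤ n → l i + i ≤ n) :
    ∀ i, i ≤ n + 1 → (usedF n l i).card = i ∧
      (i ≤ n → ∀ x : Fin (n + 1), (x : ℕ) < l i → x ∈ availF n l i) := by
  intro i
  induction i with
  | zero =>
    intro _
    constructor
    · simp [usedF]
    · intro _ x _
      simp [availF, usedF]
  | succ i ih =>
    intro hi1
    have hin : i ≤ n := by omega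
    obtain ⟨ihcard, ihlow⟩ := ih (by omega)
    have hcard_avail : (availF n l i).card = n + 1 - i := by
      rw [availF, Finset.card_sdiff_of_subset (Finset.subset_univ _), Finset.card_univ,
        Fintype.card_fin, ihcard]
    have hlt : l i < (availF n l i).card := by
      have := hb i hin; omega
    have hbv : bv n l i = ((availF n l i).orderEmbOfFin rfl) ⟨l i, hlt⟩ := by
      rw [bv_eq, dif_pos hlt]
    have hmem : bv n l i ∈ availF n l i := by
      rw [hbv]; exact Finset.orderEmbOfFin_mem _ _ _
    have hnotused : bv n l i ∉ usedF n l i := by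
      rw [availF, Finset.mem_sdiff] at hmem; exact hmem.2
    have husucc : usedF n l (i + 1) = insert (bv n l i) (usedF n l i) := by
      rw [usedF, Finset.range_add_one, Finset.image_insert]; rfl
    constructor
    · rw [husucc, Finset.card_insert_of_notMem hnotused, ihcard]
    · intro hsn x hx
      have hle : l (i + 1) ≤ l i := hmono (Nat.le_succ i)
      have hxi : x ∈ availF n l i := ihlow hin x (by omega)
      have hlbv : l i ≤ (bv n l i : ℕ) := by
        rw [hbv]; exact aux_le _ _ _
      have hxne : x ≠ bv n l i := by
        intro h
        rw [← h] at hlbv; omega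
      rw [availF, husucc, Finset.mem_sdiff]
      refine ⟨Finset.mem_univ _, ?_⟩
      rw [Finset.mem_insert]
      rw [availF, Finset.mem_sdiff] at hxi
      tauto

lemma card_availF (hmono : ∀ ⦃a b : ℕ⦄, a ≤ b → l b ≤ l a) (hb : ∀ i, i ≤ n → l i + i ≤ n)
    {i : ℕ} (hi : i ≤ n + 1) : (availF n l i).card = n + 1 - i := by
  rw [availF, Finset.card_sdiff_of_subset (Finset.subset_univ _), Finset.card_univ, Fintype.card_fin,
    (main_inv hmono hb i hi).1]

lemma lt_card_availF (hmono : ∀ ⦃a b : ℕ⦄, a ≤ b → l b ≤ l a) (hb : ∀ i, i ≤ n → l i + i ≤ n)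
    {i : ℕ} (hi : i ≤ n) : l i < (availF n l i).card := by
  rw [card_availF hmono hb (by omega)]
  have := hb i hi; omega

lemma bv_mem_availF (hmono : ∀ ⦃a b : ℕ⦄, a ≤ b → l b ≤ l a) (hb : ∀ i, i ≤ n → l i + i ≤ n)
    {i : ℕ} (hi : i ≤ n) : bv n l i ∈ availF n l i := by
  rw [bv_eq, dif_pos (lt_card_availF hmono hb hi)]
  exact Finset.orderEmbOfFin_mem _ _ _

lemma le_bv (hmono : ∀ ⦃a b : ℕ⦄, a ≤ b → l b ≤ l a) (hb : ∀ i, i ≤ n → l i + i ≤ n)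
    {i : ℕ} (hi : i ≤ n) : l i ≤ (bv n l i : ℕ) := by
  rw [bv_eq, dif_pos (lt_card_availF hmono hb hi)]
  exact aux_le _ _ _

lemma below_iff (hmono : ∀ ⦃a b : ℕ⦄, a ≤ b → l b ≤ l a) (hb : ∀ i, i ≤ n → l i + i ≤ n)
    {i : ℕ} (hi : i ≤ n) (x : Fin (n + 1)) :
    (x ∈ availF n l i ∧ x < bv n l i) ↔ (x : ℕ) < l i := by
  classical
  have hlt := lt_card_availF hmono hb hi
  have hbv : bv n l i = ((availF n l i).orderEmbOfFin rfl) ⟨l i, hlt⟩ := by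
    rw [bv_eq, dif_pos hlt]
  constructor
  · rintro ⟨hx, hxlt⟩
    have hW : ((availF n l i).filter (fun y => y < bv n l i)).card = l i := by
      rw [hbv]
      exact aux_count _ _ _
    have hlin : l i < n + 1 := by have := hb i hi; omega
    set T : Finset (Fin (n + 1)) := Finset.Iio ⟨l i, hlin⟩ with hT
    have hTcard : T.card = l i := Fin.card_Iio _
    have hTsub : T ⊆ (availF n l i).filter (fun y => y < bv n l i) := by
      intro y hy
      have hyv : (y : ℕ) < l i := by
        simpa [hT, Finset.mem_Iio, Fin.lt_def] using hy
      refine Finset.mem_filter.mpr ⟨(main_inv hmono hb i (by omega)).2 hi y hyv, ?_⟩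
      have := le_bv hmono hb hi
      exact Fin.lt_def.mpr (by omega)
    have heq : T = (availF n l i).filter (fun y => y < bv n l i) :=
      Finset.eq_of_subset_of_card_le hTsub (by omega)
    have : x ∈ T := by rw [heq]; exact Finset.mem_filter.mpr ⟨hx, hxlt⟩
    simpa [hT, Finset.mem_Iio, Fin.lt_def] using this
  · intro hx
    refine ⟨(main_inv hmono hb i (by omega)).2 hi x hx, ?_⟩
    have := le_bv hmono hb hi
    exact Fin.lt_def.mpr (by omega)

lemma bv_injective (hmono : ∀ ⦃a b : ℕ⦄, a ≤ b → l b ≤ l a) (hb : ∀ i, i ≤ n → l i + i ≤ n) :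
    Function.Injective (fun i : Fin (n + 1) => bv n l (i : ℕ)) := by
  have key : ∀ i j : Fin (n + 1), (i : ℕ) < (j : ℕ) → bv n l (i : ℕ) ≠ bv n l (j : ℕ) := by
    intro i j hij h
    have hmemj := bv_mem_availF hmono hb (i := (j : ℕ)) (by omega)
    rw [availF, Finset.mem_sdiff] at hmemj
    exact hmemj.2 (Finset.mem_image.mpr ⟨(i : ℕ), Finset.mem_range.mpr hij, h⟩)
  intro i j h
  by_contra hne
  rcases Nat.lt_or_ge (i : ℕ) (j : ℕ) with hlt | hge
  · exact key i j hlt h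
  · have : (j : ℕ) < (i : ℕ) := by
      rcases Nat.lt_or_ge (j : ℕ) (i : ℕ) with h' | h'
      · exact h'
      · exact absurd (Fin.ext (by omega)) hne
    exact key j i this h.symm

end construction

section sigma
variable {n : ℕ} {l : ℕ → ℕ}

noncomputable def sigmaOf (n : ℕ) (l : ℕ → ℕ) (hmono : ∀ ⦃a b : ℕ⦄, a ≤ b → l b ≤ l a)
    (hb : ∀ i, i ≤ n → l i + i ≤ n) : Equiv.Perm (Fin (n + 1)) :=
  Equiv.ofBijective (fun i : Fin (n + 1) => bv n l (i : ℕ))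
    (Finite.injective_iff_bijective.mp (bv_injective hmono hb))

variable (hmono : ∀ ⦃a b : ℕ⦄, a ≤ b → l b ≤ l a) (hb : ∀ i, i ≤ n → l i + i ≤ n)

lemma sigmaOf_apply (i : Fin (n + 1)) : sigmaOf n l hmono hb i = bv n l (i : ℕ) := rfl

lemma sigmaOf_symm_lt (j : Fin (n + 1)) (i : Fin (n + 1)) :
    i < (sigmaOf n l hmono hb).symm j ↔ j ∉ usedF n l ((i : ℕ) + 1) := by
  set σ := sigmaOf n l hmono hb
  have happ : σ (σ.symm j) = j := σ.apply_symm_apply j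
  constructor
  · intro hlt hmem
    rw [usedF, Finset.mem_image] at hmem
    obtain ⟨k, hk, hbvk⟩ := hmem
    rw [Finset.mem_range] at hk
    have hkn : k < n + 1 := by have := i.isLt; omega
    have : σ ⟨k, hkn⟩ = j := hbvk
    have hs : σ.symm j = ⟨k, hkn⟩ := by
      rw [← this, Equiv.symm_apply_apply]
    rw [hs] at hlt
    rw [Fin.lt_def] at hlt
    simp only at hlt
    omega
  · intro hmem
    rw [Fin.lt_def]
    by_contra hle
    apply hmem
    rw [usedF, Finset.mem_image]
    exact ⟨((σ.symm j : Fin (n + 1)) : ℕ), Finset.mem_range.mpr (by omega), happ⟩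

lemma diagram_sigmaOf (i j : Fin (n + 1)) :
    (i, j) ∈ Diagram (sigmaOf n l hmono hb) ↔ (j : ℕ) < l (i : ℕ) := by
  have hin : (i : ℕ) ≤ n := by omega
  have husucc : usedF n l ((i : ℕ) + 1) = insert (bv n l (i : ℕ)) (usedF n l (i : ℕ)) := by
    rw [usedF, Finset.range_add_one, Finset.image_insert]; rfl
  rw [Diagram, Set.mem_setOf_eq]
  simp only [sigmaOf_apply]
  rw [sigmaOf_symm_lt]
  rw [← below_iff hmono hb hin j]
  constructor
  · rintro ⟨hjlt, hjmem⟩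
    rw [husucc, Finset.mem_insert] at hjmem
    push_neg at hjmem
    refine ⟨?_, hjlt⟩
    rw [availF, Finset.mem_sdiff]
    exact ⟨Finset.mem_univ _, hjmem.2⟩
  · rintro ⟨hjav, hjlt⟩
    refine ⟨hjlt, ?_⟩
    rw [husucc, Finset.mem_insert]
    rw [availF, Finset.mem_sdiff] at hjav
    push_neg
    exact ⟨Fin.ne_of_lt hjlt, hjav.2⟩

lemma ess_sigmaOf (i j : Fin (n + 1)) :
    (i, j) ∈ EssSet (sigmaOf n l hmono hb) ↔
      ((j : ℕ) + 1 = l (i : ℕ) ∧ ((i : ℕ) + 1 ≤ n → l ((i : ℕ) + 1) ≤ (j : ℕ))) := by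
  constructor
  · rintro ⟨hd, hsouth, heast⟩
    have hd' := (diagram_sigmaOf hmono hb i j).mp hd
    have hjn : (j : ℕ) + 1 < n + 1 := by
      have := hb (i : ℕ) (by omega); omega
    have he := heast ⟨(j : ℕ) + 1, hjn⟩ rfl
    rw [diagram_sigmaOf hmono hb] at he
    have he' : ¬ ((j : ℕ) + 1 < l (i : ℕ)) := he
    constructor
    · omega
    · intro hi1
      have hs := hsouth ⟨(i : ℕ) + 1, by omega⟩ rfl
      rw [diagram_sigmaOf hmono hb] at hs
      have hs' : ¬ ((j : ℕ) < l ((i : ℕ) + 1)) := hs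
      omega
  · rintro ⟨h1, h2⟩
    refine ⟨(diagram_sigmaOf hmono hb i j).mpr (by omega), ?_, ?_⟩
    · intro i' hi'
      have hi'' : (i' : ℕ) = (i : ℕ) + 1 := hi'
      rw [diagram_sigmaOf hmono hb]
      show ¬ ((j : ℕ) < l ((i' : ℕ)))
      rw [hi'']
      have hile : (i : ℕ) + 1 ≤ n := by have := i'.isLt; omega
      have := h2 hile
      omega
    · intro j' hj'
      have hj'' : (j' : ℕ) = (j : ℕ) + 1 := hj'
      rw [diagram_sigmaOf hmono hb]
      show ¬ ((j' : ℕ) < l ((i : ℕ)))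
      rw [hj'']
      omega

lemma rank_sigmaOf (i j : Fin (n + 1)) (h : (i, j) ∈ EssSet (sigmaOf n l hmono hb)) :
    rank (sigmaOf n l hmono hb) (i, j) = 0 := by
  have h1 := ((ess_sigmaOf hmono hb i j).mp h).1
  rw [rank, Finset.card_eq_zero, Finset.filter_eq_empty_iff]
  rintro k -
  rintro ⟨hki, hkv⟩
  rw [Fin.lt_def] at hki hkv
  have hki' : (k : ℕ) < (i : ℕ) := hki
  have hkv' : ((bv n l (k : ℕ) : Fin (n+1)) : ℕ) < (j : ℕ) := hkv
  have hlk : l (k : ℕ) ≤ (bv n l (k : ℕ) : ℕ) := le_bv hmono hb (by omega)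
  have : l (i : ℕ) ≤ l (k : ℕ) := hmono (by omega)
  omega

lemma avoids_sigmaOf : Avoids (sigmaOf n l hmono hb) pat132 := by
  rintro ⟨f, hf, hiff⟩
  set σ := sigmaOf n l hmono hb
  have h02 : σ (f 0) < σ (f 2) := (hiff 0 2).mp (by decide)
  have h21 : σ (f 2) < σ (f 1) := (hiff 2 1).mp (by decide)
  have h01 : f 0 < f 1 := hf (by decide)
  have h12 : f 1 < f 2 := hf (by decide)
  -- σ (f 2) is an available value at step (f 1), smaller than bv (f 1)
  have hmemav : σ (f 2) ∈ availF n l ((f 1 : ℕ)) := by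
    have h2av : bv n l ((f 2 : ℕ)) ∈ availF n l ((f 2 : ℕ)) :=
      bv_mem_availF hmono hb (by omega)
    rw [availF, Finset.mem_sdiff] at h2av ⊢
    refine ⟨Finset.mem_univ _, fun hmem => h2av.2 ?_⟩
    rw [usedF, Finset.mem_image] at hmem ⊢
    obtain ⟨k, hk, hkv⟩ := hmem
    rw [Finset.mem_range] at hk
    refine ⟨k, Finset.mem_range.mpr ?_, hkv⟩
    rw [Fin.lt_def] at h12
    omega
  have hkey : ((σ (f 2) : Fin (n + 1)) : ℕ) < l ((f 1 : ℕ)) :=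
    (below_iff hmono hb (by omega) _).mp ⟨hmemav, h21⟩
  have hl1 : l ((f 1 : ℕ)) ≤ l ((f 0 : ℕ)) := hmono (by rw [Fin.lt_def] at h01; omega)
  have hl0 : l ((f 0 : ℕ)) ≤ (bv n l ((f 0 : ℕ)) : ℕ) := le_bv hmono hb (by omega)
  rw [Fin.lt_def] at h02
  simp only [sigmaOf_apply, σ] at h02 hkey
  omega

end sigma

theorem exists_dominant (m : ℕ) (S : Set (Fin (m + 1) × Fin (m + 1)))
    (hstair : ∀ p ∈ S, (p.1 : ℕ) + (p.2 : ℕ) + 2 ≤ m + 1)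
    (hdom : ∀ p ∈ S, ∀ q ∈ S, (p.1 : ℕ) ≤ (q.1 : ℕ) → (p.2 : ℕ) ≤ (q.2 : ℕ) → p = q) :
    ∃ σ : Equiv.Perm (Fin (m + 1)), Avoids σ pat132 ∧ EssSet σ = S ∧
      ∀ p ∈ EssSet σ, rank σ p = 0 := by
  classical
  set SF : Finset (Fin (m + 1) × Fin (m + 1)) := Finset.univ.filter (· ∈ S) with hSF
  have hmemSF : ∀ p, p ∈ SF ↔ p ∈ S := by
    intro p; simp [hSF]
  set l : ℕ → ℕ := fun i => SF.sup (fun p => if i ≤ (p.1 : ℕ) then (p.2 : ℕ) + 1 else 0) with hl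
  have hmono : ∀ ⦃a b : ℕ⦄, a ≤ b → l b ≤ l a := by
    intro a b hab
    apply Finset.sup_le
    intro p hp
    by_cases h : b ≤ (p.1 : ℕ)
    · rw [if_pos h]
      have : (if a ≤ (p.1 : ℕ) then (p.2 : ℕ) + 1 else 0) = (p.2 : ℕ) + 1 := if_pos (by omega)
      calc (p.2 : ℕ) + 1 = _ := this.symm
        _ ≤ l a := Finset.le_sup (f := fun p => if a ≤ (p.1 : ℕ) then (p.2 : ℕ) + 1 else 0) hp
    · rw [if_neg h]; exact Nat.zero_le _
  have hb : ∀ i, i ≤ m → l i + i ≤ m := by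
    intro i hi
    have : l i ≤ m - i := by
      apply Finset.sup_le
      intro p hp
      have hpS := (hmemSF p).mp hp
      have := hstair p hpS
      by_cases h : i ≤ (p.1 : ℕ)
      · rw [if_pos h]; omega
      · rw [if_neg h]; omega
    omega
  have hlS : ∀ p ∈ S, l (p.1 : ℕ) = (p.2 : ℕ) + 1 ∧ ∀ i, (p.1 : ℕ) < i → l i ≤ (p.2 : ℕ) := by
    intro p hp
    constructor
    · apply le_antisymm
      · apply Finset.sup_le
        intro q hq
        have hqS := (hmemSF q).mp hq
        by_cases h : (p.1 : ℕ) ≤ (q.1 : ℕ)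
        · rw [if_pos h]
          by_contra hc
          have hc2 : (p.2 : ℕ) ≤ (q.2 : ℕ) := by omega
          have := hdom p hp q hqS h hc2
          rw [this] at hc
          omega
        · rw [if_neg h]; exact Nat.zero_le _
      · have h2 := Finset.le_sup (f := fun q => if (p.1 : ℕ) ≤ (q.1 : ℕ) then (q.2 : ℕ) + 1 else 0)
          ((hmemSF p).mpr hp)
        simp only [le_refl, if_true] at h2
        exact h2
    · intro i hi
      apply Finset.sup_le
      intro q hq
      have hqS := (hmemSF q).mp hq
      by_cases h : i ≤ (q.1 : ℕ)
      · rw [if_pos h]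
        by_contra hc
        have hc2 : (p.2 : ℕ) ≤ (q.2 : ℕ) := by omega
        have := hdom p hp q hqS (by omega) hc2
        rw [this] at hi
        omega
      · rw [if_neg h]; exact Nat.zero_le _
  have hatt : ∀ i, l i ≠ 0 → ∃ p ∈ S, i ≤ (p.1 : ℕ) ∧ (p.2 : ℕ) + 1 = l i := by
    intro i hne
    have hSFne : SF.Nonempty := by
      rcases Finset.eq_empty_or_nonempty SF with h | h
      · exact absurd (by simp [hl, h]) hne
      · exact h
    obtain ⟨p, hp, hpe⟩ := Finset.exists_mem_eq_sup SF hSFne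
      (fun p => if i ≤ (p.1 : ℕ) then (p.2 : ℕ) + 1 else 0)
    have hple : (if i ≤ (p.1 : ℕ) then (p.2 : ℕ) + 1 else 0) = l i := hpe.symm
    by_cases h : i ≤ (p.1 : ℕ)
    · rw [if_pos h] at hple
      exact ⟨p, (hmemSF p).mp hp, h, hple⟩
    · rw [if_neg h] at hple
      exact absurd hple.symm hne
  refine ⟨sigmaOf m l hmono hb, avoids_sigmaOf hmono hb, ?_, ?_⟩
  · ext ⟨i, j⟩
    rw [ess_sigmaOf hmono hb i j]
    constructor
    · rintro ⟨h1, h2⟩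
      obtain ⟨p, hpS, hip, hpv⟩ := hatt (i : ℕ) (by omega)
      have hj2 : p.2 = j := Fin.ext (by omega)
      rcases Nat.eq_or_lt_of_le hip with heq | hlt
      · have hi1 : p.1 = i := Fin.ext heq.symm
        have : p = (i, j) := by
          rw [Prod.ext_iff]; exact ⟨hi1, hj2⟩
        rw [← this]; exact hpS
      · exfalso
        have hi1m : (i : ℕ) + 1 ≤ m := by have := p.1.isLt; omega
        have hges := h2 hi1m
        have : (if (i : ℕ) + 1 ≤ (p.1 : ℕ) then (p.2 : ℕ) + 1 else 0) ≤ l ((i : ℕ) + 1) :=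
          Finset.le_sup (f := fun p => if (i : ℕ) + 1 ≤ (p.1 : ℕ) then (p.2 : ℕ) + 1 else 0)
            ((hmemSF p).mpr hpS)
        rw [if_pos (by omega)] at this
        omega
    · intro hij
      obtain ⟨heq, hgt⟩ := hlS (i, j) hij
      exact ⟨heq.symm, fun _ => hgt _ (Nat.lt_succ_self _)⟩
  · rintro ⟨i, j⟩ hp
    exact rank_sigmaOf hmono hb i j hp

section estar
variable {n : ℕ} (π : Equiv.Perm (Fin n))

lemma diag_mem {i j : Fin n} (hd : (i, j) ∈ Diagram π) :
    (j : ℕ) < (π i : ℕ) ∧ (i : ℕ) < ((π.symm j : Fin n) : ℕ) :=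
  hd

lemma diag_notMem {i j : Fin n} (hd : (i, j) ∉ Diagram π) :
    ¬ ((j : ℕ) < (π i : ℕ) ∧ (i : ℕ) < ((π.symm j : Fin n) : ℕ)) :=
  hd

lemma rank_eq {i j : Fin n} :
    rank π (i, j) = (Finset.univ.filter fun k : Fin n => (k : ℕ) < (i : ℕ) ∧
      ((π k : Fin n) : ℕ) < (j : ℕ)).card := rfl

lemma symm_val {j : Fin n} {k : Fin n} (h : (π k : ℕ) = (j : ℕ)) :
    ((π.symm j : Fin n) : ℕ) = (k : ℕ) := by
  have : π k = j := Fin.ext h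
  rw [← this, Equiv.symm_apply_apply]

lemma rank0_full {i j : Fin n} (hd : (i, j) ∈ Diagram π) (hr : rank π (i, j) = 0)
    {k : Fin n} (hk : (k : ℕ) ≤ (i : ℕ)) : (j : ℕ) < (π k : ℕ) := by
  obtain ⟨hd1, hd2⟩ := diag_mem π hd
  rcases Nat.eq_or_lt_of_le hk with heq | hlt
  · have : k = i := Fin.ext heq
    rw [this]; exact hd1
  · rw [rank_eq, Finset.card_eq_zero, Finset.filter_eq_empty_iff] at hr
    have h1 : ¬ ((k : ℕ) < (i : ℕ) ∧ (π k : ℕ) < (j : ℕ)) := hr (Finset.mem_univ k)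
    have h2 : (π k : ℕ) ≠ (j : ℕ) := by
      intro h
      have := symm_val π h
      omega
    omega

lemma rank1_wit {i j : Fin n} (hd : (i, j) ∈ Diagram π) (hr : rank π (i, j) = 1) :
    ∃ k0 : Fin n, (k0 : ℕ) < (i : ℕ) ∧ (π k0 : ℕ) < (j : ℕ) ∧
      ∀ k : Fin n, (k : ℕ) ≤ (i : ℕ) → k ≠ k0 → (j : ℕ) < (π k : ℕ) := by
  obtain ⟨hd1, hd2⟩ := diag_mem π hd
  rw [rank_eq, Finset.card_eq_one] at hr
  obtain ⟨k0, hk0⟩ := hr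
  have hk0mem : k0 ∈ Finset.univ.filter fun k : Fin n => (k : ℕ) < (i : ℕ) ∧
      ((π k : Fin n) : ℕ) < (j : ℕ) := by
    rw [hk0]; exact Finset.mem_singleton_self _
  rw [Finset.mem_filter] at hk0mem
  refine ⟨k0, hk0mem.2.1, hk0mem.2.2, ?_⟩
  intro k hki hkne
  rcases Nat.eq_or_lt_of_le hki with heq | hlt
  · have : k = i := Fin.ext heq
    rw [this]; exact hd1
  · have hnotmem : k ∉ Finset.univ.filter fun k : Fin n => (k : ℕ) < (i : ℕ) ∧
        ((π k : Fin n) : ℕ) < (j : ℕ) := by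
      rw [hk0, Finset.mem_singleton]; exact hkne
    rw [Finset.mem_filter] at hnotmem
    push_neg at hnotmem
    have h2 := hnotmem (Finset.mem_univ k) hlt
    have h3 : (π k : ℕ) ≠ (j : ℕ) := by
      intro h
      have := symm_val π h
      omega
    omega

lemma ess_south {i j : Fin n} (h : (i, j) ∈ EssSet π) :
    ∃ i' : Fin n, (i' : ℕ) = (i : ℕ) + 1 ∧ (π i' : ℕ) ≤ (j : ℕ) := by
  obtain ⟨hd, hsouth, -⟩ := h
  obtain ⟨hd1, hd2⟩ := diag_mem π hd
  have hsn := (π.symm j).isLt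
  have hi1 : (i : ℕ) + 1 < n := by omega
  set i₂ : Fin n := ⟨(i : ℕ) + 1, hi1⟩ with hi₂
  refine ⟨i₂, rfl, ?_⟩
  have hnd : ¬ ((j : ℕ) < (π i₂ : ℕ) ∧ (i₂ : ℕ) < ((π.symm j : Fin n) : ℕ)) :=
    hsouth i₂ rfl
  by_contra hcon
  push_neg at hcon
  have hi₂v : (i₂ : ℕ) = (i : ℕ) + 1 := rfl
  have hcase : ¬ ((i₂ : ℕ) < ((π.symm j : Fin n) : ℕ)) := fun hx => hnd ⟨hcon, hx⟩
  have heq : ((π.symm j : Fin n) : ℕ) = (i₂ : ℕ) := by omega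
  have : π i₂ = j := by
    have h9 : π.symm j = i₂ := Fin.ext heq
    rw [← h9, Equiv.apply_symm_apply]
  have : (π i₂ : ℕ) = (j : ℕ) := by rw [this]
  omega

lemma ess_east {i j : Fin n} (h : (i, j) ∈ EssSet π) :
    ∃ k : Fin n, (k : ℕ) ≤ (i : ℕ) ∧ (π k : ℕ) = (j : ℕ) + 1 := by
  obtain ⟨hd, -, heast⟩ := h
  obtain ⟨hd1, hd2⟩ := diag_mem π hd
  have hpn := (π i).isLt
  have hj1 : (j : ℕ) + 1 < n := by omega
  set j₂ : Fin n := ⟨(j : ℕ) + 1, hj1⟩ with hj₂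
  have hnd : ¬ ((j₂ : ℕ) < (π i : ℕ) ∧ (i : ℕ) < ((π.symm j₂ : Fin n) : ℕ)) :=
    heast j₂ rfl
  have hj₂v : (j₂ : ℕ) = (j : ℕ) + 1 := rfl
  by_cases hcase : (j₂ : ℕ) < (π i : ℕ)
  · have h5 : ¬ ((i : ℕ) < ((π.symm j₂ : Fin n) : ℕ)) := fun hx => hnd ⟨hcase, hx⟩
    refine ⟨π.symm j₂, by omega, ?_⟩
    have : π (π.symm j₂) = j₂ := Equiv.apply_symm_apply _ _
    have : ((π (π.symm j₂) : Fin n) : ℕ) = (j₂ : ℕ) := by rw [this]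
    omega
  · exact ⟨i, le_refl _, by omega⟩

lemma rank_two {i' j' : Fin n} (hr : rank π (i', j') = 1) {k1 k2 : Fin n} (hne : k1 ≠ k2)
    (h1 : (k1 : ℕ) < (i' : ℕ)) (h1v : (π k1 : ℕ) < (j' : ℕ))
    (h2 : (k2 : ℕ) < (i' : ℕ)) (h2v : (π k2 : ℕ) < (j' : ℕ)) :
    False := by
  classical
  have hsub : ({k1, k2} : Finset (Fin n)) ⊆
      Finset.univ.filter fun k : Fin n => (k : ℕ) < (i' : ℕ) ∧ ((π k : Fin n) : ℕ) < (j' : ℕ) := by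
    intro k hk
    rw [Finset.mem_insert, Finset.mem_singleton] at hk
    rw [Finset.mem_filter]
    rcases hk with rfl | rfl
    · exact ⟨Finset.mem_univ _, h1, h1v⟩
    · exact ⟨Finset.mem_univ _, h2, h2v⟩
  have hcard := Finset.card_le_card hsub
  rw [Finset.card_pair hne] at hcard
  rw [rank_eq] at hr
  omega

lemma estar_stair : ∀ p ∈ Estar π, (p.1 : ℕ) + (p.2 : ℕ) + 2 ≤ n := by
  rintro ⟨a, b⟩ hp
  show (a : ℕ) + (b : ℕ) + 2 ≤ n
  rcases hp with ⟨hess, hr⟩ | ⟨⟨i, j⟩, hess, hr, hi1, hj1⟩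
  · have hd : (a, b) ∈ Diagram π := hess.1
    have hsub : (Finset.Iic a).image π ⊆ Finset.Ioi b := by
      intro y hy
      rw [Finset.mem_image] at hy
      obtain ⟨k, hk, rfl⟩ := hy
      rw [Finset.mem_Iic] at hk
      exact Finset.mem_Ioi.mpr (rank0_full π hd hr (Fin.le_def.mp hk))
    have hcard := Finset.card_le_card hsub
    rw [Finset.card_image_of_injective _ π.injective, Fin.card_Iic, Fin.card_Ioi] at hcard
    have hb2 := b.isLt
    have ha2 := a.isLt
    omega
  · have hi1' : (a : ℕ) + 1 = (i : ℕ) := hi1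
    have hj1' : (b : ℕ) + 1 = (j : ℕ) := hj1
    have hd : (i, j) ∈ Diagram π := hess.1
    obtain ⟨k0, hk0i, hk0v, hother⟩ := rank1_wit π hd hr
    have hsub : ((Finset.Iic i).erase k0).image π ⊆ Finset.Ioi j := by
      intro y hy
      rw [Finset.mem_image] at hy
      obtain ⟨k, hk, rfl⟩ := hy
      rw [Finset.mem_erase, Finset.mem_Iic] at hk
      exact Finset.mem_Ioi.mpr (hother k (Fin.le_def.mp hk.2) hk.1)
    have hcard := Finset.card_le_card hsub
    have hk0mem : k0 ∈ Finset.Iic i := Finset.mem_Iic.mpr (Fin.le_def.mpr (by omega))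
    rw [Finset.card_image_of_injective _ π.injective, Finset.card_erase_of_mem hk0mem,
      Fin.card_Iic, Fin.card_Ioi] at hcard
    have hj2 := j.isLt
    have hi2 := i.isLt
    omega

lemma estar_dom : ∀ p ∈ Estar π, ∀ q ∈ Estar π,
    (p.1 : ℕ) ≤ (q.1 : ℕ) → (p.2 : ℕ) ≤ (q.2 : ℕ) → p = q := by
  rintro ⟨a, b⟩ hp ⟨c, d⟩ hq h1 h2
  have h1' : (a : ℕ) ≤ (c : ℕ) := h1
  have h2' : (b : ℕ) ≤ (d : ℕ) := h2
  clear h1 h2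
  rcases hp with ⟨hpe, hp0⟩ | ⟨⟨i, j⟩, hpe, hp1, hpi, hpj⟩ <;>
    rcases hq with ⟨hqe, hq0⟩ | ⟨⟨i', j'⟩, hqe, hq1, hqi, hqj⟩
  · -- case (0,0)
    have hqd : (c, d) ∈ Diagram π := hqe.1
    by_cases hii : (a : ℕ) = (c : ℕ)
    · have hac : a = c := Fin.ext hii
      subst hac
      by_cases hjj : (b : ℕ) = (d : ℕ)
      · rw [Fin.ext hjj]
      · exfalso
        obtain ⟨k, hki, hkv⟩ := ess_east π hpe
        have := rank0_full π hqd hq0 hki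
        omega
    · exfalso
      obtain ⟨i₂, hi₂, hvi₂⟩ := ess_south π hpe
      have := rank0_full π hqd hq0 (show (i₂ : ℕ) ≤ (c : ℕ) by omega)
      omega
  · -- case (0,1)
    exfalso
    have hqi' : (c : ℕ) + 1 = (i' : ℕ) := hqi
    have hqj' : (d : ℕ) + 1 = (j' : ℕ) := hqj
    obtain ⟨hqd1, hqd2⟩ := diag_mem π hqe.1
    obtain ⟨i₂, hi₂, hvi₂⟩ := ess_south π hpe
    by_cases hcase : (a : ℕ) + 1 = (i' : ℕ)
    · have : i₂ = i' := Fin.ext (by omega)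
      rw [this] at hvi₂
      omega
    · obtain ⟨k, hki, hkv⟩ := ess_east π hpe
      by_cases hjcase : (b : ℕ) + 1 = (j' : ℕ)
      · have := symm_val π (show (π k : ℕ) = (j' : ℕ) by omega)
        omega
      · have hkne : k ≠ i₂ := by
          intro h
          rw [h] at hki
          omega
        exact rank_two π hq1 hkne (by omega) (by omega) (by omega) (by omega)
  · -- case (1,0)
    exfalso
    have hpi' : (a : ℕ) + 1 = (i : ℕ) := hpi
    have hpj' : (b : ℕ) + 1 = (j : ℕ) := hpj
    have hqd : (c, d) ∈ Diagram π := hqe.1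
    obtain ⟨k0, hk0i, hk0v, -⟩ := rank1_wit π hpe.1 hp1
    have := rank0_full π hqd hq0 (show (k0 : ℕ) ≤ (c : ℕ) by omega)
    omega
  · -- case (1,1)
    have hpi' : (a : ℕ) + 1 = (i : ℕ) := hpi
    have hpj' : (b : ℕ) + 1 = (j : ℕ) := hpj
    have hqi' : (c : ℕ) + 1 = (i' : ℕ) := hqi
    have hqj' : (d : ℕ) + 1 = (j' : ℕ) := hqj
    obtain ⟨hqd1, hqd2⟩ := diag_mem π hqe.1
    obtain ⟨k0, hk0i, hk0v, -⟩ := rank1_wit π hpe.1 hp1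
    suffices hsuff : (i : ℕ) = (i' : ℕ) ∧ (j : ℕ) = (j' : ℕ) by
      have e1 : a = c := Fin.ext (by omega)
      have e2 : b = d := Fin.ext (by omega)
      rw [e1, e2]
    by_cases hii : (i : ℕ) = (i' : ℕ)
    · refine ⟨hii, ?_⟩
      by_contra hjj
      have hjlt : (j : ℕ) < (j' : ℕ) := by omega
      obtain ⟨k, hki, hkv⟩ := ess_east π hpe
      by_cases hjcase : (j : ℕ) + 1 = (j' : ℕ)
      · have := symm_val π (show (π k : ℕ) = (j' : ℕ) by omega)
        omega
      · have hkne : (k : ℕ) ≠ (i : ℕ) := by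
          intro h
          have hkeq : k = i := Fin.ext h
          rw [hkeq] at hkv
          have hieq : i = i' := Fin.ext hii
          rw [hieq] at hkv
          omega
        have hk0k : k0 ≠ k := by
          intro h
          rw [h] at hk0v
          omega
        exact rank_two π hq1 hk0k (by omega) (by omega) (by omega) (by omega)
    · exfalso
      have hilt : (i : ℕ) < (i' : ℕ) := by omega
      obtain ⟨i₂, hi₂, hvi₂⟩ := ess_south π hpe
      by_cases hcase : (i : ℕ) + 1 = (i' : ℕ)
      · have : i₂ = i' := Fin.ext (by omega)
        rw [this] at hvi₂
        omega
      · have hvi₂' : (π i₂ : ℕ) < (j' : ℕ) := by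
          rcases Nat.lt_or_ge (π i₂ : ℕ) (j' : ℕ) with h | h
          · exact h
          · exfalso
            have := symm_val π (show (π i₂ : ℕ) = (j' : ℕ) by omega)
            omega
        have hk0ne : k0 ≠ i₂ := by
          intro h
          rw [h] at hk0i
          omega
        exact rank_two π hq1 hk0ne (by omega) (by omega) (by omega) (by omega)

end estar

/-- For a Schröder permutation `π`, the set `E*(π)` is the essential set of a permutation;
in particular there is a 132-avoiding permutation `σ ∈ S_n` with `E(σ) = E*(π)`, all of
whose essential-set elements have rank 0. -/
theorem estar_is_essential_set (n : ℕ) (π : Equiv.Perm (Fin n)) (hπ : Schroeder π) :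
    ∃ σ : Equiv.Perm (Fin n), Avoids σ pat132 ∧ EssSet σ = Estar π ∧
      ∀ p ∈ EssSet σ, rank σ p = 0 := by
  cases n with
  | zero =>
    refine ⟨1, ?_, ?_, ?_⟩
    · rintro ⟨f, -, -⟩
      exact (f 0).elim0
    · ext p
      exact p.1.elim0
    · intro p _
      exact p.1.elim0
  | succ m =>
    exact exists_dominant m (Estar π) (estar_stair π) (estar_dom π)
end

section
/- Let σ ∈ S_n be a 132-avoiding permutation and let s be the number of elements (i,j) ∈ E(σ) satisfying i + j < n. Then there exist exactly 2^s Schröder permutations π ∈ S_n with E*(π) = E(σ), i.e., exactly 2^s Schröder permutations π ∈ S_n such that {(i,j) ∈ E(π) : ρ(i,j) = 0} ∪ {(i−1,j−1) : (i,j) ∈ E(π), ρ(i,j) = 1} = E(σ). -/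
namespace Schro

variable {n : ℕ}

/-- `π` as a function `ℕ → ℕ` (identity outside `[0,n)`). -/
def fn (π : Equiv.Perm (Fin n)) (i : ℕ) : ℕ :=
  if h : i < n then (π ⟨i, h⟩ : ℕ) else i

lemma fn_lt (π : Equiv.Perm (Fin n)) {i : ℕ} (h : i < n) : fn π i < n := by
  simp [fn, h]

lemma fn_lt_iff (π : Equiv.Perm (Fin n)) (i : ℕ) : fn π i < n ↔ i < n := by
  by_cases h : i < n
  · simp [fn, h]
  · simp [fn, h]

lemma fn_inv_fn (π : Equiv.Perm (Fin n)) (i : ℕ) : fn π⁻¹ (fn π i) = i := by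
  by_cases h : i < n
  · have h2 : fn π i < n := fn_lt π h
    have h2' : (π ⟨i, h⟩ : ℕ) < n := (π ⟨i, h⟩).isLt
    simp only [fn, dif_pos h, dif_pos h2']
    have : (⟨(π ⟨i, h⟩ : ℕ), h2'⟩ : Fin n) = π ⟨i, h⟩ := rfl
    rw [this]
    simp
  · simp [fn, h]

lemma fn_fn_inv (π : Equiv.Perm (Fin n)) (j : ℕ) : fn π (fn π⁻¹ j) = j := by
  simpa using fn_inv_fn π⁻¹ j

lemma fn_injective (π : Equiv.Perm (Fin n)) : Function.Injective (fn π) := by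
  intro a b h
  have := congrArg (fn π⁻¹) h
  rwa [fn_inv_fn, fn_inv_fn] at this

lemma fn_apply (π : Equiv.Perm (Fin n)) (i : Fin n) : fn π i = π i := by
  simp [fn, i.isLt]

/-- Diagram cell at natural number coordinates. -/
def cell (π : Equiv.Perm (Fin n)) (i j : ℕ) : Prop :=
  i < n ∧ j < n ∧ j < fn π i ∧ i < fn π⁻¹ j

/-- rank at natural number coordinates. -/
def rk (π : Equiv.Perm (Fin n)) (i j : ℕ) : ℕ :=
  ((Finset.range i).filter (fun k => fn π k < j)).card

/-- essential cell at natural number coordinates. -/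
def ess (π : Equiv.Perm (Fin n)) (i j : ℕ) : Prop :=
  cell π i j ∧ ¬ cell π (i+1) j ∧ ¬ cell π i (j+1)

lemma cell_iff (π : Equiv.Perm (Fin n)) (p : Fin n × Fin n) :
    p ∈ Diagram π ↔ cell π p.1 p.2 := by
  obtain ⟨i, j⟩ := p
  simp only [Diagram, Set.mem_setOf_eq, cell]
  have h1 : fn π (i : ℕ) = π i := fn_apply π i
  have h2 : fn π⁻¹ (j : ℕ) = π⁻¹ j := fn_apply π⁻¹ j
  rw [h1, h2]
  constructor
  · rintro ⟨ha, hb⟩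
    exact ⟨i.isLt, j.isLt, by exact_mod_cast ha, by exact_mod_cast hb⟩
  · rintro ⟨-, -, ha, hb⟩
    constructor
    · exact_mod_cast ha
    · show (i : Fin n) < π.symm j
      exact_mod_cast hb

lemma not_cell_of_big_i (π : Equiv.Perm (Fin n)) {i j : ℕ} (h : ¬ i < n) : ¬ cell π i j :=
  fun hc => h hc.1

lemma ess_iff (π : Equiv.Perm (Fin n)) (p : Fin n × Fin n) :
    p ∈ EssSet π ↔ ess π p.1 p.2 := by
  obtain ⟨i, j⟩ := p
  simp only [EssSet, Set.mem_setOf_eq, ess, cell_iff]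
  constructor
  · rintro ⟨h1, h2, h3⟩
    refine ⟨h1, ?_, ?_⟩
    · intro hc
      have hin : ((i : ℕ) + 1) < n := hc.1
      have := h2 ⟨(i : ℕ) + 1, hin⟩ (by simp)
      simp only [Fin.val_mk] at this
      exact this hc
    · intro hc
      have hjn : ((j : ℕ) + 1) < n := hc.2.1
      have := h3 ⟨(j : ℕ) + 1, hjn⟩ (by simp)
      simp only [Fin.val_mk] at this
      exact this hc
  · rintro ⟨h1, h2, h3⟩
    refine ⟨h1, ?_, ?_⟩
    · intro i' hi' hc
      rw [hi'] at hc
      exact h2 hc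
    · intro j' hj' hc
      rw [hj'] at hc
      exact h3 hc

lemma rank_eq_rk (π : Equiv.Perm (Fin n)) (p : Fin n × Fin n) :
    rank π p = rk π p.1 p.2 := by
  obtain ⟨i, j⟩ := p
  unfold rank rk
  apply Finset.card_bij (fun (k : Fin n) _ => (k : ℕ))
  · intro a ha
    simp only [Finset.mem_filter, Finset.mem_univ, true_and] at ha
    simp only [Finset.mem_filter, Finset.mem_range]
    exact ⟨by exact_mod_cast ha.1, by rw [fn_apply]; exact_mod_cast ha.2⟩
  · intro a _ b _ h
    exact Fin.val_injective h
  · intro b hb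
    simp only [Finset.mem_filter, Finset.mem_range] at hb
    have hbn : b < n := lt_trans hb.1 i.isLt
    refine ⟨⟨b, hbn⟩, ?_, rfl⟩
    simp only [Finset.mem_filter, Finset.mem_univ, true_and]
    constructor
    · exact_mod_cast hb.1
    · have := hb.2; rw [fn_apply π ⟨b, hbn⟩] at this; exact_mod_cast this

end Schro

namespace Schro

variable {n : ℕ} {π : Equiv.Perm (Fin n)}

lemma rk_mono {i j i' j' : ℕ} (hi : i' ≤ i) (hj : j' ≤ j) :
    rk π i' j' ≤ rk π i j := by
  apply Finset.card_le_card
  intro k hk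
  simp only [Finset.mem_filter, Finset.mem_range] at *
  exact ⟨lt_of_lt_of_le hk.1 hi, lt_of_lt_of_le hk.2 hj⟩

lemma rk_eq_zero_iff {i j : ℕ} : rk π i j = 0 ↔ ∀ k < i, ¬ fn π k < j := by
  unfold rk
  rw [Finset.card_eq_zero, Finset.filter_eq_empty_iff]
  simp

lemma rk_one_witness {i j : ℕ} (h : rk π i j = 1) :
    ∃ k0, k0 < i ∧ fn π k0 < j ∧ ∀ k < i, fn π k < j → k = k0 := by
  unfold rk at h
  rw [Finset.card_eq_one] at h
  obtain ⟨a, ha⟩ := h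
  have haa : a ∈ (Finset.range i).filter (fun k => fn π k < j) := by rw [ha]; simp
  simp only [Finset.mem_filter, Finset.mem_range] at haa
  refine ⟨a, haa.1, haa.2, ?_⟩
  intro k hk hk2
  have : k ∈ (Finset.range i).filter (fun k => fn π k < j) := by
    simp only [Finset.mem_filter, Finset.mem_range]; exact ⟨hk, hk2⟩
  rw [ha] at this; simpa using this

lemma rk_succ_i {i j : ℕ} :
    rk π (i+1) j = rk π i j + (if fn π i < j then 1 else 0) := by
  unfold rk
  rw [Finset.range_add_one, Finset.filter_insert]
  split
  · rw [Finset.card_insert_of_notMem (by simp)]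
  · simp

lemma rk_succ_j {i j : ℕ} (hinv : i ≤ fn π⁻¹ j) :
    rk π i (j+1) = rk π i j := by
  unfold rk
  congr 1
  apply Finset.filter_congr
  intro k hk
  simp only [Finset.mem_range] at hk
  simp only [Nat.lt_succ_iff]
  constructor
  · intro h
    rcases lt_or_eq_of_le h with h' | h'
    · exact h'
    · exfalso
      have : k = fn π⁻¹ j := by rw [← h', fn_inv_fn]
      omega
  · intro h; omega

lemma rk_down {i j : ℕ} (hc : cell π i j) : rk π (i+1) j = rk π i j := by
  have := hc.2.2.1
  rw [rk_succ_i, if_neg (by omega)]; omega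

lemma rk_right {i j : ℕ} (hc : cell π i j) : rk π i (j+1) = rk π i j :=
  rk_succ_j (le_of_lt hc.2.2.2)

/-- every diagram cell is dominated by an essential cell with the same rank. -/
lemma exists_ess_ge {i j : ℕ} (hc : cell π i j) :
    ∃ a b, i ≤ a ∧ j ≤ b ∧ ess π a b ∧ rk π a b = rk π i j := by
  have key : ∀ m i j, 2*n ≤ i + j + m → cell π i j →
      ∃ a b, i ≤ a ∧ j ≤ b ∧ ess π a b ∧ rk π a b = rk π i j := by
    intro m
    induction m with
    | zero => intro i j hm hc; exfalso; have := hc.1; have := hc.2.1; omega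
    | succ m ih =>
      intro i j hm hc
      by_cases h1 : cell π (i+1) j
      · obtain ⟨a, b, ha, hb, he, hr⟩ := ih (i+1) j (by omega) h1
        exact ⟨a, b, by omega, hb, he, by rw [hr, rk_down hc]⟩
      · by_cases h2 : cell π i (j+1)
        · obtain ⟨a, b, ha, hb, he, hr⟩ := ih i (j+1) (by omega) h2
          exact ⟨a, b, ha, by omega, he, by rw [hr, rk_right hc]⟩
        · exact ⟨i, j, le_refl _, le_refl _, ⟨hc, h1, h2⟩, rfl⟩
  exact key (2*n) i j (by omega) hc

/-- rank-0 cells are northwest-closed. -/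
lemma rank0_nw {i j i' j' : ℕ} (hc : cell π i j) (hr : rk π i j = 0)
    (hi : i' ≤ i) (hj : j' ≤ j) : cell π i' j' ∧ rk π i' j' = 0 := by
  obtain ⟨hin, hjn, hfi, hfj⟩ := hc
  rw [rk_eq_zero_iff] at hr
  constructor
  · refine ⟨by omega, by omega, ?_, ?_⟩
    · -- j' < fn π i'
      rcases lt_or_eq_of_le hi with h | h
      · have h1 : ¬ fn π i' < j := hr i' h
        have h2 : fn π i' ≠ j := by
          intro he
          have : i' = fn π⁻¹ j := by rw [← he, fn_inv_fn]
          omega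
        omega
      · subst h; omega
    · -- i' < fn π⁻¹ j'
      rcases lt_or_eq_of_le hj with h | h
      · have h1 : ¬ fn π⁻¹ j' < i := by
          intro hlt
          have := hr (fn π⁻¹ j') hlt
          rw [fn_fn_inv] at this
          omega
        have h2 : fn π⁻¹ j' ≠ i := by
          intro he
          have : j' = fn π i := by rw [← he, fn_fn_inv]
          omega
        omega
      · subst h; omega
  · rw [rk_eq_zero_iff]
    intro k hk hlt
    exact hr k (by omega) (by omega)

/-- bound: a diagram cell `(i,j)` satisfies `i + j + 2 ≤ n + rank`. -/
lemma cell_sum_bound {i j : ℕ} (hc : cell π i j) : i + j + 2 ≤ n + rk π i j := by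
  obtain ⟨hin, hjn, hfi, hfj⟩ := hc
  -- values `v < j` with `i < fn π⁻¹ v`, mapped into positions in `(i, n) \ {fn π⁻¹ j}`
  classical
  set V := (Finset.range j).filter (fun v => i < fn π⁻¹ v) with hV
  set W := (Finset.range j).filter (fun v => ¬ i < fn π⁻¹ v) with hW
  have hsplit : V.card + W.card = j := by
    rw [hV, hW, Finset.card_filter_add_card_filter_not]
    · simp
  have hWrk : W.card = rk π i j := by
    unfold rk
    apply Finset.card_bij (fun v _ => fn π⁻¹ v)
    · intro v hv
      simp only [hW, Finset.mem_filter, Finset.mem_range, not_lt] at hv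
      simp only [Finset.mem_filter, Finset.mem_range]
      refine ⟨?_, by rw [fn_fn_inv]; exact hv.1⟩
      rcases lt_or_eq_of_le hv.2 with h | h
      · exact h
      · exfalso
        have : v = fn π i := by rw [← h, fn_fn_inv]
        omega
    · intro a _ b _ h
      have := congrArg (fn π) h
      rwa [fn_fn_inv, fn_fn_inv] at this
    · intro k hk
      simp only [Finset.mem_filter, Finset.mem_range] at hk
      refine ⟨fn π k, ?_, by rw [fn_inv_fn]⟩
      simp only [hW, Finset.mem_filter, Finset.mem_range, not_lt]
      rw [fn_inv_fn]
      exact ⟨hk.2, le_of_lt hk.1⟩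
  have hVbound : V.card ≤ n - i - 2 := by
    have hsub : ∀ v ∈ V, fn π⁻¹ v ∈ ((Finset.Ioo i n).erase (fn π⁻¹ j)) := by
      intro v hv
      simp only [hV, Finset.mem_filter, Finset.mem_range] at hv
      simp only [Finset.mem_erase, Finset.mem_Ioo]
      refine ⟨?_, hv.2, ?_⟩
      · intro he
        have := congrArg (fn π) he
        rw [fn_fn_inv, fn_fn_inv] at this
        omega
      · rw [fn_lt_iff]; omega
    have hinj : ∀ a ∈ V, ∀ b ∈ V, fn π⁻¹ a = fn π⁻¹ b → a = b := by
      intro a _ b _ h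
      have := congrArg (fn π) h
      rwa [fn_fn_inv, fn_fn_inv] at this
    have := Finset.card_le_card_of_injOn (fun v => fn π⁻¹ v) hsub hinj
    have hcard : ((Finset.Ioo i n).erase (fn π⁻¹ j)).card = n - i - 2 := by
      rw [Finset.card_erase_of_mem]
      · rw [Nat.card_Ioo]; omega
      · simp only [Finset.mem_Ioo]
        exact ⟨hfj, by rw [fn_lt_iff]; omega⟩
    omega
  -- j = V.card + W.card ≤ (n - i - 2) + rk
  have hln : fn π⁻¹ j < n := fn_lt π⁻¹ hjn
  omega

/-- the diagram determines the permutation. -/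
lemma cell_ext {π' : Equiv.Perm (Fin n)} (h : ∀ i j, cell π i j ↔ cell π' i j) :
    π = π' := by
  suffices hf : ∀ i, i < n → fn π i = fn π' i by
    ext x
    have := hf x x.isLt
    rw [fn_apply, fn_apply] at this
    exact_mod_cast this
  intro i
  induction i using Nat.strong_induction_on with
  | _ i ih =>
    intro hin
    by_contra hne
    -- wlog fn π i < fn π' i
    have key : ∀ (σ σ' : Equiv.Perm (Fin n)), (∀ a b, cell σ a b ↔ cell σ' a b) →
        (∀ l, l < i → fn σ l = fn σ' l) → fn σ i < fn σ' i → False := by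
      intro σ σ' hcc hagree hlt
      have hv : fn σ i < n := fn_lt σ hin
      -- (i, fn σ i) is a cell of σ' but not of σ
      have hcell' : cell σ' i (fn σ i) := by
        refine ⟨hin, hv, hlt, ?_⟩
        -- i < fn σ'⁻¹ (fn σ i)
        set l := fn σ'⁻¹ (fn σ i) with hl
        have hfl : fn σ' l = fn σ i := by rw [hl, fn_fn_inv]
        rcases lt_trichotomy l i with h | h | h
        · exfalso
          have := hagree l h
          rw [hfl] at this
          have := fn_injective σ this.symm
          omega
        · exfalso
          rw [h] at hfl
          omega
        · exact h
      have hncell : ¬ cell σ i (fn σ i) := by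
        intro hc
        exact absurd hc.2.2.1 (lt_irrefl _)
      exact hncell ((hcc i (fn σ i)).mpr hcell')
    rcases lt_or_gt_of_ne hne with hlt | hlt
    · exact key π π' h (fun l hl => ih l hl (lt_trans hl hin)) hlt
    · exact key π' π (fun a b => (h a b).symm)
        (fun l hl => (ih l hl (lt_trans hl hin)).symm) hlt

end Schro

namespace Schro

variable {n : ℕ} {π : Equiv.Perm (Fin n)}

lemma val_apply_mk {i : ℕ} (h : i < n) : ((π ⟨i, h⟩ : Fin n) : ℕ) = fn π i := by
  simp [fn, h]

lemma contains1243_of {a b c d : ℕ} (hab : a < b) (hbc : b < c) (hcd : c < d)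
    (hdn : d < n) (h1 : fn π a < fn π b) (h2 : fn π b < fn π d)
    (h3 : fn π d < fn π c) : Contains π pat1243 := by
  have han : a < n := by omega
  have hbn : b < n := by omega
  have hcn : c < n := by omega
  refine ⟨![⟨a, han⟩, ⟨b, hbn⟩, ⟨c, hcn⟩, ⟨d, hdn⟩], ?_, ?_⟩
  · intro s t hst
    fin_cases s <;> fin_cases t <;>
      simp_all [Fin.lt_def] <;> omega
  · intro s t
    fin_cases s <;> fin_cases t <;>
      simp [pat1243, Equiv.swap_apply_def, Fin.lt_def, val_apply_mk] <;> omega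

lemma contains2143_of {a b c d : ℕ} (hab : a < b) (hbc : b < c) (hcd : c < d)
    (hdn : d < n) (h1 : fn π b < fn π a) (h2 : fn π a < fn π d)
    (h3 : fn π d < fn π c) : Contains π pat2143 := by
  have han : a < n := by omega
  have hbn : b < n := by omega
  have hcn : c < n := by omega
  refine ⟨![⟨a, han⟩, ⟨b, hbn⟩, ⟨c, hcn⟩, ⟨d, hdn⟩], ?_, ?_⟩
  · intro s t hst
    fin_cases s <;> fin_cases t <;>
      simp_all [Fin.lt_def] <;> omega
  · intro s t
    fin_cases s <;> fin_cases t <;>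
      simp [pat2143, Equiv.swap_apply_def, Fin.lt_def, val_apply_mk] <;> omega

lemma contains132_of {a b c : ℕ} (hab : a < b) (hbc : b < c) (hcn : c < n)
    (h1 : fn π a < fn π c) (h2 : fn π c < fn π b) : Contains π pat132 := by
  have han : a < n := by omega
  have hbn : b < n := by omega
  refine ⟨![⟨a, han⟩, ⟨b, hbn⟩, ⟨c, hcn⟩], ?_, ?_⟩
  · intro s t hst
    fin_cases s <;> fin_cases t <;>
      simp_all [Fin.lt_def] <;> omega
  · intro s t
    fin_cases s <;> fin_cases t <;>
      simp [pat132, Equiv.swap_apply_def, Fin.lt_def, val_apply_mk] <;> omega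

/-- For a Schröder permutation every diagram cell has rank at most 1. -/
lemma rk_le_one_of_schroeder (hS : Schroeder π) {i j : ℕ} (hc : cell π i j) :
    rk π i j ≤ 1 := by
  by_contra hr
  push_neg at hr
  have h2 : 1 < ((Finset.range i).filter (fun k => fn π k < j)).card := hr
  rw [Finset.one_lt_card] at h2
  obtain ⟨k1, hk1, k2, hk2, hne⟩ := h2
  simp only [Finset.mem_filter, Finset.mem_range] at hk1 hk2
  obtain ⟨hin, hjn, hfi, hfj⟩ := hc
  set d := fn π⁻¹ j with hd
  have hdn : d < n := fn_lt π⁻¹ hjn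
  have hfd : fn π d = j := fn_fn_inv π j
  have key : ∀ a b : ℕ, a < b → b < i → fn π a < j → fn π b < j → False := by
    intro a b hab hbi ha hb
    rcases lt_trichotomy (fn π a) (fn π b) with h | h | h
    · exact hS.1 (contains1243_of hab hbi hfj hdn h (by omega) (by omega))
    · exact hab.ne (fn_injective π h)
    · exact hS.2 (contains2143_of hab hbi hfj hdn h (by omega) (by omega))
  rcases lt_or_gt_of_ne hne with h | h
  · exact key k1 k2 h hk2.1 hk1.2 hk2.2
  · exact key k2 k1 h hk1.1 hk2.2 hk1.2

/-- For a 132-avoiding permutation every diagram cell has rank 0. -/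
lemma rk_eq_zero_of_av132 (hS : Avoids π pat132) {i j : ℕ} (hc : cell π i j) :
    rk π i j = 0 := by
  rw [rk_eq_zero_iff]
  intro k hk hlt
  obtain ⟨hin, hjn, hfi, hfj⟩ := hc
  set d := fn π⁻¹ j with hd
  have hdn : d < n := fn_lt π⁻¹ hjn
  have hfd : fn π d = j := fn_fn_inv π j
  exact hS (contains132_of hk hfj hdn (by omega) (by omega))

/-- If every diagram cell has rank ≤ 1 then the permutation is Schröder. -/
lemma schroeder_of_rk_le_one (h : ∀ i j, cell π i j → rk π i j ≤ 1) :
    Schroeder π := by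
  have key : ∀ a b c d : ℕ, a < b → b < c → c < d → d < n →
      fn π a < fn π d → fn π b < fn π d → fn π d < fn π c → False := by
    intro a b c d hab hbc hcd hdn ha hb hdc
    set j := fn π d with hj
    have hjn : j < n := fn_lt π hdn
    have hcell : cell π c j := by
      refine ⟨by omega, hjn, hdc, ?_⟩
      rw [hj, fn_inv_fn]; omega
    have h2 : 2 ≤ rk π c j := by
      have hsub : ({a, b} : Finset ℕ) ⊆ (Finset.range c).filter (fun k => fn π k < j) := by
        intro x hx
        simp only [Finset.mem_insert, Finset.mem_singleton] at hx
        simp only [Finset.mem_filter, Finset.mem_range]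
        rcases hx with rfl | rfl
        · exact ⟨by omega, ha⟩
        · exact ⟨hbc, hb⟩
      have hca : ({a, b} : Finset ℕ).card = 2 := by
        rw [Finset.card_insert_of_notMem (by simp; omega), Finset.card_singleton]
      calc 2 = ({a, b} : Finset ℕ).card := hca.symm
        _ ≤ _ := Finset.card_le_card hsub
    have := h c j hcell
    omega
  constructor
  · rintro ⟨f, hmono, hiff⟩
    have v01 : π (f 0) < π (f 1) := (hiff 0 1).mp (by decide)
    have v13 : π (f 1) < π (f 3) := (hiff 1 3).mp (by decide)
    have v32 : π (f 3) < π (f 2) := (hiff 3 2).mp (by decide)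
    have e0 : fn π (f 0 : ℕ) = (π (f 0) : ℕ) := fn_apply π (f 0)
    have e1 : fn π (f 1 : ℕ) = (π (f 1) : ℕ) := fn_apply π (f 1)
    have e2 : fn π (f 2 : ℕ) = (π (f 2) : ℕ) := fn_apply π (f 2)
    have e3 : fn π (f 3 : ℕ) = (π (f 3) : ℕ) := fn_apply π (f 3)
    refine key (f 0) (f 1) (f 2) (f 3) (hmono (by decide)) (hmono (by decide))
      (hmono (by decide)) (f 3).isLt ?_ ?_ ?_ <;>
      rw [Fin.lt_def] at v01 v13 v32 <;> omega
  · rintro ⟨f, hmono, hiff⟩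
    have v10 : π (f 1) < π (f 0) := (hiff 1 0).mp (by decide)
    have v03 : π (f 0) < π (f 3) := (hiff 0 3).mp (by decide)
    have v32 : π (f 3) < π (f 2) := (hiff 3 2).mp (by decide)
    have e0 : fn π (f 0 : ℕ) = (π (f 0) : ℕ) := fn_apply π (f 0)
    have e1 : fn π (f 1 : ℕ) = (π (f 1) : ℕ) := fn_apply π (f 1)
    have e2 : fn π (f 2 : ℕ) = (π (f 2) : ℕ) := fn_apply π (f 2)
    have e3 : fn π (f 3 : ℕ) = (π (f 3) : ℕ) := fn_apply π (f 3)
    refine key (f 0) (f 1) (f 2) (f 3) (hmono (by decide)) (hmono (by decide))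
      (hmono (by decide)) (f 3).isLt ?_ ?_ ?_ <;>
      rw [Fin.lt_def] at v10 v03 v32 <;> omega

end Schro

namespace Schro

variable {n : ℕ} {π : Equiv.Perm (Fin n)}

/-- a rank-0 essential cell cannot have a rank-1 essential cell diagonally SE. -/
lemma ess0_not_shift {i j : ℕ} (h0 : ess π i j) (h1 : cell π (i+1) (j+1)) : False := by
  obtain ⟨hc, hni, _⟩ := h0
  have hfi : j + 1 < fn π (i+1) := h1.2.2.1
  have hjn : j < n := hc.2.1
  have hicell : ¬ cell π (i+1) j := hni
  have hin1 : i + 1 < n := h1.1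
  have hinv : fn π⁻¹ j ≤ i + 1 := by
    by_contra hh
    exact hicell ⟨hin1, hjn, by omega, by omega⟩
  have hinv2 : i < fn π⁻¹ j := hc.2.2.2
  have : fn π⁻¹ j = i + 1 := by omega
  have : fn π (i+1) = j := by rw [← this, fn_fn_inv]
  omega

/-- rank-1 cells, shifted back by (1,1), avoid the rank-0 region. -/
lemma rk1_not_diag_R0 {u' v' : ℕ} (hc : cell π (u'+1) (v'+1))
    (hr : rk π (u'+1) (v'+1) = 1) : ¬ (cell π u' v' ∧ rk π u' v' = 0) := by
  rintro ⟨hc0, hr0⟩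
  obtain ⟨k0, hk0, hw, -⟩ := rk_one_witness hr
  rw [rk_eq_zero_iff] at hr0
  rcases lt_trichotomy k0 u' with h | h | h
  · have := hr0 k0 h
    have hfk : fn π k0 = v' := by omega
    have : fn π⁻¹ v' = k0 := by rw [← hfk, fn_inv_fn]
    have := hc0.2.2.2
    omega
  · subst h
    have := hc0.2.2.1
    omega
  · omega

section Witness

variable {a b k0 : ℕ}
variable (hess : ess π a b) (hr : rk π a b = 1)
variable (hk0a : k0 < a) (hw : fn π k0 < b)
variable (huniq : ∀ k < a, fn π k < b → k = k0)

include hess hk0a hw huniq in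
/-- the cell NW-diagonal of the witness row top: `(k0-1, b-1)` is a rank-0 cell. -/
lemma witness_cell_i (hk1 : 1 ≤ k0) : cell π (k0-1) (b-1) ∧ rk π (k0-1) (b-1) = 0 := by
  obtain ⟨⟨han, hbn, hfa, hfb⟩, -, -⟩ := hess
  have h1 : b ≤ fn π (k0-1) := by
    by_contra hh
    push_neg at hh
    have := huniq (k0-1) (by omega) hh
    omega
  have h2 : k0 - 1 < fn π⁻¹ (b-1) := by
    rcases lt_trichotomy (fn π⁻¹ (b-1)) a with h | h | h
    · have hfnb : fn π (fn π⁻¹ (b-1)) = b - 1 := fn_fn_inv π _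
      have := huniq _ h (by omega)
      omega
    · omega
    · omega
  refine ⟨⟨by omega, by omega, by omega, h2⟩, ?_⟩
  rw [rk_eq_zero_iff]
  intro k hk hlt
  have := huniq k (by omega) (by omega)
  omega

include hess hk0a hw huniq in
/-- the cell NW-diagonal of the witness column: `(a-1, w-1)` is a rank-0 cell. -/
lemma witness_cell_j (hw1 : 1 ≤ fn π k0) :
    cell π (a-1) (fn π k0 - 1) ∧ rk π (a-1) (fn π k0 - 1) = 0 := by
  obtain ⟨⟨han, hbn, hfa, hfb⟩, -, -⟩ := hess
  have h1 : fn π k0 - 1 < fn π (a-1) := by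
    rcases eq_or_ne (a-1) k0 with h | h
    · rw [h]; omega
    · by_contra hh
      push_neg at hh
      have := huniq (a-1) (by omega) (by omega)
      omega
  have h2 : a - 1 < fn π⁻¹ (fn π k0 - 1) := by
    rcases lt_or_ge (fn π⁻¹ (fn π k0 - 1)) a with h | h
    · have hfnw : fn π (fn π⁻¹ (fn π k0 - 1)) = fn π k0 - 1 := fn_fn_inv π _
      have := huniq _ h (by omega)
      exfalso
      rw [this] at hfnw
      omega
    · omega
  refine ⟨⟨by omega, by omega, h1, h2⟩, ?_⟩
  rw [rk_eq_zero_iff]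
  intro k hk hlt
  have hke := huniq k (by omega) (by omega)
  subst hke
  omega

include hess hr hk0a hw huniq in
/-- key: NW of a rank-1 essential cell, diagonally-shifted non-rank-0 cells are rank-1 cells. -/
lemma rk1_region {u' v' : ℕ} (hu : u' + 1 ≤ a) (hv : v' + 1 ≤ b)
    (hnot : ¬ (cell π u' v' ∧ rk π u' v' = 0)) :
    cell π (u'+1) (v'+1) ∧ rk π (u'+1) (v'+1) = 1 := by
  obtain ⟨han, hbn, hfa, hfb⟩ := hess.1
  set u := u' + 1
  set v := v' + 1
  have hcell : cell π u v := by
    by_contra hnc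
    have hun : u < n := by omega
    have hvn : v < n := by omega
    have hsplit : fn π u ≤ v ∨ fn π⁻¹ v ≤ u := by
      by_contra hh
      push_neg at hh
      exact hnc ⟨hun, hvn, hh.1, hh.2⟩
    rcases hsplit with hcase | hcase
    · -- row of the witness
      have hua : u < a := by
        rcases lt_or_eq_of_le hu with h | h
        · omega
        · exfalso
          rw [h] at hcase
          omega
      have hfub : fn π u < b := by
        rcases lt_or_eq_of_le (le_trans hcase hv) with h | h
        · exact h
        · exfalso
          have : fn π⁻¹ b = u := by rw [← h, fn_inv_fn]
          omega
      have huk0 : u = k0 := huniq u hua hfub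
      have hk01 : 1 ≤ k0 := by omega
      have hcc := witness_cell_i (π := π) hess hk0a hw huniq hk01
      have := rank0_nw hcc.1 hcc.2 (show u' ≤ k0 - 1 by omega) (show v' ≤ b - 1 by omega)
      exact hnot this
    · -- column of the witness
      set e := fn π⁻¹ v with he
      have hfe : fn π e = v := fn_fn_inv π v
      have hea : e < a := by
        rcases lt_or_eq_of_le (le_trans hcase hu) with h | h
        · exact h
        · exfalso; rw [h] at hfe; omega
      have hvb : v < b := by
        rcases lt_or_eq_of_le hv with h | h
        · exact h
        · exfalso
          rw [h] at he
          omega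
      have hek0 : e = k0 := huniq e hea (by omega)
      have hvw : v = fn π k0 := by rw [← hek0, hfe]
      have hcc := witness_cell_j (π := π) hess hk0a hw huniq (by omega)
      have := rank0_nw hcc.1 hcc.2 (show u' ≤ a - 1 by omega)
        (show v' ≤ fn π k0 - 1 by omega)
      exact hnot this
  refine ⟨hcell, ?_⟩
  have hle : rk π u v ≤ rk π a b := rk_mono hu hv
  rcases Nat.lt_or_ge (rk π u v) 1 with h | h
  · exfalso
    have h0 : rk π u v = 0 := by omega
    have := rank0_nw hcell h0 (show u' ≤ u by omega) (show v' ≤ v by omega)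
    exact hnot this
  · omega

end Witness

end Schro

namespace Schro

/-! ### Greedy construction of a permutation from interval data -/

lemma le_foldr_max (u : List ℕ) {x : ℕ} (hx : x ∈ u) : x ≤ u.foldr max 0 := by
  induction u with
  | nil => simp at hx
  | cons a u ih =>
    rcases List.mem_cons.mp hx with rfl | h
    · simp
    · exact le_trans (ih h) (by simp)

lemma fresh_exists (u : List ℕ) (s : ℕ) : ∃ v, s ≤ v ∧ v ∉ u := by
  refine ⟨s + u.foldr max 0 + 1, by omega, fun h => ?_⟩
  have := le_foldr_max u h
  omega

/-- list of the first `i` values of the greedy permutation. -/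
def build (t : ℕ → ℕ) : ℕ → List ℕ
  | 0 => []
  | i+1 => build t i ++ [Nat.find (fresh_exists (build t i) (t i))]

/-- the greedy permutation: `g i` is the least value `≥ t i` not used earlier. -/
def greedy (t : ℕ → ℕ) (i : ℕ) : ℕ := Nat.find (fresh_exists (build t i) (t i))

lemma build_succ (t : ℕ → ℕ) (i : ℕ) : build t (i+1) = build t i ++ [greedy t i] := rfl

lemma mem_build {t : ℕ → ℕ} {i : ℕ} {x : ℕ} :
    x ∈ build t i ↔ ∃ l, l < i ∧ greedy t l = x := by
  induction i with
  | zero => simp [build]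
  | succ i ih =>
    rw [build_succ, List.mem_append, List.mem_singleton, ih]
    constructor
    · rintro (⟨l, hl, he⟩ | he)
      · exact ⟨l, by omega, he⟩
      · exact ⟨i, by omega, he.symm⟩
    · rintro ⟨l, hl, he⟩
      rcases Nat.lt_succ_iff_lt_or_eq.mp hl with h | rfl
      · exact Or.inl ⟨l, h, he⟩
      · exact Or.inr he.symm

lemma greedy_ge (t : ℕ → ℕ) (i : ℕ) : t i ≤ greedy t i :=
  (Nat.find_spec (fresh_exists (build t i) (t i))).1

lemma greedy_ne (t : ℕ → ℕ) {l i : ℕ} (h : l < i) : greedy t l ≠ greedy t i := by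
  intro he
  have h2 : greedy t i ∉ build t i :=
    (Nat.find_spec (fresh_exists (build t i) (t i))).2
  exact h2 (he ▸ mem_build.mpr ⟨l, h, rfl⟩)

lemma greedy_min (t : ℕ → ℕ) {i v : ℕ} (hv : t i ≤ v) (hun : ∀ l, l < i → greedy t l ≠ v) :
    greedy t i ≤ v :=
  Nat.find_le ⟨hv, fun h => by
    obtain ⟨l, hl, he⟩ := mem_build.mp h
    exact hun l hl he⟩

/-! ### The interval data coming from two staircase profiles -/

/-- threshold function. -/
def tf (k m : ℕ → ℕ) : ℕ → ℕ
  | 0 => k 0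
  | (r+1) => if k r < m r then m r + 1 else k (r+1)

/-- the intended diagram. -/
def DS (k m : ℕ → ℕ) (i j : ℕ) : Prop :=
  j < k i ∨ (∃ r, i = r + 1 ∧ k r < j ∧ j ≤ m r)

section Greedy

variable {n : ℕ} {k m : ℕ → ℕ}
variable (hk : ∀ i, k (i+1) ≤ k i) (hm : ∀ i, m (i+1) ≤ m i)
variable (hA : ∀ l r, l ≤ r → k l ≤ m r → k l ≤ k (r+1))

section NoBound

include hk

lemma kmono : ∀ {i j : ℕ}, i ≤ j → k j ≤ k i := by
  intro i j h
  exact antitone_nat_of_succ_le hk h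

lemma tf_ge_k (i : ℕ) : k i ≤ tf k m i := by
  obtain _ | r := i
  · simp [tf]
  · simp only [tf]
    split
    · have := hk r; omega
    · omega

/-- notation: the greedy function for our threshold. -/

lemma g_ge_k (l : ℕ) : k l ≤ greedy (tf k m) l :=
  le_trans (tf_ge_k hk l) (greedy_ge _ l)

include hA in
lemma shifted_k_eq {r : ℕ} (h : k r < m r) : k (r+1) = k r :=
  le_antisymm (hk r) (hA r r le_rfl (le_of_lt h))

/-- the first row with the same `k` value as row `i`. -/
def JJ (k : ℕ → ℕ) (i : ℕ) : ℕ := Nat.find (⟨i, rfl⟩ : ∃ l, k l = k i)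

omit hk in
lemma JJ_le (i : ℕ) : JJ k i ≤ i := Nat.find_le rfl

omit hk in
lemma JJ_eq (i : ℕ) : k (JJ k i) = k i := Nat.find_spec (⟨i, rfl⟩ : ∃ l, k l = k i)

lemma JJ_lt (i : ℕ) {l : ℕ} (hl : l < JJ k i) : k i < k l := by
  have h1 : ¬ k l = k i := Nat.find_min (⟨i, rfl⟩ : ∃ l, k l = k i) hl
  have h2 : k i ≤ k l := kmono hk (by have := JJ_le (k := k) i; omega)
  omega

include hm hA in
lemma g_JJ (i : ℕ) : greedy (tf k m) (JJ k i) = k i := by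
  have ht : tf k m (JJ k i) = k i := by
    cases hJ : JJ k i with
    | zero =>
      simp only [tf]
      rw [← hJ]; exact JJ_eq i
    | succ r =>
      have hnot : ¬ k r < m r := by
        intro hsh
        have hkr := shifted_k_eq hk hA hsh
        have hrlt : r < JJ k i := by omega
        have h2 := JJ_lt hk i hrlt
        have h3 : k (r+1) = k i := by rw [← hJ]; exact JJ_eq i
        omega
      simp only [tf, if_neg hnot]
      rw [← hJ]; exact JJ_eq i
  refine le_antisymm ?_ (by rw [← ht]; exact greedy_ge _ _)
  apply greedy_min
  · omega
  · intro l hl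
    have h1 := JJ_lt hk i hl
    have h2 := g_ge_k hk (m := m) l
    omega

include hm hA in
/-- master avoidance: previous greedy values avoid the shifted interval `(k r, m r]`. -/
lemma g_avoid {l r : ℕ} (hlr : l ≤ r) (hsh : k r < m r) :
    ¬ (k r < greedy (tf k m) l ∧ greedy (tf k m) l ≤ m r) := by
  rintro ⟨h1, h2⟩
  -- case on the shape of l
  obtain _ | l' := l
  · -- l = 0 : g 0 = k 0
    have hg0 : greedy (tf k m) 0 = k 0 := by
      refine le_antisymm (greedy_min _ (by simp [tf]) (by omega)) ?_
      have := greedy_ge (tf k m) 0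
      simpa only [tf] using this
    rw [hg0] at h1 h2
    -- k 0 ∈ (k r, m r] : contradiction with hA
    have := hA 0 r (by omega) (by omega)
    have : k (r+1) ≤ k r := hk r
    omega
  · by_cases hshl : k l' < m l'
    · -- row l is shifted : g l ≥ m l' + 1 > m r
      have hgl : m l' + 1 ≤ greedy (tf k m) (l'+1) := by
        have := greedy_ge (tf k m) (l'+1)
        simpa only [tf, if_pos hshl] using this
      have hml : m r ≤ m l' := antitone_nat_of_succ_le hm (by omega)
      omega
    · -- row l is not shifted
      by_cases hkl : k r < k (l'+1)
      · -- k l > m r necessarily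
        have hnot : ¬ k (l'+1) ≤ m r := by
          intro hh
          have := hA (l'+1) r hlr hh
          have : k (r+1) ≤ k r := hk r
          omega
        have := g_ge_k hk (m := m) (l'+1)
        omega
      · -- k l = k r : row l is the first row with this k value, so g l = k l
        have hkli : k (l'+1) = k r := by
          have := kmono hk hlr
          omega
        -- l must be minimal: k l' > k l
        have hkl' : k (l'+1) < k l' := by
          rcases lt_or_eq_of_le (hk l') with h | h
          · omega
          · exfalso
            -- k l' = k l = k r, row l not shifted: m l' ≤ k l', but m l' ≥ m r > k r
            have hml : m r ≤ m l' := antitone_nat_of_succ_le hm (by omega)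
            omega
        have hgl : greedy (tf k m) (l'+1) = k (l'+1) := by
          have ht : tf k m (l'+1) = k (l'+1) := by
            simp only [tf, if_neg hshl]
          refine le_antisymm ?_ (g_ge_k hk (l'+1))
          apply greedy_min
          · omega
          · intro l'' hl''
            have hx1 : k l' ≤ k l'' := kmono hk (by omega)
            have hx2 := g_ge_k hk (m := m) l''
            omega
        omega

include hm hA in
/-- row description: unused values below `g i` are exactly the intended diagram row. -/
lemma g_row {i v : ℕ} :
    ((∀ l, l < i → greedy (tf k m) l ≠ v) ∧ v < greedy (tf k m) i) ↔ DS k m i v := by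
  constructor
  · rintro ⟨hun, hv⟩
    have hvt : v < tf k m i := by
      by_contra hh
      push_neg at hh
      have := greedy_min (tf k m) hh hun
      omega
    obtain _ | r := i
    · simp only [tf] at hvt
      exact Or.inl hvt
    · by_cases hsh : k r < m r
      · simp only [tf, if_pos hsh] at hvt
        rcases lt_trichotomy v (k (r+1)) with h | h | h
        · exact Or.inl h
        · exfalso
          have hkr : k (r+1) = k r := shifted_k_eq hk hA hsh
          have hJle : JJ k (r+1) ≤ r := Nat.find_le hkr.symm
          exact hun (JJ k (r+1)) (by omega) (by rw [g_JJ hk hm hA, ← h])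
        · right
          refine ⟨r, rfl, ?_, by omega⟩
          have hkr : k (r+1) = k r := shifted_k_eq hk hA hsh
          omega
      · simp only [tf, if_neg hsh] at hvt
        exact Or.inl hvt
  · intro hDS
    rcases hDS with h | ⟨r, rfl, h1, h2⟩
    · constructor
      · intro l hl
        have h1 := g_ge_k hk (m := m) l
        have h2 : k i ≤ k l := kmono hk (by omega)
        omega
      · have := g_ge_k hk (m := m) i
        omega
    · have hsh : k r < m r := by omega
      constructor
      · intro l hl he
        exact g_avoid hk hm hA (show l ≤ r by omega) hsh (by omega)
      · have := greedy_ge (tf k m) (r+1)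
        simp only [tf, if_pos hsh] at this
        omega

end NoBound

end Greedy

end Schro

namespace Schro

/-! ### The constructed permutation -/

noncomputable def mkPerm (n : ℕ) (g : ℕ → ℕ) (hb : ∀ i, i < n → g i < n)
    (hinj : ∀ l i, l < i → g l ≠ g i) : Equiv.Perm (Fin n) :=
  Equiv.ofBijective (fun i => (⟨g i, hb i i.isLt⟩ : Fin n))
    (by
      rw [← Finite.injective_iff_bijective]
      intro a b h
      simp only [Fin.mk.injEq] at h
      by_contra hne
      rcases lt_or_gt_of_ne (fun hc : (a : ℕ) = (b : ℕ) => hne (Fin.ext hc)) with hlt | hlt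
      · exact hinj a b hlt h
      · exact hinj b a hlt h.symm)

lemma fn_mkPerm (n : ℕ) (g : ℕ → ℕ) (hb : ∀ i, i < n → g i < n)
    (hinj : ∀ l i, l < i → g l ≠ g i) {i : ℕ} (hi : i < n) :
    fn (mkPerm n g hb hinj) i = g i := by
  simp [fn, hi, mkPerm, Equiv.ofBijective]

lemma inv_mkPerm_gt (n : ℕ) (g : ℕ → ℕ) (hb : ∀ i, i < n → g i < n)
    (hinj : ∀ l i, l < i → g l ≠ g i) {i j : ℕ} (hj : j < n) :
    i < fn (mkPerm n g hb hinj)⁻¹ j ↔ ∀ l, l ≤ i → g l ≠ j := by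
  set π := mkPerm n g hb hinj with hπ
  set e := fn π⁻¹ j with he
  have hen : e < n := fn_lt π⁻¹ hj
  have hfe : fn π e = j := fn_fn_inv π j
  have hge : g e = j := by rw [← fn_mkPerm n g hb hinj hen, ← hπ]; exact hfe
  constructor
  · intro hlt l hl hgl
    have : l < n := by
      by_contra hh
      push_neg at hh
      have := hb l; omega
    -- g l = j = g e with l ≤ i < e
    have hne : l ≠ e := by omega
    rcases lt_or_gt_of_ne hne with h | h
    · exact hinj l e h (by rw [hgl, hge])
    · exact hinj e l h (by rw [hgl, hge])
  · intro hall
    by_contra hh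
    push_neg at hh
    exact hall e hh hge

section Greedy2

variable {n : ℕ} {k m : ℕ → ℕ}
variable (hk : ∀ i, k (i+1) ≤ k i) (hm : ∀ i, m (i+1) ≤ m i)
variable (hA : ∀ l r, l ≤ r → k l ≤ m r → k l ≤ k (r+1))
variable (hkb : ∀ i, k i ≠ 0 → i + k i < n) (hmb : ∀ i, m i ≠ 0 → i + m i + 1 < n)

include hk hm hA hkb hmb in
lemma g_lt_n {i : ℕ} (hin : i < n) : greedy (tf k m) i < n := by
  suffices h : ∃ v, tf k m i ≤ v ∧ (∀ l, l < i → greedy (tf k m) l ≠ v) ∧ v < n by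
    obtain ⟨v, h1, h2, h3⟩ := h
    have := greedy_min (tf k m) h1 h2
    omega
  set U := (Finset.range i).image (greedy (tf k m)) with hU
  have hUcard : U.card ≤ i := le_trans (Finset.card_image_le) (by simp)
  have hmem : ∀ v, v ∉ U ↔ ∀ l, l < i → greedy (tf k m) l ≠ v := by
    intro v
    simp only [hU, Finset.mem_image, Finset.mem_range, not_exists]
    constructor
    · intro h l hl hgl
      exact h l ⟨hl, hgl⟩
    · rintro h l ⟨hl, hgl⟩
      exact h l hl hgl
  by_cases hsh : ∃ r, i = r + 1 ∧ k r < m r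
  · obtain ⟨r, rfl, hshr⟩ := hsh
    have htf : tf k m (r+1) = m r + 1 := by simp only [tf, if_pos hshr]
    have hmr : m r ≠ 0 := by omega
    have hbnd := hmb r hmr
    set T := Finset.Ico (m r + 1) n with hT
    have hTcard : T.card = n - m r - 1 := by rw [hT, Nat.card_Ico]; omega
    -- k (r+1) is a used value below the interval
    have hkrsub : k (r+1) = k r := shifted_k_eq hk hA hshr
    have hkin : k (r+1) ∈ U := by
      rw [hU]
      refine Finset.mem_image.mpr ⟨JJ k (r+1), ?_, ?_⟩
      · simp only [Finset.mem_range]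
        have : JJ k (r+1) ≤ r := Nat.find_le hkrsub.symm
        omega
      · exact g_JJ hk hm hA (r+1)
    set U' := U.erase (k (r+1)) with hU'
    have hU'card : U'.card < U.card := Finset.card_erase_lt_of_mem hkin
    have hcard : U'.card < T.card := by
      have : U.card ≤ r + 1 := hUcard
      omega
    have hTU : ¬ T ⊆ U' := by
      intro hsub
      have := Finset.card_le_card hsub
      omega
    obtain ⟨v, hvT, hvU'⟩ := Finset.not_subset.mp hTU
    rw [hT, Finset.mem_Ico] at hvT
    have hvU : v ∉ U := by
      intro hc
      apply hvU'
      rw [hU']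
      refine Finset.mem_erase.mpr ⟨?_, hc⟩
      omega
    exact ⟨v, by omega, (hmem v).mp hvU, hvT.2⟩
  · have htf : tf k m i = k i := by
      obtain _ | r := i
      · simp [tf]
      · simp only [tf, if_neg (fun hc => hsh ⟨r, rfl, hc⟩)]
    set T := Finset.Ico (k i) n with hT
    have hTcard : T.card = n - k i := by rw [hT, Nat.card_Ico]
    have hcard : U.card < T.card := by
      rcases eq_or_ne (k i) 0 with h0 | h0
      · rw [hTcard, h0]; omega
      · have := hkb i h0
        rw [hTcard]; omega
    have hTU : ¬ T ⊆ U := by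
      intro hsub
      have := Finset.card_le_card hsub
      omega
    obtain ⟨v, hvT, hvU⟩ := Finset.not_subset.mp hTU
    rw [hT, Finset.mem_Ico] at hvT
    exact ⟨v, by omega, (hmem v).mp hvU, hvT.2⟩

include hkb hmb in
omit hk hm hA in
lemma DS_bounds {i j : ℕ} (h : DS k m i j) : i < n ∧ j < n := by
  rcases h with h | ⟨r, rfl, h1, h2⟩
  · have hki : k i ≠ 0 := by omega
    have := hkb i hki
    omega
  · have hmr : m r ≠ 0 := by omega
    have := hmb r hmr
    omega

/-- the constructed permutation. -/
noncomputable def pS (n : ℕ) (k m : ℕ → ℕ) (hk : ∀ i, k (i+1) ≤ k i) (hm : ∀ i, m (i+1) ≤ m i)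
    (hA : ∀ l r, l ≤ r → k l ≤ m r → k l ≤ k (r+1))
    (hkb : ∀ i, k i ≠ 0 → i + k i < n) (hmb : ∀ i, m i ≠ 0 → i + m i + 1 < n) :
    Equiv.Perm (Fin n) :=
  mkPerm n (greedy (tf k m)) (fun _ hi => g_lt_n hk hm hA hkb hmb hi)
    (fun _ _ h => greedy_ne _ h)

include hk hm hA hkb hmb in
lemma cell_pS {i j : ℕ} :
    cell (pS n k m hk hm hA hkb hmb) i j ↔ DS k m i j := by
  set π := pS n k m hk hm hA hkb hmb with hπ
  constructor
  · rintro ⟨hin, hjn, hfi, hfj⟩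
    have hfg : fn π i = greedy (tf k m) i := fn_mkPerm n (greedy (tf k m)) _ _ hin
    have hinv := (inv_mkPerm_gt n (greedy (tf k m)) _ _ hjn (i := i)).mp hfj
    rw [← g_row hk hm hA (i := i) (v := j)]
    refine ⟨fun l hl => hinv l (by omega), by omega⟩
  · intro hDS
    obtain ⟨hin, hjn⟩ := DS_bounds hkb hmb hDS
    rw [← g_row hk hm hA (i := i) (v := j)] at hDS
    obtain ⟨hun, hlt⟩ := hDS
    refine ⟨hin, hjn, ?_, ?_⟩
    · have hfg : fn π i = greedy (tf k m) i := fn_mkPerm n (greedy (tf k m)) _ _ hin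
      omega
    · have hinv : i < fn π⁻¹ j ↔ ∀ l, l ≤ i → greedy (tf k m) l ≠ j :=
        inv_mkPerm_gt n (greedy (tf k m)) _ _ hjn
      rw [hinv]
      intro l hl
      rcases lt_or_eq_of_le hl with h | h
      · exact hun l h
      · subst h; omega

end Greedy2

end Schro

namespace Schro

section Greedy3

variable {n : ℕ} {k m : ℕ → ℕ}
variable (hk : ∀ i, k (i+1) ≤ k i) (hm : ∀ i, m (i+1) ≤ m i)
variable (hA : ∀ l r, l ≤ r → k l ≤ m r → k l ≤ k (r+1))
variable (hkb : ∀ i, k i ≠ 0 → i + k i < n) (hmb : ∀ i, m i ≠ 0 → i + m i + 1 < n)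

include hk hm hA hkb hmb

lemma rk_pS_zero {i j : ℕ} (h : j < k i) :
    rk (pS n k m hk hm hA hkb hmb) i j = 0 := by
  set π := pS n k m hk hm hA hkb hmb with hπ
  rw [rk_eq_zero_iff]
  intro l hl hlt
  have hin : i < n := by
    have := hkb i (by omega); omega
  have hfg : fn π l = greedy (tf k m) l :=
    fn_mkPerm n (greedy (tf k m)) _ _ (by omega)
  have h1 := g_ge_k hk (m := m) l
  have h2 : k i ≤ k l := kmono hk (by omega)
  omega

lemma rk_pS_one {r j : ℕ} (h1 : k r < j) (h2 : j ≤ m r) :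
    rk (pS n k m hk hm hA hkb hmb) (r+1) j = 1 := by
  set π := pS n k m hk hm hA hkb hmb with hπ
  have hsh : k r < m r := by omega
  have hkr : k (r+1) = k r := shifted_k_eq hk hA hsh
  have hin : r + 1 < n := by
    have := hmb r (by omega); omega
  have hJle : JJ k (r+1) ≤ r := Nat.find_le hkr.symm
  have hgJ : greedy (tf k m) (JJ k (r+1)) = k (r+1) := g_JJ hk hm hA (r+1)
  have hfilter : (Finset.range (r+1)).filter (fun l => fn π l < j) = {JJ k (r+1)} := by
    ext l
    simp only [Finset.mem_filter, Finset.mem_range, Finset.mem_singleton]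
    constructor
    · rintro ⟨hl, hlt⟩
      have hfg : fn π l = greedy (tf k m) l :=
        fn_mkPerm n (greedy (tf k m)) _ _ (by omega)
      rw [hfg] at hlt
      have hav := g_avoid hk hm hA (show l ≤ r by omega) hsh
      have hgl : greedy (tf k m) l ≤ k r := by omega
      have hge : k r ≤ greedy (tf k m) l := by
        have := g_ge_k hk (m := m) l
        have := kmono hk (show l ≤ r by omega)
        omega
      have heq : greedy (tf k m) l = greedy (tf k m) (JJ k (r+1)) := by omega
      by_contra hne
      rcases lt_or_gt_of_ne hne with hc | hc
      · exact greedy_ne _ hc heq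
      · exact greedy_ne _ hc heq.symm
    · rintro rfl
      refine ⟨by omega, ?_⟩
      have hfg : fn π (JJ k (r+1)) = greedy (tf k m) (JJ k (r+1)) :=
        fn_mkPerm n (greedy (tf k m)) _ _ (by omega)
      omega
  unfold rk
  rw [hfilter, Finset.card_singleton]

lemma ess_pS_iff {i j : ℕ} :
    ess (pS n k m hk hm hA hkb hmb) i j ↔
      ((j + 1 = k i ∧ k (i+1) < k i) ∨
       (∃ r, i = r + 1 ∧ j = m r ∧ k r < m r ∧ m (r+1) < m r)) := by
  unfold ess
  rw [cell_pS hk hm hA hkb hmb, cell_pS hk hm hA hkb hmb, cell_pS hk hm hA hkb hmb]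
  unfold DS
  constructor
  · rintro ⟨hcell, hni, hnj⟩
    have hni1 : ¬ j < k (i+1) := fun hc => hni (Or.inl hc)
    have hni2 : ∀ r', i + 1 = r' + 1 → k r' < j → j ≤ m r' → False :=
      fun r' e1 e2 e3 => hni (Or.inr ⟨r', e1, e2, e3⟩)
    have hnj1 : ¬ j + 1 < k i := fun hc => hnj (Or.inl hc)
    have hnj2 : ∀ r', i = r' + 1 → k r' < j + 1 → j + 1 ≤ m r' → False :=
      fun r' e1 e2 e3 => hnj (Or.inr ⟨r', e1, e2, e3⟩)
    rcases hcell with h | ⟨r, rfl, h1, h2⟩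
    · left
      exact ⟨by omega, by omega⟩
    · right
      have hsh : k r < m r := by omega
      have hkr : k (r+1) = k r := shifted_k_eq hk hA hsh
      have e1 : ¬ j + 1 ≤ m r := fun hx => hnj2 r rfl (by omega) hx
      have e2 : ¬ j ≤ m (r+1) := fun hx => hni2 (r+1) rfl (by omega) hx
      refine ⟨r, rfl, by omega, hsh, by omega⟩
  · rintro (⟨h1, h2⟩ | ⟨r, rfl, h1, h2, h3⟩)
    · refine ⟨Or.inl (by omega), ?_, ?_⟩
      · rintro (hc | ⟨r, hr, hc1, hc2⟩)
        · omega
        · have : r = i := by omega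
          subst this
          omega
      · rintro (hc | ⟨r, hr, hc1, hc2⟩)
        · omega
        · subst hr
          have := hk r
          omega
    · have hkr : k (r+1) = k r := shifted_k_eq hk hA h2
      refine ⟨Or.inr ⟨r, rfl, by omega, by omega⟩, ?_, ?_⟩
      · rintro (hc | ⟨r', hr', hc1, hc2⟩)
        · have := kmono hk (show r ≤ r + 1 + 1 by omega)
          omega
        · have : r' = r + 1 := by omega
          subst this
          omega
      · rintro (hc | ⟨r', hr', hc1, hc2⟩)
        · omega
        · have : r' = r := by omega
          subst this
          omega

end Greedy3

end Schro

namespace Schro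

/-! ### Young profiles from corner sets -/

/-- row lengths of the Young closure of a finite corner set. -/
def rowSup (F : Finset (ℕ × ℕ)) (i : ℕ) : ℕ :=
  (F.filter (fun p => i ≤ p.1)).sup (fun p => p.2 + 1)

lemma lt_rowSup_iff {F : Finset (ℕ × ℕ)} {i j : ℕ} :
    j < rowSup F i ↔ ∃ p ∈ F, i ≤ p.1 ∧ j ≤ p.2 := by
  unfold rowSup
  rw [Finset.lt_sup_iff]
  constructor
  · rintro ⟨p, hp, hlt⟩
    rw [Finset.mem_filter] at hp
    exact ⟨p, hp.1, hp.2, by omega⟩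
  · rintro ⟨p, hp, h1, h2⟩
    exact ⟨p, Finset.mem_filter.mpr ⟨hp, h1⟩, by omega⟩

lemma rowSup_succ_le (F : Finset (ℕ × ℕ)) (i : ℕ) : rowSup F (i+1) ≤ rowSup F i := by
  apply Finset.sup_mono
  intro p hp
  simp only [Finset.mem_filter] at *
  exact ⟨hp.1, by omega⟩

lemma rowSup_exists {F : Finset (ℕ × ℕ)} {i : ℕ} (h : rowSup F i ≠ 0) :
    ∃ p ∈ F, i ≤ p.1 ∧ p.2 + 1 = rowSup F i := by
  have : 0 < rowSup F i := by omega
  obtain ⟨p, hp, h1, h2⟩ := lt_rowSup_iff.mp this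
  have hne : (F.filter (fun p => i ≤ p.1)).Nonempty := ⟨p, Finset.mem_filter.mpr ⟨hp, h1⟩⟩
  obtain ⟨q, hq, hqe⟩ := Finset.exists_mem_eq_sup _ hne (fun p => p.2 + 1)
  rw [Finset.mem_filter] at hq
  exact ⟨q, hq.1, hq.2, hqe.symm⟩

/-- antichain in the componentwise order. -/
def AC (F : Finset (ℕ × ℕ)) : Prop :=
  ∀ p ∈ F, ∀ q ∈ F, p.1 ≤ q.1 → p.2 ≤ q.2 → p = q

lemma AC.subset {F G : Finset (ℕ × ℕ)} (h : AC F) (hsub : G ⊆ F) : AC G :=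
  fun p hp q hq h1 h2 => h p (hsub hp) q (hsub hq) h1 h2

lemma AC.rowSup_self {F : Finset (ℕ × ℕ)} (h : AC F) {p : ℕ × ℕ} (hp : p ∈ F) :
    rowSup F p.1 = p.2 + 1 := by
  refine le_antisymm ?_ ?_
  · apply Finset.sup_le
    intro q hq
    rw [Finset.mem_filter] at hq
    by_contra hh
    push_neg at hh
    have hpq : p = q := h p hp q hq.1 hq.2 (by omega)
    have : p.2 = q.2 := by rw [hpq]
    omega
  · have : p.2 < rowSup F p.1 := lt_rowSup_iff.mpr ⟨p, hp, le_refl _, le_refl _⟩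
    omega

lemma AC.rowSup_succ {F : Finset (ℕ × ℕ)} (h : AC F) {p : ℕ × ℕ} (hp : p ∈ F) :
    rowSup F (p.1 + 1) ≤ p.2 := by
  apply Finset.sup_le
  intro q hq
  rw [Finset.mem_filter] at hq
  by_contra hh
  push_neg at hh
  have hq2 : p.2 ≤ q.2 := by omega
  have hpq : p = q := h p hp q hq.1 (by omega) hq2
  have : p.1 = q.1 := by rw [hpq]
  omega

lemma rowSup_corner {F : Finset (ℕ × ℕ)} {i : ℕ}
    (hdrop : rowSup F (i+1) < rowSup F i) : (i, rowSup F i - 1) ∈ F := by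
  have h0 : rowSup F i ≠ 0 := by omega
  obtain ⟨p, hp, h1, h2⟩ := rowSup_exists h0
  have hle : p.1 = i := by
    by_contra hh
    have : p.2 < rowSup F (i+1) := lt_rowSup_iff.mpr ⟨p, hp, by omega, le_refl _⟩
    omega
  have : p = (i, rowSup F i - 1) := by
    ext
    · exact hle
    · simp; omega
  rwa [this] at hp

/-- the crucial compatibility condition between the two profiles. -/
lemma hA_of_AC {F S : Finset (ℕ × ℕ)} (hac : AC F) (hsub : S ⊆ F) :
    ∀ l r, l ≤ r → rowSup (F \ S) l ≤ rowSup S r →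
      rowSup (F \ S) l ≤ rowSup (F \ S) (r+1) := by
  intro l r hlr hle
  rcases eq_or_ne (rowSup (F \ S) l) 0 with h0 | h0
  · omega
  obtain ⟨p, hp, hp1, hp2⟩ := rowSup_exists h0
  have hS0 : rowSup S r ≠ 0 := by omega
  obtain ⟨q, hq, hq1, hq2⟩ := rowSup_exists hS0
  have hpF : p ∈ F := (Finset.mem_sdiff.mp hp).1
  have hpS : p ∉ S := (Finset.mem_sdiff.mp hp).2
  have hqF : q ∈ F := hsub hq
  have hne : p ≠ q := fun he => hpS (he ▸ hq)
  have hp2q : p.2 ≤ q.2 := by omega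
  have hq1p : q.1 < p.1 := by
    by_contra hh
    push_neg at hh
    exact hne (hac p hpF q hqF hh hp2q)
  have : p.2 < rowSup (F \ S) (r+1) := lt_rowSup_iff.mpr ⟨p, hp, by omega, le_refl _⟩
  omega

end Schro

namespace Schro

open scoped Classical

variable {n : ℕ}

/-- Estar membership in ℕ-level terms. -/
lemma mem_estar_iff (π : Equiv.Perm (Fin n)) (p : Fin n × Fin n) :
    p ∈ Estar π ↔
      ((ess π p.1 p.2 ∧ rk π p.1 p.2 = 0) ∨
       (ess π ((p.1 : ℕ)+1) ((p.2 : ℕ)+1) ∧ rk π ((p.1 : ℕ)+1) ((p.2 : ℕ)+1) = 1)) := by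
  unfold Estar
  constructor
  · rintro (⟨h1, h2⟩ | ⟨q, hq, hrk, he1, he2⟩)
    · left
      rw [ess_iff] at h1
      rw [rank_eq_rk] at h2
      exact ⟨h1, h2⟩
    · right
      rw [ess_iff] at hq
      rw [rank_eq_rk] at hrk
      rw [he1, he2]
      exact ⟨hq, hrk⟩
  · rintro (⟨h1, h2⟩ | ⟨h1, h2⟩)
    · left
      refine ⟨(ess_iff π p).mpr h1, ?_⟩
      rw [rank_eq_rk]
      exact h2
    · right
      have hb1 : (p.1 : ℕ) + 1 < n := h1.1.1
      have hb2 : (p.2 : ℕ) + 1 < n := h1.1.2.1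
      refine ⟨(⟨(p.1 : ℕ)+1, hb1⟩, ⟨(p.2 : ℕ)+1, hb2⟩), ?_, ?_, rfl, rfl⟩
      · exact (ess_iff π (⟨(p.1 : ℕ)+1, hb1⟩, ⟨(p.2 : ℕ)+1, hb2⟩)).mpr h1
      · rw [rank_eq_rk]; exact h2

lemma estar_eq_iff (σ π : Equiv.Perm (Fin n)) :
    Estar π = EssSet σ ↔
      ∀ i j : ℕ, i < n → j < n →
        (((ess π i j ∧ rk π i j = 0) ∨
          (ess π (i+1) (j+1) ∧ rk π (i+1) (j+1) = 1)) ↔ ess σ i j) := by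
  rw [Set.ext_iff]
  constructor
  · intro h i j hi hj
    have := h (⟨i, hi⟩, ⟨j, hj⟩)
    rwa [mem_estar_iff, ess_iff] at this
  · intro h p
    rw [mem_estar_iff, ess_iff]
    exact h p.1 p.2 p.1.isLt p.2.isLt

/-- the essential set of `σ` as a finset of ℕ-pairs. -/
noncomputable def CFin (σ : Equiv.Perm (Fin n)) : Finset (ℕ × ℕ) :=
  ((Finset.range n) ×ˢ (Finset.range n)).filter (fun p => ess σ p.1 p.2)

lemma mem_CFin {σ : Equiv.Perm (Fin n)} {p : ℕ × ℕ} :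
    p ∈ CFin σ ↔ ess σ p.1 p.2 := by
  unfold CFin
  rw [Finset.mem_filter, Finset.mem_product, Finset.mem_range, Finset.mem_range]
  constructor
  · rintro ⟨-, h⟩; exact h
  · intro h; exact ⟨⟨h.1.1, h.1.2.1⟩, h⟩

/-- the "free corners": essential cells strictly above the antidiagonal. -/
noncomputable def CstarFin (σ : Equiv.Perm (Fin n)) : Finset (ℕ × ℕ) :=
  (CFin σ).filter (fun p => p.1 + p.2 + 2 < n)

lemma mem_CstarFin {σ : Equiv.Perm (Fin n)} {p : ℕ × ℕ} :
    p ∈ CstarFin σ ↔ ess σ p.1 p.2 ∧ p.1 + p.2 + 2 < n := by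
  unfold CstarFin
  rw [Finset.mem_filter, mem_CFin]

/-- the set of shifted corners extracted from a permutation. -/
noncomputable def SFin (π : Equiv.Perm (Fin n)) : Finset (ℕ × ℕ) :=
  ((Finset.range n) ×ˢ (Finset.range n)).filter
    (fun c => ess π (c.1+1) (c.2+1) ∧ rk π (c.1+1) (c.2+1) = 1)

lemma mem_SFin {π : Equiv.Perm (Fin n)} {c : ℕ × ℕ} :
    c ∈ SFin π ↔ ess π (c.1+1) (c.2+1) ∧ rk π (c.1+1) (c.2+1) = 1 := by
  unfold SFin
  rw [Finset.mem_filter, Finset.mem_product, Finset.mem_range, Finset.mem_range]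
  constructor
  · rintro ⟨-, h⟩; exact h
  · intro h
    have h1 : c.1 + 1 < n := h.1.1.1
    have h2 : c.2 + 1 < n := h.1.1.2.1
    exact ⟨⟨by omega, by omega⟩, h⟩

section Sigma

variable {σ : Equiv.Perm (Fin n)} (hσ : Avoids σ pat132)

include hσ in
lemma AC_CFin : AC (CFin σ) := by
  intro p hp q hq h1 h2
  rw [mem_CFin] at hp hq
  by_contra hne
  have hcq : cell σ q.1 q.2 := hq.1
  have hrk : rk σ q.1 q.2 = 0 := rk_eq_zero_of_av132 hσ hcq
  have hcases : p.1 < q.1 ∨ p.2 < q.2 := by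
    by_contra hh
    push_neg at hh
    exact hne (Prod.ext (by omega) (by omega))
  rcases hcases with h | h
  · -- (p.1+1, p.2) is a cell, contradicting essentiality of p
    have := rank0_nw hcq hrk (show p.1 + 1 ≤ q.1 by omega) h2
    exact hp.2.1 this.1
  · have := rank0_nw hcq hrk h1 (show p.2 + 1 ≤ q.2 by omega)
    exact hp.2.2 this.1

include hσ in
lemma cell_sigma_iff {i j : ℕ} : cell σ i j ↔ j < rowSup (CFin σ) i := by
  constructor
  · intro hc
    obtain ⟨a, b, ha, hb, hess, -⟩ := exists_ess_ge hc
    exact lt_rowSup_iff.mpr ⟨(a, b), mem_CFin.mpr hess, ha, hb⟩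
  · intro h
    obtain ⟨p, hp, h1, h2⟩ := lt_rowSup_iff.mp h
    rw [mem_CFin] at hp
    have hc : cell σ p.1 p.2 := hp.1
    exact (rank0_nw hc (rk_eq_zero_of_av132 hσ hc) h1 h2).1

include hσ in
lemma CFin_bound {p : ℕ × ℕ} (hp : p ∈ CFin σ) : p.1 + p.2 + 2 ≤ n := by
  rw [mem_CFin] at hp
  have := cell_sum_bound hp.1
  have := rk_eq_zero_of_av132 hσ hp.1
  omega

variable {S : Finset (ℕ × ℕ)} (hS : S ⊆ CstarFin σ)

include hS in
lemma S_sub_CFin : S ⊆ CFin σ := fun p hp => Finset.filter_subset _ _ (hS hp)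

include hσ hS in
lemma hkb_S : ∀ i, rowSup (CFin σ \ S) i ≠ 0 → i + rowSup (CFin σ \ S) i < n := by
  intro i h
  obtain ⟨p, hp, h1, h2⟩ := rowSup_exists h
  have hpC : p ∈ CFin σ := (Finset.mem_sdiff.mp hp).1
  have := CFin_bound hσ hpC
  omega

include hS in
lemma hmb_S : ∀ i, rowSup S i ≠ 0 → i + rowSup S i + 1 < n := by
  intro i h
  obtain ⟨p, hp, h1, h2⟩ := rowSup_exists h
  have := (mem_CstarFin.mp (hS hp)).2
  omega

include hσ hS in
lemma hA_S : ∀ l r, l ≤ r → rowSup (CFin σ \ S) l ≤ rowSup S r →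
    rowSup (CFin σ \ S) l ≤ rowSup (CFin σ \ S) (r+1) :=
  hA_of_AC (AC_CFin hσ) (S_sub_CFin hS)

include hσ hS in
lemma mem_S_iff {c : ℕ × ℕ} :
    c ∈ S ↔ (c.2 + 1 = rowSup S c.1 ∧ rowSup (CFin σ \ S) c.1 < rowSup S c.1 ∧
      rowSup S (c.1 + 1) < rowSup S c.1) := by
  constructor
  · intro hc
    have hACS : AC S := (AC_CFin hσ).subset (S_sub_CFin hS)
    have h1 : rowSup S c.1 = c.2 + 1 := hACS.rowSup_self hc
    have h2 : rowSup S (c.1+1) ≤ c.2 := hACS.rowSup_succ hc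
    have h3 : rowSup (CFin σ \ S) c.1 ≤ c.2 := by
      by_contra hh
      push_neg at hh
      obtain ⟨p, hp, hp1, hp2⟩ := lt_rowSup_iff.mp hh
      have hpC : p ∈ CFin σ := (Finset.mem_sdiff.mp hp).1
      have hpS : p ∉ S := (Finset.mem_sdiff.mp hp).2
      have : c = p := (AC_CFin hσ) c (S_sub_CFin hS hc) p hpC hp1 hp2
      exact hpS (this ▸ hc)
    omega
  · rintro ⟨h1, h2, h3⟩
    have := rowSup_corner h3
    have hc : (c.1, rowSup S c.1 - 1) = c := by
      ext
      · rfl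
      · simp; omega
    rwa [hc] at this

include hσ hS in
lemma corner_class {i j : ℕ} (hi : i < n) (hj : j < n) :
    ess σ i j ↔
      ((j + 1 = rowSup (CFin σ \ S) i ∧ rowSup (CFin σ \ S) (i+1) < rowSup (CFin σ \ S) i) ∨
       (j + 1 = rowSup S i ∧ rowSup (CFin σ \ S) i < rowSup S i ∧ rowSup S (i+1) < rowSup S i)) := by
  constructor
  · intro h
    have hC : (i, j) ∈ CFin σ := mem_CFin.mpr h
    by_cases hmem : (i, j) ∈ S
    · right
      have := (mem_S_iff hσ hS).mp hmem
      simpa using this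
    · left
      have hC' : (i, j) ∈ CFin σ \ S := Finset.mem_sdiff.mpr ⟨hC, hmem⟩
      have hAC' : AC (CFin σ \ S) := (AC_CFin hσ).subset (Finset.sdiff_subset)
      have h1 : rowSup (CFin σ \ S) i = j + 1 := by
        have := hAC'.rowSup_self hC'; simpa using this
      have h2 : rowSup (CFin σ \ S) (i+1) ≤ j := by
        have := hAC'.rowSup_succ hC'; simpa using this
      omega
  · rintro (⟨h1, h2⟩ | ⟨h1, h2, h3⟩)
    · have := rowSup_corner h2
      have he : (i, rowSup (CFin σ \ S) i - 1) = (i, j) := by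
        simp; omega
      rw [he] at this
      exact mem_CFin.mp (Finset.mem_sdiff.mp this).1
    · have hmem : (i, j) ∈ S := (mem_S_iff hσ hS).mpr (by simp; omega)
      exact mem_CFin.mp (S_sub_CFin hS hmem)

end Sigma

end Schro

namespace Schro

open scoped Classical

variable {n : ℕ} {σ : Equiv.Perm (Fin n)} (hσ : Avoids σ pat132)
variable {S : Finset (ℕ × ℕ)} (hS : S ⊆ CstarFin σ)

/-- the permutation associated to a choice of shifted corners. -/
noncomputable def piS (hσ : Avoids σ pat132) (hS : S ⊆ CstarFin σ) : Equiv.Perm (Fin n) :=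
  pS n (rowSup (CFin σ \ S)) (rowSup S) (rowSup_succ_le _) (rowSup_succ_le _)
    (hA_S hσ hS) (hkb_S hσ hS) (hmb_S hS)

include hσ hS in
lemma cell_piS {i j : ℕ} :
    cell (piS hσ hS) i j ↔ DS (rowSup (CFin σ \ S)) (rowSup S) i j :=
  cell_pS (rowSup_succ_le _) (rowSup_succ_le _) (hA_S hσ hS) (hkb_S hσ hS) (hmb_S hS)

include hσ hS in
lemma rkz_piS {i j : ℕ} (h : j < rowSup (CFin σ \ S) i) : rk (piS hσ hS) i j = 0 :=
  rk_pS_zero (rowSup_succ_le _) (rowSup_succ_le _) (hA_S hσ hS) (hkb_S hσ hS) (hmb_S hS) h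

include hσ hS in
lemma rko_piS {r j : ℕ} (h1 : rowSup (CFin σ \ S) r < j) (h2 : j ≤ rowSup S r) :
    rk (piS hσ hS) (r+1) j = 1 :=
  rk_pS_one (rowSup_succ_le _) (rowSup_succ_le _) (hA_S hσ hS) (hkb_S hσ hS) (hmb_S hS) h1 h2

include hσ hS in
lemma essp_piS {i j : ℕ} :
    ess (piS hσ hS) i j ↔
      ((j + 1 = rowSup (CFin σ \ S) i ∧
          rowSup (CFin σ \ S) (i+1) < rowSup (CFin σ \ S) i) ∨
       (∃ r, i = r + 1 ∧ j = rowSup S r ∧ rowSup (CFin σ \ S) r < rowSup S r ∧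
          rowSup S (r+1) < rowSup S r)) :=
  ess_pS_iff (rowSup_succ_le _) (rowSup_succ_le _) (hA_S hσ hS) (hkb_S hσ hS) (hmb_S hS)

include hσ hS in
lemma schroeder_piS : Schroeder (piS hσ hS) := by
  apply schroeder_of_rk_le_one
  intro i j hc
  rw [cell_piS hσ hS] at hc
  rcases hc with h | ⟨r, rfl, h1, h2⟩
  · rw [rkz_piS hσ hS h]
    omega
  · rw [rko_piS hσ hS h1 h2]

include hσ hS in
lemma ess_rk0_piS {i j : ℕ} :
    (ess (piS hσ hS) i j ∧ rk (piS hσ hS) i j = 0) ↔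
      (j + 1 = rowSup (CFin σ \ S) i ∧
        rowSup (CFin σ \ S) (i+1) < rowSup (CFin σ \ S) i) := by
  constructor
  · rintro ⟨he, hr⟩
    rw [essp_piS hσ hS] at he
    rcases he with h | ⟨r, rfl, h1, h2, h3⟩
    · exact h
    · rw [rko_piS hσ hS (by omega) (by omega)] at hr
      omega
  · rintro ⟨h1, h2⟩
    refine ⟨(essp_piS hσ hS).mpr (Or.inl ⟨h1, h2⟩), ?_⟩
    exact rkz_piS hσ hS (by omega)

include hσ hS in
lemma ess_rk1_piS {i j : ℕ} :
    (ess (piS hσ hS) (i+1) (j+1) ∧ rk (piS hσ hS) (i+1) (j+1) = 1) ↔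
      (j + 1 = rowSup S i ∧ rowSup (CFin σ \ S) i < rowSup S i ∧
        rowSup S (i+1) < rowSup S i) := by
  constructor
  · rintro ⟨he, hr⟩
    rw [essp_piS hσ hS] at he
    rcases he with ⟨h1, h2⟩ | ⟨r, hri, h1, h2, h3⟩
    · rw [rkz_piS hσ hS (by omega)] at hr
      omega
    · have hr' : r = i := by omega
      subst hr'
      exact ⟨by omega, by omega, by omega⟩
  · rintro ⟨h1, h2, h3⟩
    refine ⟨(essp_piS hσ hS).mpr (Or.inr ⟨i, rfl, by omega, by omega, by omega⟩), ?_⟩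
    exact rko_piS hσ hS (by omega) (by omega)

include hσ hS in
lemma estar_piS : Estar (piS hσ hS) = EssSet σ := by
  rw [estar_eq_iff]
  intro i j hi hj
  rw [corner_class hσ hS hi hj, ess_rk0_piS hσ hS, ess_rk1_piS hσ hS]

include hσ hS in
lemma SFin_piS : SFin (piS hσ hS) = S := by
  ext c
  rw [mem_SFin, ess_rk1_piS hσ hS, mem_S_iff hσ hS]

section Forward

variable {π : Equiv.Perm (Fin n)} (hSch : Schroeder π)
variable (hEq : ∀ i j : ℕ, i < n → j < n →
    (((ess π i j ∧ rk π i j = 0) ∨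
      (ess π (i+1) (j+1) ∧ rk π (i+1) (j+1) = 1)) ↔ ess σ i j))

include hEq in
lemma SFin_sub : SFin π ⊆ CstarFin σ := by
  intro c hc
  rw [mem_SFin] at hc
  have hb1 : c.1 + 1 < n := hc.1.1.1
  have hb2 : c.2 + 1 < n := hc.1.1.2.1
  rw [mem_CstarFin]
  constructor
  · exact (hEq c.1 c.2 (by omega) (by omega)).mp (Or.inr hc)
  · have := cell_sum_bound hc.1.1
    omega

include hSch hEq in
lemma subA {i j : ℕ} :
    (cell π i j ∧ rk π i j = 0) ↔ j < rowSup (CFin σ \ SFin π) i := by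
  constructor
  · rintro ⟨hc, hr⟩
    obtain ⟨a, b, ha, hb, hess, hrk⟩ := exists_ess_ge hc
    rw [hr] at hrk
    have haC : (a, b) ∈ CFin σ := by
      rw [mem_CFin]
      exact (hEq a b hess.1.1 hess.1.2.1).mp (Or.inl ⟨hess, hrk⟩)
    have haS : (a, b) ∉ SFin π := by
      intro hmem
      rw [mem_SFin] at hmem
      exact ess0_not_shift hess hmem.1.1
    exact lt_rowSup_iff.mpr ⟨(a, b), Finset.mem_sdiff.mpr ⟨haC, haS⟩, ha, hb⟩
  · intro h
    obtain ⟨p, hp, h1, h2⟩ := lt_rowSup_iff.mp h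
    obtain ⟨hpC, hpS⟩ := Finset.mem_sdiff.mp hp
    rw [mem_CFin] at hpC
    have := (hEq p.1 p.2 hpC.1.1 hpC.1.2.1).mpr hpC
    rcases this with ⟨he, hr⟩ | hshift
    · exact rank0_nw he.1 hr h1 h2
    · exact absurd (mem_SFin.mpr hshift) hpS

include hSch hEq in
lemma subB {i j : ℕ} :
    (cell π i j ∧ rk π i j = 1) ↔
      (∃ r, i = r + 1 ∧ rowSup (CFin σ \ SFin π) r < j ∧ j ≤ rowSup (SFin π) r) := by
  constructor
  · rintro ⟨hc, hr⟩
    obtain ⟨k0, hk0, hfk0, -⟩ := rk_one_witness hr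
    have hi1 : 1 ≤ i := by omega
    have hj1 : 1 ≤ j := by omega
    obtain ⟨a, b, ha, hb, hess, hrk⟩ := exists_ess_ge hc
    rw [hr] at hrk
    have ha1 : 1 ≤ a := by omega
    have hb1 : 1 ≤ b := by
      obtain ⟨k1, hk1, hfk1, -⟩ := rk_one_witness hrk
      omega
    have hmem : (a - 1, b - 1) ∈ SFin π := by
      rw [mem_SFin]
      have e1 : a - 1 + 1 = a := by omega
      have e2 : b - 1 + 1 = b := by omega
      rw [e1, e2]
      exact ⟨hess, hrk⟩
    refine ⟨i - 1, by omega, ?_, ?_⟩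
    · -- rowSup (CFin σ \ SFin π) (i-1) < j
      by_contra hh
      push_neg at hh
      have hlt : j - 1 < rowSup (CFin σ \ SFin π) (i-1) := by omega
      have := (subA hSch hEq (i := i-1) (j := j-1)).mpr hlt
      have hnot := rk1_not_diag_R0 (u' := i-1) (v' := j-1)
        (by rwa [show i - 1 + 1 = i by omega, show j - 1 + 1 = j by omega])
        (by rwa [show i - 1 + 1 = i by omega, show j - 1 + 1 = j by omega])
      exact hnot this
    · -- j ≤ rowSup (SFin π) (i-1)
      have : j - 1 < rowSup (SFin π) (i-1) :=
        lt_rowSup_iff.mpr ⟨(a-1, b-1), hmem, by omega, by omega⟩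
      omega
  · rintro ⟨r, rfl, h1, h2⟩
    have hj1 : 1 ≤ j := by omega
    have hlt : j - 1 < rowSup (SFin π) r := by omega
    obtain ⟨c, hcmem, hc1, hc2⟩ := lt_rowSup_iff.mp hlt
    rw [mem_SFin] at hcmem
    obtain ⟨hessc, hrkc⟩ := hcmem
    obtain ⟨k0, hk0, hfk0, huniq⟩ := rk_one_witness hrkc
    have hnot : ¬ (cell π r (j-1) ∧ rk π r (j-1) = 0) := by
      intro hcc
      have := (subA hSch hEq).mp hcc
      omega
    have := rk1_region hessc hrkc hk0 hfk0 huniq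
      (u' := r) (v' := j - 1) (by omega) (by omega) hnot
    rwa [show j - 1 + 1 = j by omega] at this

include hSch hEq in
lemma pi_eq_piS (hsub : SFin π ⊆ CstarFin σ) : π = piS hσ hsub := by
  apply cell_ext
  intro i j
  rw [cell_piS hσ hsub]
  unfold DS
  constructor
  · intro hc
    have hle := rk_le_one_of_schroeder hSch hc
    interval_cases h : rk π i j
    · exact Or.inl ((subA hSch hEq).mp ⟨hc, h⟩)
    · exact Or.inr ((subB hSch hEq).mp ⟨hc, h⟩)
  · rintro (h | ⟨r, rfl, h1, h2⟩)
    · exact ((subA hSch hEq).mpr h).1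
    · exact ((subB hSch hEq).mpr ⟨r, rfl, h1, h2⟩).1

end Forward

end Schro

/-- If `σ ∈ S_n` avoids 132 and `s` is the number of elements `(i,j)` of its essential set
with `i + j < n` (1-based coordinates), then there are exactly `2^s` Schröder permutations
`π ∈ S_n` with `E*(π) = E(σ)`. -/
theorem card_fiber_of_estar (n : ℕ) (σ : Equiv.Perm (Fin n)) (hσ : Avoids σ pat132)
    (s : ℕ)
    (hs : s = {p : Fin n × Fin n | p ∈ EssSet σ ∧
                ((p.1 : ℕ) + 1) + ((p.2 : ℕ) + 1) < n}.ncard) :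
    Nat.card {π : Equiv.Perm (Fin n) // Schroeder π ∧ Estar π = EssSet σ} = 2 ^ s := by
  classical
  open Schro in
  have e : {π : Equiv.Perm (Fin n) // Schroeder π ∧ Estar π = EssSet σ} ≃
      {S : Finset (ℕ × ℕ) // S ⊆ CstarFin σ} :=
    { toFun := fun x => ⟨SFin x.1, SFin_sub ((estar_eq_iff σ x.1).mp x.2.2)⟩
      invFun := fun y => ⟨piS hσ y.2, schroeder_piS hσ y.2, estar_piS hσ y.2⟩
      left_inv := fun x => by
        apply Subtype.ext
        exact (pi_eq_piS hσ x.2.1 ((estar_eq_iff σ x.1).mp x.2.2)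
          (SFin_sub ((estar_eq_iff σ x.1).mp x.2.2))).symm
      right_inv := fun y => Subtype.ext (SFin_piS hσ y.2) }
  rw [Nat.card_congr e]
  have e2 : {S : Finset (ℕ × ℕ) // S ⊆ CstarFin σ} ≃
      {S : Finset (ℕ × ℕ) // S ∈ (CstarFin σ).powerset} :=
    Equiv.subtypeEquivRight (fun S => (Finset.mem_powerset).symm)
  rw [Nat.card_congr e2, Nat.card_eq_finsetCard, Finset.card_powerset]
  congr 1
  -- s = (CstarFin σ).card
  rw [hs, ← Nat.card_coe_set_eq, ← Nat.card_eq_finsetCard]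
  apply Nat.card_congr
  refine
    { toFun := fun y => ?_
      invFun := fun x => ⟨((x.1.1 : ℕ), (x.1.2 : ℕ)), ?_⟩
      left_inv := ?_
      right_inv := ?_ }
  · have hy := (Schro.mem_CstarFin).mp y.2
    have hb1 : y.1.1 < n := hy.1.1.1
    have hb2 : y.1.2 < n := hy.1.1.2.1
    refine ⟨((⟨y.1.1, hb1⟩ : Fin n), (⟨y.1.2, hb2⟩ : Fin n)), ?_, ?_⟩
    · exact (Schro.ess_iff σ _).mpr hy.1
    · have := hy.2
      simp only [Fin.val_mk]
      omega
  · rw [Schro.mem_CstarFin]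
    have h1 := x.2.1
    have h2 := x.2.2
    rw [Schro.ess_iff] at h1
    exact ⟨h1, by omega⟩
  · intro y
    apply Subtype.ext
    apply Prod.ext <;> rfl
  · intro x
    apply Subtype.ext
    apply Prod.ext
    · apply Fin.ext; rfl
    · apply Fin.ext; rfl
end
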